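/- arXiv:2302.12718 — 7 statements merged into one kernel-verified Lean document; each statement's English description precedes it below -/
import Mathlib

section
/- Interventional at-risk distribution for the total effect: under Assumption 1, for every k ∈ {1,…,K}, every x with P(X = x) > 0 and every a ∈ {0,1}, P(X = x | Ȳ^a_{k−1} = 0, D̄^a_k = 0) = [P(X = x)·(1 − h_D(k,x,a))·Π_{l=1}^{k−1} (1 − h_D(l,x,a))·(1 − h_Y(l,x,a))] / P(Ȳ^a_{k−1} = 0, D̄^a_k = 0); i.e., it differs from the observational at-risk covariate distribution only through the absence of the treatment-assignment factor P(A = a | X = x). -/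
/-!
STATEMENT 5: Interventional at-risk distribution for the total effect. Under
Assumption 1, for every `k ∈ {1,…,K}`, every `x` with `P(X = x) > 0` and every
`a ∈ {0,1}`,
`P(X = x | Ȳ^a_{k−1} = 0, D̄^a_k = 0)
  = [P(X = x)·(1 − h_D(k,x,a))·Π_{l=1}^{k−1} (1 − h_D(l,x,a))·(1 − h_Y(l,x,a))]
      / P(Ȳ^a_{k−1} = 0, D̄^a_k = 0)`;
i.e. it differs from the observational at-risk covariate distribution only through
the absence of the treatment-assignment factor `P(A = a | X = x)`.
-/

open MeasureTheory ProbabilityTheory Finset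
open scoped ENNReal

noncomputable section

namespace Stmt5

variable {Ω 𝓧 : Type*} [MeasurableSpace Ω] [MeasurableSpace 𝓧] [MeasurableSingletonClass 𝓧]

/-- The event that the history `V̄_k = (V_1, …, V_k)` is identically zero; for `k = 0`
this is all of `Ω` (the convention `V̄_0 = 0`). -/
def allZero (V : ℕ → Ω → ℕ) (k : ℕ) : Set Ω :=
  {ω | ∀ l, 1 ≤ l → l ≤ k → V l ω = 0}

/-- Conditioning event of the main-event hazard `h_Y(k,x,a)`:
`{D̄_k = 0, Ȳ_{k−1} = 0, X = x, A = a}` (the competing event is resolved before the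
main event within each interval). -/
def atRiskY (Y D : ℕ → Ω → ℕ) (X : Ω → 𝓧) (A : Ω → ℕ) (k : ℕ) (x : 𝓧) (a : ℕ) : Set Ω :=
  allZero D k ∩ allZero Y (k - 1) ∩ {ω | X ω = x} ∩ {ω | A ω = a}

/-- Conditioning event of the competing-event hazard `h_D(k,x,a)`:
`{D̄_{k−1} = 0, Ȳ_{k−1} = 0, X = x, A = a}`. -/
def atRiskD (Y D : ℕ → Ω → ℕ) (X : Ω → 𝓧) (A : Ω → ℕ) (k : ℕ) (x : 𝓧) (a : ℕ) : Set Ω :=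
  allZero D (k - 1) ∩ allZero Y (k - 1) ∩ {ω | X ω = x} ∩ {ω | A ω = a}

/-- Conditional hazard of the main event,
`h_Y(k,x,a) = P(Y_k = 1 | D̄_k = 0, Ȳ_{k−1} = 0, X = x, A = a)`. -/
def hazY (μ : Measure Ω) (Y D : ℕ → Ω → ℕ) (X : Ω → 𝓧) (A : Ω → ℕ)
    (k : ℕ) (x : 𝓧) (a : ℕ) : ℝ≥0∞ :=
  μ[|atRiskY Y D X A k x a] {ω | Y k ω = 1}

/-- Conditional hazard of the competing event,
`h_D(k,x,a) = P(D_k = 1 | D̄_{k−1} = 0, Ȳ_{k−1} = 0, X = x, A = a)`. -/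
def hazD (μ : Measure Ω) (Y D : ℕ → Ω → ℕ) (X : Ω → 𝓧) (A : Ω → ℕ)
    (k : ℕ) (x : 𝓧) (a : ℕ) : ℝ≥0∞ :=
  μ[|atRiskD Y D X A k x a] {ω | D k ω = 1}


end Stmt5

/-!
By exchangeability,
`P(X = x, Ȳ^a_{k−1} = 0, D̄^a_k = 0) = P(X = x) · P(Ȳ^a_{k−1} = 0, D̄^a_k = 0 | X = x, A = a)`,
and by consistency the event `{X = x, A = a, Ȳ^a_{k−1} = 0, D̄^a_k = 0}` is the factual at-risk
event `{X = x, A = a, Ȳ_{k−1} = 0, D̄_k = 0}`. Peeling off one interval at a time (first `D_l`,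
then `Y_l`), the probability of the latter is `P(X = x, A = a)` times the product of the one-step
survival probabilities `1 − h`, and dividing by `P(X = x, A = a)` removes the treatment factor.
-/

namespace Stmt5

section Histories

variable {Ω 𝓧 : Type*}

lemma allZero_zero (V : ℕ → Ω → ℕ) : allZero V 0 = Set.univ := by
  ext ω
  simp only [allZero, Set.mem_ofPred_eq, Set.mem_univ, iff_true]
  omega

lemma allZero_succ (V : ℕ → Ω → ℕ) (k : ℕ) :
    allZero V (k + 1) = allZero V k ∩ {ω | V (k + 1) ω = 0} := by
  ext ω
  simp only [allZero, Set.mem_inter_iff, Set.mem_ofPred_eq]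
  refine ⟨fun h ↦ ⟨fun l hl hlk ↦ h l hl (by omega), h (k + 1) (by omega) le_rfl⟩, ?_⟩
  rintro ⟨h, hk⟩ l hl hlk
  rcases Nat.lt_or_eq_of_le hlk with hlt | rfl
  · exact h l hl (by omega)
  · exact hk

lemma mem_allZero_congr {V W : ℕ → Ω → ℕ} {ω ω' : Ω} {k : ℕ}
    (h : ∀ l, 1 ≤ l → l ≤ k → V l ω = W l ω') : ω ∈ allZero V k ↔ ω' ∈ allZero W k := by
  simp only [allZero, Set.mem_ofPred_eq]
  exact forall_congr' fun l ↦ imp_congr_right fun hl ↦ imp_congr_right fun hlk ↦ by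
    rw [h l hl hlk]

lemma mem_allZero_inter_allZero_congr {U V : ℕ → Ω → ℕ} {m n K : ℕ} (hm : m ≤ K) (hn : n ≤ K)
    {ω ω' : Ω} (h : ∀ j, 1 ≤ j → j ≤ K → U j ω = U j ω' ∧ V j ω = V j ω') :
    ω ∈ allZero U m ∩ allZero V n ↔ ω' ∈ allZero U m ∩ allZero V n := by
  rw [Set.mem_inter_iff, Set.mem_inter_iff,
    mem_allZero_congr fun l hl hlm ↦ (h l hl (hlm.trans hm)).1,
    mem_allZero_congr fun l hl hln ↦ (h l hl (hln.trans hn)).2]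

variable (Y D : ℕ → Ω → ℕ) (X : Ω → 𝓧) (A : Ω → ℕ) (x : 𝓧) (a : ℕ)

lemma atRiskD_one : atRiskD Y D X A 1 x a = {ω | X ω = x} ∩ {ω | A ω = a} := by
  simp [atRiskD, allZero_zero]

lemma atRiskY_succ (k : ℕ) :
    atRiskY Y D X A (k + 1) x a = atRiskD Y D X A (k + 1) x a ∩ {ω | D (k + 1) ω = 0} := by
  rw [atRiskY, atRiskD, Nat.add_sub_cancel, allZero_succ D k]
  ext ω
  simp only [Set.mem_inter_iff]
  tauto

lemma atRiskD_add_two (k : ℕ) :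
    atRiskD Y D X A (k + 2) x a = atRiskY Y D X A (k + 1) x a ∩ {ω | Y (k + 1) ω = 0} := by
  rw [atRiskY, atRiskD, Nat.add_sub_cancel, show k + 2 - 1 = k + 1 from rfl, allZero_succ Y k]
  ext ω
  simp only [Set.mem_inter_iff]
  tauto

end Histories

section MeasureLemmas

variable {Ω : Type*} [MeasurableSpace Ω] {μ : Measure Ω} [IsFiniteMeasure μ]

lemma measurableSet_allZero {V : ℕ → Ω → ℕ} (hV : ∀ l, Measurable (V l)) (k : ℕ) :
    MeasurableSet (allZero V k) := by
  induction k with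
  | zero => simp [allZero_zero]
  | succ k ih => rw [allZero_succ]; exact ih.inter (hV _ (measurableSet_singleton 0))

lemma measure_mul_cond_eq_inter {t : Set Ω} (ht : MeasurableSet t) (s : Set Ω) :
    μ s * μ[t|s] = μ (s ∩ t) := by
  rcases eq_or_ne (μ s) 0 with hs | hs
  · simp [hs, measure_inter_null_of_null_left]
  · rw [cond_apply' ht, ← mul_assoc, ENNReal.mul_inv_cancel hs (measure_ne_top μ s), one_mul]

lemma measure_sdiff_eq_mul_one_sub_cond {t : Set Ω} (ht : MeasurableSet t) (s : Set Ω) :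
    μ (s \ t) = μ s * (1 - μ[t|s]) := by
  rw [ENNReal.mul_sub fun _ _ ↦ measure_ne_top μ s, mul_one, measure_mul_cond_eq_inter ht,
    ← measure_inter_add_sdiff s ht, ENNReal.add_sub_cancel_left (measure_ne_top μ _)]

lemma measure_inter_setOf_eq_zero {V : Ω → ℕ} (hVm : Measurable V)
    (hV : ∀ ω, V ω = 0 ∨ V ω = 1) (s : Set Ω) :
    μ (s ∩ {ω | V ω = 0}) = μ s * (1 - μ[|s] {ω | V ω = 1}) := by
  have hcompl : {ω | V ω = 0} = {ω | V ω = 1}ᶜ := by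
    ext ω
    rcases hV ω with h | h <;> simp [h]
  rw [hcompl, ← Set.sdiff_eq,
    measure_sdiff_eq_mul_one_sub_cond (measurableSet_eq_fun hVm measurable_const)]

end MeasureLemmas

section ProductFormula

variable {Ω 𝓧 : Type*} [MeasurableSpace Ω] {μ : Measure Ω} [IsFiniteMeasure μ]
  {Y D : ℕ → Ω → ℕ} {X : Ω → 𝓧} {A : Ω → ℕ} (x : 𝓧) (a : ℕ)
  (hYm : ∀ k, Measurable (Y k)) (hDm : ∀ k, Measurable (D k))
  (hYbin : ∀ k ω, Y k ω = 0 ∨ Y k ω = 1) (hDbin : ∀ k ω, D k ω = 0 ∨ D k ω = 1)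
include hYm hDm hYbin hDbin

lemma measure_atRiskD_succ (k : ℕ) :
    μ (atRiskD Y D X A (k + 1) x a)
      = μ ({ω | X ω = x} ∩ {ω | A ω = a})
        * ∏ l ∈ Icc 1 k, (1 - hazD μ Y D X A l x a) * (1 - hazY μ Y D X A l x a) := by
  induction k with
  | zero => simp [atRiskD_one]
  | succ k ih =>
    rw [atRiskD_add_two, measure_inter_setOf_eq_zero (hYm _) (hYbin _), atRiskY_succ,
      measure_inter_setOf_eq_zero (hDm _) (hDbin _), ih, prod_Icc_succ_top (by omega), hazY,
      hazD, atRiskY_succ]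
    ring

lemma measure_atRiskY_succ (k : ℕ) :
    μ (atRiskY Y D X A (k + 1) x a)
      = μ ({ω | X ω = x} ∩ {ω | A ω = a}) * (1 - hazD μ Y D X A (k + 1) x a)
        * ∏ l ∈ Icc 1 k, (1 - hazD μ Y D X A l x a) * (1 - hazY μ Y D X A l x a) := by
  rw [atRiskY_succ, measure_inter_setOf_eq_zero (hDm _) (hDbin _),
    measure_atRiskD_succ x a hYm hDm hYbin hDbin, hazD]
  ring

end ProductFormula

section Exchangeability

variable {Ω : Type*} [MeasurableSpace Ω] {U V : ℕ → Ω → ℕ} {K : ℕ}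

/-- The history `(U_j, V_j)_{1 ≤ j ≤ K}` takes countably many values, so an event it determines
is a countable disjoint union of its atoms. -/
lemma measure_eq_of_forall_history_eq {ν₁ ν₂ : Measure Ω}
    (hU : ∀ j, Measurable (U j)) (hV : ∀ j, Measurable (V j))
    (hatom : ∀ f g : ℕ → ℕ, ν₁ {ω | ∀ j, 1 ≤ j → j ≤ K → U j ω = f j ∧ V j ω = g j}
      = ν₂ {ω | ∀ j, 1 ≤ j → j ≤ K → U j ω = f j ∧ V j ω = g j})
    {s : Set Ω} (hs : ∀ ω ω', (∀ j, 1 ≤ j → j ≤ K → U j ω = U j ω' ∧ V j ω = V j ω') →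
      (ω ∈ s ↔ ω' ∈ s)) :
    ν₁ s = ν₂ s := by
  let T : Ω → Set.Icc 1 K → ℕ × ℕ := fun ω j ↦ (U j ω, V j ω)
  have hT : Measurable T := measurable_pi_lambda _ fun j ↦ (hU j).prodMk (hV j)
  have hfiber (ω₀ : Ω) :
      T ⁻¹' {T ω₀} = {ω | ∀ j, 1 ≤ j → j ≤ K → U j ω = U j ω₀ ∧ V j ω = V j ω₀} := by
    ext ω
    simp [T, funext_iff, Prod.ext_iff, and_imp]
  have hmap : ν₁.map T = ν₂.map T := Measure.ext_of_singleton fun t ↦ by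
    rw [Measure.map_apply hT (measurableSet_singleton t),
      Measure.map_apply hT (measurableSet_singleton t)]
    by_cases ht : t ∈ Set.range T
    · obtain ⟨ω₀, rfl⟩ := ht
      rw [hfiber]
      exact hatom _ _
    · simp [Set.preimage_singleton_eq_empty.mpr ht]
  have hs_preimage : s = T ⁻¹' (T '' s) := by
    refine (Set.subset_preimage_image T s).antisymm ?_
    rintro ω ⟨ω', hω', hTω⟩
    have hω : ω ∈ T ⁻¹' {T ω'} := hTω.symm
    rw [hfiber] at hω
    exact (hs ω ω' hω).mpr hω'
  have hmeas : MeasurableSet (T '' s) := (T '' s).to_countable.measurableSet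
  rw [hs_preimage, ← Measure.map_apply hT hmeas, hmap, Measure.map_apply hT hmeas]

end Exchangeability

section Consistency

variable {Ω 𝓧 : Type*} {A : Ω → ℕ} {a : ℕ}

lemma eq_counterfactual_of_consistent {V : Ω → ℕ} {W : ℕ → Ω → ℕ}
    (hcons : ∀ ω, V ω = A ω * W 1 ω + (1 - A ω) * W 0 ω) (ha : a = 0 ∨ a = 1) {ω : Ω}
    (hA : A ω = a) : V ω = W a ω := by
  rcases ha with rfl | rfl <;> simp [hcons, hA]

lemma inter_allZero_counterfactual_eq_atRiskY {Y D : ℕ → Ω → ℕ} {Ycf Dcf : ℕ → ℕ → Ω → ℕ}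
    (hconsY : ∀ k ω, Y k ω = A ω * Ycf 1 k ω + (1 - A ω) * Ycf 0 k ω)
    (hconsD : ∀ k ω, D k ω = A ω * Dcf 1 k ω + (1 - A ω) * Dcf 0 k ω)
    (ha : a = 0 ∨ a = 1) (X : Ω → 𝓧) (x : 𝓧) (k : ℕ) :
    {ω | X ω = x} ∩ {ω | A ω = a} ∩ (allZero (Ycf a) (k - 1) ∩ allZero (Dcf a) k)
      = atRiskY Y D X A k x a := by
  ext ω
  by_cases hA : A ω = a
  · have hY : ω ∈ allZero Y (k - 1) ↔ ω ∈ allZero (Ycf a) (k - 1) :=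
      mem_allZero_congr fun l _ _ ↦
        eq_counterfactual_of_consistent (W := fun b ↦ Ycf b l) (hconsY l) ha hA
    have hD : ω ∈ allZero D k ↔ ω ∈ allZero (Dcf a) k :=
      mem_allZero_congr fun l _ _ ↦
        eq_counterfactual_of_consistent (W := fun b ↦ Dcf b l) (hconsD l) ha hA
    simp only [atRiskY, Set.mem_inter_iff, hY, hD]
    tauto
  · simp [atRiskY, hA]

end Consistency

variable {Ω 𝓧 : Type*} [MeasurableSpace Ω] [MeasurableSpace 𝓧] [MeasurableSingletonClass 𝓧]

theorem total_effect_interventional_at_risk_distribution_general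
    (μ : Measure Ω) [IsProbabilityMeasure μ]
    (Y D : ℕ → Ω → ℕ) (X : Ω → 𝓧) (A : Ω → ℕ)
    -- measurability of the random variables
    (hYm : ∀ k, Measurable (Y k)) (hDm : ∀ k, Measurable (D k))
    -- binary indicators, absorbing events, mutual exclusivity
    (hYbin : ∀ k ω, Y k ω = 0 ∨ Y k ω = 1) (hDbin : ∀ k ω, D k ω = 0 ∨ D k ω = 1)
    (K : ℕ)
    -- counterfactual indicators Y^a_k, D^a_k under the intervention do(A = a)
    (Ycf Dcf : ℕ → ℕ → Ω → ℕ)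
    (hYcfm : ∀ a k, Measurable (Ycf a k)) (hDcfm : ∀ a k, Measurable (Dcf a k))
    -- Assumption 1 (i): exchangeability — the family (Y^a_1, D^a_1, …, Y^a_K, D^a_K)
    -- is conditionally independent of A given X (stated through the atoms of the
    -- discrete counterfactual family)
    (hexch : ∀ a a' x, (a = 0 ∨ a = 1) → (a' = 0 ∨ a' = 1) →
      μ {ω | X ω = x} ≠ 0 → μ ({ω | X ω = x} ∩ {ω | A ω = a'}) ≠ 0 →
      ∀ f g : ℕ → ℕ,
        μ[|{ω | X ω = x} ∩ {ω | A ω = a'}]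
            {ω | ∀ j, 1 ≤ j → j ≤ K → (Ycf a j ω = f j ∧ Dcf a j ω = g j)}
          = μ[|{ω | X ω = x}]
              {ω | ∀ j, 1 ≤ j → j ≤ K → (Ycf a j ω = f j ∧ Dcf a j ω = g j)})
    -- Assumption 1 (ii): positivity
    (hposA : ∀ x, μ {ω | X ω = x} ≠ 0 → ∀ a', (a' = 0 ∨ a' = 1) →
      μ ({ω | X ω = x} ∩ {ω | A ω = a'}) ≠ 0)
    -- Assumption 1 (iii): consistency
    (hconsY : ∀ k ω, Y k ω = A ω * Ycf 1 k ω + (1 - A ω) * Ycf 0 k ω)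
    (hconsD : ∀ k ω, D k ω = A ω * Dcf 1 k ω + (1 - A ω) * Dcf 0 k ω)
    (k : ℕ) (hk1 : 1 ≤ k) (hkK : k ≤ K)
    (x : 𝓧) (a : ℕ) (ha : a = 0 ∨ a = 1) :
    μ[|allZero (Ycf a) (k - 1) ∩ allZero (Dcf a) k] {ω | X ω = x}
      = (μ {ω | X ω = x} * (1 - hazD μ Y D X A k x a)
            * ∏ l ∈ Icc 1 (k - 1),
                (1 - hazD μ Y D X A l x a) * (1 - hazY μ Y D X A l x a))
          / μ (allZero (Ycf a) (k - 1) ∩ allZero (Dcf a) k) := by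
  set B := allZero (Ycf a) (k - 1) ∩ allZero (Dcf a) k
  have hB : MeasurableSet B :=
    (measurableSet_allZero (hYcfm a) _).inter (measurableSet_allZero (hDcfm a) _)
  obtain ⟨k, rfl⟩ : ∃ k', k = k' + 1 := ⟨k - 1, by omega⟩
  suffices hXB : μ ({ω | X ω = x} ∩ B) = μ {ω | X ω = x} * ((1 - hazD μ Y D X A (k + 1) x a)
      * ∏ l ∈ Icc 1 k, (1 - hazD μ Y D X A l x a) * (1 - hazY μ Y D X A l x a)) by
    rw [cond_apply hB, Set.inter_comm, hXB, ENNReal.div_eq_inv_mul, Nat.add_sub_cancel]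
    ring
  rcases eq_or_ne (μ {ω | X ω = x}) 0 with hX | hX
  · simp [hX, measure_inter_null_of_null_left]
  have hXA := hposA x hX a ha
  have hexchB : μ[B | {ω | X ω = x} ∩ {ω | A ω = a}] = μ[B | {ω | X ω = x}] :=
    measure_eq_of_forall_history_eq (hYcfm a) (hDcfm a) (hexch a a x ha ha hX hXA)
      fun _ _ h ↦ mem_allZero_inter_allZero_congr (by omega) hkK h
  rw [← measure_mul_cond_eq_inter hB, ← hexchB, cond_apply' hB,
    inter_allZero_counterfactual_eq_atRiskY hconsY hconsD ha,
    measure_atRiskY_succ x a hYm hDm hYbin hDbin, mul_assoc, ← mul_assoc _⁻¹,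
    ENNReal.inv_mul_cancel hXA (measure_ne_top μ _), one_mul]

theorem total_effect_interventional_at_risk_distribution
    (μ : Measure Ω) [IsProbabilityMeasure μ]
    (Y D : ℕ → Ω → ℕ) (X : Ω → 𝓧) (A : Ω → ℕ)
    -- measurability of the random variables
    (hXm : Measurable X) (hAm : Measurable A)
    (hYm : ∀ k, Measurable (Y k)) (hDm : ∀ k, Measurable (D k))
    -- binary indicators, absorbing events, mutual exclusivity
    (hYbin : ∀ k ω, Y k ω = 0 ∨ Y k ω = 1) (hDbin : ∀ k ω, D k ω = 0 ∨ D k ω = 1)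
    (hYmono : ∀ k ω, Y k ω ≤ Y (k + 1) ω) (hDmono : ∀ k ω, D k ω ≤ D (k + 1) ω)
    (hexcl : ∀ k ω, Y k ω * D k ω = 0)
    (hAbin : ∀ ω, A ω = 0 ∨ A ω = 1)
    (K : ℕ) (hK : 1 ≤ K)
    -- counterfactual indicators Y^a_k, D^a_k under the intervention do(A = a)
    (Ycf Dcf : ℕ → ℕ → Ω → ℕ)
    (hYcfm : ∀ a k, Measurable (Ycf a k)) (hDcfm : ∀ a k, Measurable (Dcf a k))
    (hYcfbin : ∀ a k ω, Ycf a k ω = 0 ∨ Ycf a k ω = 1)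
    (hDcfbin : ∀ a k ω, Dcf a k ω = 0 ∨ Dcf a k ω = 1)
    (hYcfmono : ∀ a k ω, Ycf a k ω ≤ Ycf a (k + 1) ω)
    (hDcfmono : ∀ a k ω, Dcf a k ω ≤ Dcf a (k + 1) ω)
    (hcfexcl : ∀ a k ω, Ycf a k ω * Dcf a k ω = 0)
    -- Assumption 1 (i): exchangeability — the family (Y^a_1, D^a_1, …, Y^a_K, D^a_K)
    -- is conditionally independent of A given X (stated through the atoms of the
    -- discrete counterfactual family)
    (hexch : ∀ a a' x, (a = 0 ∨ a = 1) → (a' = 0 ∨ a' = 1) →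
      μ {ω | X ω = x} ≠ 0 → μ ({ω | X ω = x} ∩ {ω | A ω = a'}) ≠ 0 →
      ∀ f g : ℕ → ℕ,
        μ[|{ω | X ω = x} ∩ {ω | A ω = a'}]
            {ω | ∀ j, 1 ≤ j → j ≤ K → (Ycf a j ω = f j ∧ Dcf a j ω = g j)}
          = μ[|{ω | X ω = x}]
              {ω | ∀ j, 1 ≤ j → j ≤ K → (Ycf a j ω = f j ∧ Dcf a j ω = g j)})
    -- Assumption 1 (ii): positivity
    (hposA : ∀ x, μ {ω | X ω = x} ≠ 0 → ∀ a', (a' = 0 ∨ a' = 1) →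
      μ ({ω | X ω = x} ∩ {ω | A ω = a'}) ≠ 0)
    -- Assumption 1 (iii): consistency
    (hconsY : ∀ k ω, Y k ω = A ω * Ycf 1 k ω + (1 - A ω) * Ycf 0 k ω)
    (hconsD : ∀ k ω, D k ω = A ω * Dcf 1 k ω + (1 - A ω) * Dcf 0 k ω)
    (k : ℕ) (hk1 : 1 ≤ k) (hkK : k ≤ K)
    (x : 𝓧) (a : ℕ) (ha : a = 0 ∨ a = 1)
    -- positivity of all conditioning events appearing in the statement
    (hposX : μ {ω | X ω = x} ≠ 0)
    (hposY : ∀ l, 1 ≤ l → l ≤ k → μ (atRiskY Y D X A l x a) ≠ 0)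
    (hposD : ∀ l, 1 ≤ l → l ≤ k → μ (atRiskD Y D X A l x a) ≠ 0)
    (hposInt : μ (allZero (Ycf a) (k - 1) ∩ allZero (Dcf a) k) ≠ 0) :
    μ[|allZero (Ycf a) (k - 1) ∩ allZero (Dcf a) k] {ω | X ω = x}
      = (μ {ω | X ω = x} * (1 - hazD μ Y D X A k x a)
            * ∏ l ∈ Icc 1 (k - 1),
                (1 - hazD μ Y D X A l x a) * (1 - hazY μ Y D X A l x a))
          / μ (allZero (Ycf a) (k - 1) ∩ allZero (Dcf a) k) :=
  total_effect_interventional_at_risk_distribution_general μ Y D X A hYm hDm hYbin hDbin K Ycf Dcf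
    hYcfm hDcfm hexch hposA hconsY hconsD k hk1 hkK x a ha

end Stmt5
end
end

section
/- Identification of the direct effect: under Assumptions 1 and 2, for every x with P(X = x) > 0 and every a ∈ {0,1}, the risk under elimination of the competing event satisfies P(Y^{a,d̄=0}_K = 1 | X = x) = Σ_{l=1}^{K} h_Y(l,x,a)·Π_{q=1}^{l−1} (1 − h_Y(q,x,a)), i.e. the dependence on the competing-event hazard h_D is removed and the competing event is treated as a source of independent censoring. -/
/-!
STATEMENT 6: Identification of the direct effect. Under Assumptions 1 and 2, for
every `x` with `P(X = x) > 0` and every `a ∈ {0,1}`, the risk under elimination of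
the competing event satisfies
`P(Y^{a,d̄=0}_K = 1 | X = x) = Σ_{l=1}^{K} h_Y(l,x,a)·Π_{q=1}^{l−1} (1 − h_Y(q,x,a))`,
i.e. the dependence on the competing-event hazard `h_D` is removed and the competing
event is treated as a source of independent censoring.
-/

open MeasureTheory ProbabilityTheory Finset
open scoped ENNReal

noncomputable section

namespace Stmt6

variable {Ω 𝓧 : Type*} [MeasurableSpace Ω] [MeasurableSpace 𝓧] [MeasurableSingletonClass 𝓧]

/-- The event that the history `V̄_k = (V_1, …, V_k)` is identically zero; for `k = 0`
this is all of `Ω` (the convention `V̄_0 = 0`). -/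
def allZero (V : ℕ → Ω → ℕ) (k : ℕ) : Set Ω :=
  {ω | ∀ l, 1 ≤ l → l ≤ k → V l ω = 0}

/-- Conditioning event of the main-event hazard `h_Y(k,x,a)`:
`{D̄_k = 0, Ȳ_{k−1} = 0, X = x, A = a}` (the competing event is resolved before the
main event within each interval). -/
def atRiskY (Y D : ℕ → Ω → ℕ) (X : Ω → 𝓧) (A : Ω → ℕ) (k : ℕ) (x : 𝓧) (a : ℕ) : Set Ω :=
  allZero D k ∩ allZero Y (k - 1) ∩ {ω | X ω = x} ∩ {ω | A ω = a}

/-- Conditioning event of the competing-event hazard `h_D(k,x,a)`: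
`{D̄_{k−1} = 0, Ȳ_{k−1} = 0, X = x, A = a}`. -/
def atRiskD (Y D : ℕ → Ω → ℕ) (X : Ω → 𝓧) (A : Ω → ℕ) (k : ℕ) (x : 𝓧) (a : ℕ) : Set Ω :=
  allZero D (k - 1) ∩ allZero Y (k - 1) ∩ {ω | X ω = x} ∩ {ω | A ω = a}

/-- Conditional hazard of the main event,
`h_Y(k,x,a) = P(Y_k = 1 | D̄_k = 0, Ȳ_{k−1} = 0, X = x, A = a)`. -/
def hazY (μ : Measure Ω) (Y D : ℕ → Ω → ℕ) (X : Ω → 𝓧) (A : Ω → ℕ)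
    (k : ℕ) (x : 𝓧) (a : ℕ) : ℝ≥0∞ :=
  μ[|atRiskY Y D X A k x a] {ω | Y k ω = 1}

/-- Conditional hazard of the competing event,
`h_D(k,x,a) = P(D_k = 1 | D̄_{k−1} = 0, Ȳ_{k−1} = 0, X = x, A = a)`. -/
def hazD (μ : Measure Ω) (Y D : ℕ → Ω → ℕ) (X : Ω → 𝓧) (A : Ω → ℕ)
    (k : ℕ) (x : 𝓧) (a : ℕ) : ℝ≥0∞ :=
  μ[|atRiskD Y D X A k x a] {ω | D k ω = 1}

/-!
On the at-risk set `{X = x, A = a, Ȳ_{k−1} = D̄_{k−1} = 0}`, sequential exchangeability allows one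
to condition in addition on `D_k = 0` without changing the law of the counterfactual path
`Y^{a,d̄=0}_k, …, Y^{a,d̄=0}_K`, and consistency then identifies `Y^{a,d̄=0}_k` with the observed
`Y_k` there. Hence the counterfactual survival from time `k` on is `1 − h_Y(k,x,a)` times the
survival from time `k + 1` on, and downward induction gives
`P(Y^{a,d̄=0}_K = 0 | X = x, A = a) = ∏_{q=1}^{K} (1 − h_Y(q,x,a))`. Exchangeability with respect
to `A` removes the conditioning on `A = a`, and the complement of the product telescopes into the
sum of the statement.
-/

lemma sum_mul_prod_one_sub_add_prod_eq_one (h : ℕ → ℝ≥0∞) (hle : ∀ q, h q ≤ 1) (K : ℕ) :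
    ∑ l ∈ Icc 1 K, h l * ∏ q ∈ Icc 1 (l - 1), (1 - h q) + ∏ q ∈ Icc 1 K, (1 - h q) = 1 := by
  induction K with
  | zero => simp
  | succ K ih =>
    rw [sum_Icc_succ_top (by omega), prod_Icc_succ_top (by omega), Nat.add_sub_cancel,
      add_assoc, mul_comm (h (K + 1)), ← mul_add, add_tsub_cancel_of_le (hle _), mul_one, ih]

lemma sum_mul_prod_one_sub_eq_one_sub_prod (h : ℕ → ℝ≥0∞) (hle : ∀ q, h q ≤ 1) (K : ℕ) :
    ∑ l ∈ Icc 1 K, h l * ∏ q ∈ Icc 1 (l - 1), (1 - h q) = 1 - ∏ q ∈ Icc 1 K, (1 - h q) :=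
  ENNReal.eq_sub_of_add_eq (ENNReal.prod_ne_top fun _ _ => ENNReal.sub_ne_top ENNReal.one_ne_top)
    (sum_mul_prod_one_sub_add_prod_eq_one h hle K)

section Conditioning

variable {α : Type*} [MeasurableSpace α] {μ : Measure α} {c s : Set α}

lemma cond_congr_of_inter_eq {t : Set α} (hc : MeasurableSet c) (h : c ∩ s = c ∩ t) :
    μ[s|c] = μ[t|c] := by
  rw [← cond_inter_self hc, h, cond_inter_self hc]

lemma cond_inter_eq_mul [IsFiniteMeasure μ] (hc : MeasurableSet c) (hs : MeasurableSet s)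
    (t : Set α) : μ[s ∩ t|c] = μ[s|c] * μ[t|c ∩ s] := by
  rw [← cond_cond_eq_cond_inter hc hs, mul_comm, cond_mul_eq_inter hs]

end Conditioning

def zeroOnIcc {α : Type*} (V : ℕ → α → ℕ) (k K : ℕ) : Set α :=
  {ω | ∀ l, k ≤ l → l ≤ K → V l ω = 0}

section Histories

variable {α : Type*} {V : ℕ → α → ℕ} {k K : ℕ}

lemma measurableSet_zeroOnIcc [MeasurableSpace α] (hV : ∀ l, Measurable (V l)) (k K : ℕ) :
    MeasurableSet (zeroOnIcc V k K) := by
  simp only [zeroOnIcc, Set.ofPred_forall]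
  exact .iInter fun l => .iInter fun _ => .iInter fun _ => hV l (measurableSet_singleton 0)

lemma measurableSet_allZero [MeasurableSpace α] (hV : ∀ l, Measurable (V l)) (k : ℕ) :
    MeasurableSet (allZero V k) :=
  measurableSet_zeroOnIcc hV 1 k

lemma allZero_zero (V : ℕ → α → ℕ) : allZero V 0 = Set.univ :=
  Set.eq_univ_of_forall fun _ l h1 h2 => absurd (h1.trans h2) (by omega)

lemma allZero_anti {m : ℕ} (hkm : k ≤ m) : allZero V m ⊆ allZero V k :=
  fun _ h l h1 h2 => h l h1 (h2.trans hkm)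

lemma allZero_eq_inter (hk : 1 ≤ k) :
    allZero V k = allZero V (k - 1) ∩ {ω | V k ω = 0} := by
  ext ω
  simp only [allZero, Set.mem_inter_iff, Set.mem_ofPred_eq]
  refine ⟨fun h => ⟨fun l h1 h2 => h l h1 (by omega), h k hk le_rfl⟩, ?_⟩
  rintro ⟨h, hk⟩ l h1 h2
  rcases eq_or_lt_of_le h2 with rfl | hlt
  exacts [hk, h l h1 (by omega)]

lemma zeroOnIcc_eq_inter (hkK : k ≤ K) :
    zeroOnIcc V k K = {ω | V k ω = 0} ∩ zeroOnIcc V (k + 1) K := by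
  ext ω
  simp only [zeroOnIcc, Set.mem_inter_iff, Set.mem_ofPred_eq]
  refine ⟨fun h => ⟨h k le_rfl hkK, fun l h1 h2 => h l (by omega) h2⟩, ?_⟩
  rintro ⟨hk, h⟩ l h1 h2
  rcases eq_or_lt_of_le h1 with rfl | hlt
  exacts [hk, h l hlt h2]

lemma zeroOnIcc_succ_self (V : ℕ → α → ℕ) (K : ℕ) : zeroOnIcc V (K + 1) K = Set.univ :=
  Set.eq_univ_of_forall fun _ l h1 h2 => absurd (h1.trans h2) (by omega)

lemma setOf_eq_one_eq_compl_zeroOnIcc (hbin : ∀ ω, V K ω = 0 ∨ V K ω = 1)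
    (hmono : ∀ k ω, V k ω ≤ V (k + 1) ω) (hK : 1 ≤ K) :
    {ω | V K ω = 1} = (zeroOnIcc V 1 K)ᶜ := by
  ext ω
  have hmono' : Monotone fun k => V k ω := monotone_nat_of_le_succ fun k => hmono k ω
  simp only [zeroOnIcc, Set.mem_compl_iff, Set.mem_ofPred_eq]
  constructor
  · intro h1 h0
    simp [h0 K hK le_rfl] at h1
  · intro h
    refine (hbin ω).resolve_left fun h0 => h fun l _ hl => ?_
    exact Nat.eq_zero_of_le_zero (h0 ▸ hmono' hl)

end Histories

section AtRisk

variable {α β : Type*} {Y D : ℕ → α → ℕ} {X : α → β} {A : α → ℕ} {k : ℕ} {x : β} {a : ℕ}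

lemma measurableSet_atRiskY [MeasurableSpace α] [MeasurableSpace β] [MeasurableSingletonClass β]
    (hXm : Measurable X) (hAm : Measurable A)
    (hYm : ∀ k, Measurable (Y k)) (hDm : ∀ k, Measurable (D k)) (k : ℕ) (x : β) (a : ℕ) :
    MeasurableSet (atRiskY Y D X A k x a) :=
  (((measurableSet_allZero hDm k).inter (measurableSet_allZero hYm (k - 1))).inter
    (hXm (measurableSet_singleton x))).inter (hAm (measurableSet_singleton a))

lemma atRiskY_subset_atRiskD : atRiskY Y D X A k x a ⊆ atRiskD Y D X A k x a :=
  fun _ ⟨⟨⟨hD, hY⟩, hX⟩, hA⟩ => ⟨⟨⟨allZero_anti (Nat.sub_le k 1) hD, hY⟩, hX⟩, hA⟩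

lemma atRiskD_one : atRiskD Y D X A 1 x a = {ω | X ω = x} ∩ {ω | A ω = a} := by
  simp only [atRiskD, Nat.sub_self, allZero_zero, Set.univ_inter]

lemma atRiskD_eq_inter :
    atRiskD Y D X A k x a
      = {ω | X ω = x} ∩ {ω | A ω = a} ∩ allZero Y (k - 1) ∩ allZero D (k - 1) := by
  ext ω
  simp only [atRiskD, Set.mem_inter_iff]
  tauto

lemma atRiskY_eq_atRiskD_inter (hk : 1 ≤ k) :
    atRiskY Y D X A k x a = atRiskD Y D X A k x a ∩ {ω | D k ω = 0} := by
  ext ω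
  simp only [atRiskY, atRiskD, allZero_eq_inter hk, Set.mem_inter_iff]
  tauto

lemma atRiskD_succ (hk : 1 ≤ k) :
    atRiskD Y D X A (k + 1) x a = atRiskY Y D X A k x a ∩ {ω | Y k ω = 0} := by
  ext ω
  simp only [atRiskY, atRiskD, Nat.add_sub_cancel, allZero_eq_inter (V := Y) hk,
    Set.mem_inter_iff]
  tauto

variable [MeasurableSpace α] {μ : Measure α}

lemma hazY_le_one (k : ℕ) (x : β) (a : ℕ) : hazY μ Y D X A k x a ≤ 1 :=
  prob_le_one

lemma cond_atRiskY_eq_one_sub_hazY [IsFiniteMeasure μ] (hYbin : ∀ ω, Y k ω = 0 ∨ Y k ω = 1)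
    (hYm : Measurable (Y k)) (hpos : μ (atRiskY Y D X A k x a) ≠ 0) :
    μ[{ω | Y k ω = 0}|atRiskY Y D X A k x a] = 1 - hazY μ Y D X A k x a := by
  have := cond_isProbabilityMeasure (μ := μ) hpos
  have hcompl : {ω | Y k ω = 0} = {ω | Y k ω = 1}ᶜ := by
    ext ω
    rcases hYbin ω with h | h <;> simp [h]
  rw [hcompl, prob_compl_eq_one_sub (s := {ω | Y k ω = 1}) (hYm (measurableSet_singleton 1)),
    hazY]

lemma cond_atRiskD_zeroOnIcc_eq_cond_atRiskY {Z : ℕ → α → ℕ} {K : ℕ}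
    (hm : MeasurableSet (atRiskY Y D X A k x a)) (hkK : k ≤ K)
    (hcons : ∀ ω ∈ atRiskY Y D X A k x a, Y k ω = Z k ω)
    (hseq : μ[zeroOnIcc Z k K|atRiskY Y D X A k x a] = μ[zeroOnIcc Z k K|atRiskD Y D X A k x a]) :
    μ[zeroOnIcc Z k K|atRiskD Y D X A k x a]
      = μ[{ω | Y k ω = 0} ∩ zeroOnIcc Z (k + 1) K|atRiskY Y D X A k x a] := by
  rw [← hseq, zeroOnIcc_eq_inter hkK]
  refine cond_congr_of_inter_eq hm (Set.ext fun ω => and_congr_right fun hω => ?_)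
  simp only [Set.mem_inter_iff, Set.mem_ofPred_eq, hcons ω hω]

theorem cond_atRiskD_zeroOnIcc_eq_prod [MeasurableSpace β] [MeasurableSingletonClass β]
    [IsFiniteMeasure μ] {Z : ℕ → α → ℕ} {K : ℕ}
    (hXm : Measurable X) (hAm : Measurable A)
    (hYm : ∀ k, Measurable (Y k)) (hDm : ∀ k, Measurable (D k))
    (hYbin : ∀ k ω, Y k ω = 0 ∨ Y k ω = 1)
    (hpos : ∀ k, 1 ≤ k → k ≤ K → μ (atRiskY Y D X A k x a) ≠ 0)
    (hcons : ∀ k, 1 ≤ k → k ≤ K → ∀ ω ∈ atRiskY Y D X A k x a, Y k ω = Z k ω)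
    (hseq : ∀ k, 1 ≤ k → k ≤ K →
      μ[zeroOnIcc Z k K|atRiskY Y D X A k x a] = μ[zeroOnIcc Z k K|atRiskD Y D X A k x a])
    (hk : 1 ≤ k) (hkK : k ≤ K) :
    μ[zeroOnIcc Z k K|atRiskD Y D X A k x a] = ∏ q ∈ Icc k K, (1 - hazY μ Y D X A q x a) := by
  have hm := measurableSet_atRiskY hXm hAm hYm hDm
  induction hkK using Nat.decreasingInduction with
  | self =>
    rw [cond_atRiskD_zeroOnIcc_eq_cond_atRiskY (hm K x a) le_rfl (hcons K hk le_rfl)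
        (hseq K hk le_rfl), zeroOnIcc_succ_self, Set.inter_univ,
      cond_atRiskY_eq_one_sub_hazY (hYbin K) (hYm K) (hpos K hk le_rfl), Icc_self,
      prod_singleton]
  | of_succ k hkK ih =>
    rw [cond_atRiskD_zeroOnIcc_eq_cond_atRiskY (hm k x a) hkK.le (hcons k hk hkK.le)
        (hseq k hk hkK.le),
      cond_inter_eq_mul (s := {ω | Y k ω = 0}) (hm k x a) (hYm k (measurableSet_singleton 0)),
      ← atRiskD_succ hk, ih (by omega),
      cond_atRiskY_eq_one_sub_hazY (hYbin k) (hYm k) (hpos k hk hkK.le),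
      Icc_eq_cons_Ioc hkK.le, prod_cons, ← Icc_add_one_left_eq_Ioc]

end AtRisk

theorem direct_effect_identification
    (μ : Measure Ω) [IsProbabilityMeasure μ]
    (Y D : ℕ → Ω → ℕ) (X : Ω → 𝓧) (A : Ω → ℕ)
    -- measurability of the random variables
    (hXm : Measurable X) (hAm : Measurable A)
    (hYm : ∀ k, Measurable (Y k)) (hDm : ∀ k, Measurable (D k))
    -- binary indicators, absorbing events, mutual exclusivity
    (hYbin : ∀ k ω, Y k ω = 0 ∨ Y k ω = 1)
    (K : ℕ) (hK : 1 ≤ K)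
    -- counterfactual indicators Y^{a,d̄=0}_k under the joint intervention
    -- do(A = a, D̄_K = 0) eliminating the competing event
    (Ycf0 : ℕ → ℕ → Ω → ℕ)
    (hYcf0m : ∀ a k, Measurable (Ycf0 a k))
    (hYcf0bin : ∀ a k ω, Ycf0 a k ω = 0 ∨ Ycf0 a k ω = 1)
    (hYcf0mono : ∀ a k ω, Ycf0 a k ω ≤ Ycf0 a (k + 1) ω)
    -- (Y^{a,d̄=0}_1, …, Y^{a,d̄=0}_K) is conditionally independent of A given X
    -- (stated through the atoms of the discrete counterfactual family)
    (hexch0 : ∀ a a' x, (a = 0 ∨ a = 1) → (a' = 0 ∨ a' = 1) →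
      μ {ω | X ω = x} ≠ 0 → μ ({ω | X ω = x} ∩ {ω | A ω = a'}) ≠ 0 →
      ∀ f : ℕ → ℕ,
        μ[|{ω | X ω = x} ∩ {ω | A ω = a'}]
            {ω | ∀ j, 1 ≤ j → j ≤ K → Ycf0 a j ω = f j}
          = μ[|{ω | X ω = x}] {ω | ∀ j, 1 ≤ j → j ≤ K → Ycf0 a j ω = f j})
    -- Assumption 2 (i): sequential exchangeability — (Y^{a,d̄=0}_k, …, Y^{a,d̄=0}_K)
    -- is conditionally independent of D_k given X = x, A = a, Ȳ_{k−1} = D̄_{k−1} = 0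
    (hseqexch : ∀ a x k, (a = 0 ∨ a = 1) → 1 ≤ k → k ≤ K →
      μ ({ω | X ω = x} ∩ {ω | A ω = a} ∩ allZero Y (k - 1) ∩ allZero D (k - 1)) ≠ 0 →
      μ ({ω | X ω = x} ∩ {ω | A ω = a} ∩ allZero Y (k - 1) ∩ allZero D (k - 1)
          ∩ {ω | D k ω = 0}) ≠ 0 →
      ∀ f : ℕ → ℕ,
        μ[|{ω | X ω = x} ∩ {ω | A ω = a} ∩ allZero Y (k - 1) ∩ allZero D (k - 1)
            ∩ {ω | D k ω = 0}]
            {ω | ∀ l, k ≤ l → l ≤ K → Ycf0 a l ω = f l}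
          = μ[|{ω | X ω = x} ∩ {ω | A ω = a} ∩ allZero Y (k - 1) ∩ allZero D (k - 1)]
              {ω | ∀ l, k ≤ l → l ≤ K → Ycf0 a l ω = f l})
    -- Assumption 2 (iii): consistency w.r.t. elimination of the competing event:
    -- on the event {A = a, D̄_k = 0} one has Ȳ_k = Ȳ^{a,d̄=0}_k
    (hcons0 : ∀ a ω k, (a = 0 ∨ a = 1) → k ≤ K → A ω = a →
      (∀ l, 1 ≤ l → l ≤ k → D l ω = 0) →
      ∀ l, 1 ≤ l → l ≤ k → Y l ω = Ycf0 a l ω)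
    (hK : 1 ≤ K) (x : 𝓧) (a : ℕ) (ha : a = 0 ∨ a = 1)
    -- positivity of all conditioning events appearing in the statement
    (hposY : ∀ l, 1 ≤ l → l ≤ K → μ (atRiskY Y D X A l x a) ≠ 0) :
    μ[|{ω | X ω = x}] {ω | Ycf0 a K ω = 1}
      = ∑ l ∈ Icc 1 K,
          hazY μ Y D X A l x a
            * ∏ q ∈ Icc 1 (l - 1), (1 - hazY μ Y D X A q x a) := by
  have hposXA : μ ({ω | X ω = x} ∩ {ω | A ω = a}) ≠ 0 := by
    rw [← atRiskD_one (Y := Y) (D := D)]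
    exact mt (measure_mono_null atRiskY_subset_atRiskD) (hposY 1 le_rfl hK)
  have hposX : μ {ω | X ω = x} ≠ 0 := mt (measure_mono_null Set.inter_subset_left) hposXA
  have hcons : ∀ k, 1 ≤ k → k ≤ K → ∀ ω ∈ atRiskY Y D X A k x a, Y k ω = Ycf0 a k ω :=
    fun k hk hkK ω ⟨⟨⟨hD, _⟩, _⟩, hA⟩ => hcons0 a ω k ha hkK hA hD k hk le_rfl
  have hseq : ∀ k, 1 ≤ k → k ≤ K → μ[zeroOnIcc (Ycf0 a) k K|atRiskY Y D X A k x a]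
      = μ[zeroOnIcc (Ycf0 a) k K|atRiskD Y D X A k x a] := by
    intro k hk hkK
    have hposD := mt (measure_mono_null atRiskY_subset_atRiskD) (hposY k hk hkK)
    have hposY' := hposY k hk hkK
    rw [atRiskY_eq_atRiskD_inter hk] at hposY' ⊢
    rw [atRiskD_eq_inter] at hposD hposY' ⊢
    exact hseqexch a x k ha hk hkK hposD hposY' fun _ => 0
  have := cond_isProbabilityMeasure hposX
  calc μ[{ω | Ycf0 a K ω = 1}|{ω | X ω = x}]
      = 1 - μ[zeroOnIcc (Ycf0 a) 1 K|{ω | X ω = x}] := by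
        rw [setOf_eq_one_eq_compl_zeroOnIcc (hYcf0bin a K) (hYcf0mono a) hK,
          prob_compl_eq_one_sub (measurableSet_zeroOnIcc (hYcf0m a) 1 K)]
    _ = 1 - μ[zeroOnIcc (Ycf0 a) 1 K|atRiskD Y D X A 1 x a] := by
        rw [atRiskD_one]
        exact congrArg (1 - ·) (hexch0 a a x ha ha hposX hposXA fun _ => 0).symm
    _ = 1 - ∏ q ∈ Icc 1 K, (1 - hazY μ Y D X A q x a) := by
        rw [cond_atRiskD_zeroOnIcc_eq_prod hXm hAm hYm hDm hYbin hposY hcons hseq le_rfl hK]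
    _ = _ := (sum_mul_prod_one_sub_eq_one_sub_prod _ (hazY_le_one · x a) K).symm

end Stmt6
end
end

section
/- Interventional at-risk distribution for the direct effect: under Assumptions 1 and 2, for every k ∈ {1,…,K}, every x with P(X = x) > 0 and every a ∈ {0,1}, P(X = x | Ȳ^{a,d̄=0}_{k−1} = 0) = [P(X = x)·Π_{l=1}^{k−1} (1 − h_Y(l,x,a))] / P(Ȳ^{a,d̄=0}_{k−1} = 0); i.e., relative to the observational at-risk covariate distribution, both the treatment-assignment factor P(A = a | X = x) and all competing-event factors (1 − h_D(l,x,a)) are removed. -/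
/-!
STATEMENT 7: Interventional at-risk distribution for the direct effect. Under
Assumptions 1 and 2, for every `k ∈ {1,…,K}`, every `x` with `P(X = x) > 0` and
every `a ∈ {0,1}`,
`P(X = x | Ȳ^{a,d̄=0}_{k−1} = 0)
  = [P(X = x)·Π_{l=1}^{k−1} (1 − h_Y(l,x,a))] / P(Ȳ^{a,d̄=0}_{k−1} = 0)`;
i.e. relative to the observational at-risk covariate distribution, both the
treatment-assignment factor `P(A = a | X = x)` and all competing-event factors
`(1 − h_D(l,x,a))` are removed.
-/

open MeasureTheory ProbabilityTheory Finset
open scoped ENNReal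

noncomputable section

namespace Stmt7

variable {Ω 𝓧 : Type*} [MeasurableSpace Ω] [MeasurableSpace 𝓧] [MeasurableSingletonClass 𝓧]

/-- The event that the history `V̄_k = (V_1, …, V_k)` is identically zero; for `k = 0`
this is all of `Ω` (the convention `V̄_0 = 0`). -/
def allZero (V : ℕ → Ω → ℕ) (k : ℕ) : Set Ω :=
  {ω | ∀ l, 1 ≤ l → l ≤ k → V l ω = 0}

/-- Conditioning event of the main-event hazard `h_Y(k,x,a)`:
`{D̄_k = 0, Ȳ_{k−1} = 0, X = x, A = a}` (the competing event is resolved before the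
main event within each interval). -/
def atRiskY (Y D : ℕ → Ω → ℕ) (X : Ω → 𝓧) (A : Ω → ℕ) (k : ℕ) (x : 𝓧) (a : ℕ) : Set Ω :=
  allZero D k ∩ allZero Y (k - 1) ∩ {ω | X ω = x} ∩ {ω | A ω = a}

/-- Conditioning event of the competing-event hazard `h_D(k,x,a)`:
`{D̄_{k−1} = 0, Ȳ_{k−1} = 0, X = x, A = a}`. -/
def atRiskD (Y D : ℕ → Ω → ℕ) (X : Ω → 𝓧) (A : Ω → ℕ) (k : ℕ) (x : 𝓧) (a : ℕ) : Set Ω :=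
  allZero D (k - 1) ∩ allZero Y (k - 1) ∩ {ω | X ω = x} ∩ {ω | A ω = a}

/-- Conditional hazard of the main event,
`h_Y(k,x,a) = P(Y_k = 1 | D̄_k = 0, Ȳ_{k−1} = 0, X = x, A = a)`. -/
def hazY (μ : Measure Ω) (Y D : ℕ → Ω → ℕ) (X : Ω → 𝓧) (A : Ω → ℕ)
    (k : ℕ) (x : 𝓧) (a : ℕ) : ℝ≥0∞ :=
  μ[|atRiskY Y D X A k x a] {ω | Y k ω = 1}

/-- Conditional hazard of the competing event,
`h_D(k,x,a) = P(D_k = 1 | D̄_{k−1} = 0, Ȳ_{k−1} = 0, X = x, A = a)`. -/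
def hazD (μ : Measure Ω) (Y D : ℕ → Ω → ℕ) (X : Ω → 𝓧) (A : Ω → ℕ)
    (k : ℕ) (x : 𝓧) (a : ℕ) : ℝ≥0∞ :=
  μ[|atRiskD Y D X A k x a] {ω | D k ω = 1}

/-!
By Bayes' rule, `P(X = x | Ȳ^{a,d̄=0}_{k−1} = 0)` is `P(X = x)` times the counterfactual
survival probability `P(Ȳ^{a,d̄=0}_{k−1} = 0 | X = x)` divided by `P(Ȳ^{a,d̄=0}_{k−1} = 0)`,
and exchangeability with respect to `A` lets one add `A = a` to the conditioning. This survival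
probability is then carried through the observed at-risk sets one interval at a time:
sequential exchangeability adds `D_l = 0` to the conditioning for free, and on the resulting
set consistency identifies `Y^{a,d̄=0}_l` with `Y_l`, so surviving interval `l` costs exactly
the factor `1 − h_Y(l,x,a)`. On the last at-risk set counterfactual survival is certain.
-/

set_option linter.unusedSectionVars false

open ProbabilityTheory

theorem eq_prod_Ico_mul_of_eq_mul_succ {M : Type*} [CommMonoid M] {u c : ℕ → M} {m N : ℕ}
    (hmN : m ≤ N) (h : ∀ l, m ≤ l → l < N → u l = c l * u (l + 1)) :
    u m = (∏ l ∈ Ico m N, c l) * u N := by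
  induction N, hmN using Nat.le_induction with
  | base => simp
  | succ N hmN ih =>
    rw [ih fun l hml hlN => h l hml (by omega), h N hmN (by omega), prod_Ico_succ_top hmN,
      mul_assoc]

theorem measure_eq_of_forall_fiber_eq {ι β : Type*} [Finite ι] [Countable β] [MeasurableSpace β]
    [MeasurableSingletonClass β] {ν₁ ν₂ : Measure Ω} {W : ι → Ω → β} (hW : ∀ i, Measurable (W i))
    (h : ∀ f : ι → β, ν₁ {ω | ∀ i, W i ω = f i} = ν₂ {ω | ∀ i, W i ω = f i})
    {E : Set Ω} (hE : ∀ ω ω', (∀ i, W i ω = W i ω') → ω ∈ E → ω' ∈ E) : ν₁ E = ν₂ E := by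
  set V : Ω → ι → β := fun ω i => W i ω
  have hV : Measurable V := measurable_pi_lambda _ hW
  have hmap : ν₁.map V = ν₂.map V := Measure.ext_of_singleton fun f => by
    rw [Measure.map_apply hV (measurableSet_singleton f),
      Measure.map_apply hV (measurableSet_singleton f)]
    simpa only [Set.preimage, Set.mem_singleton_iff, funext_iff, V] using h f
  have hEV : E = V ⁻¹' (V '' E) := by
    refine (Set.subset_preimage_image V E).antisymm ?_
    rintro ω ⟨ω', hω', hV⟩
    exact hE ω' ω (congrFun hV) hω'
  have hVE : MeasurableSet (V '' E) := (Set.to_countable _).measurableSet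
  rw [hEV, ← Measure.map_apply hV hVE, hmap, Measure.map_apply hV hVE]

theorem measure_eq_of_forall_fiber_Icc_eq {ν₁ ν₂ : Measure Ω} {W : ℕ → Ω → ℕ}
    (hW : ∀ l, Measurable (W l)) {j K : ℕ}
    (h : ∀ f : ℕ → ℕ, ν₁ {ω | ∀ l, j ≤ l → l ≤ K → W l ω = f l}
      = ν₂ {ω | ∀ l, j ≤ l → l ≤ K → W l ω = f l})
    {E : Set Ω} (hE : ∀ ω ω', (∀ l, j ≤ l → l ≤ K → W l ω = W l ω') → ω ∈ E → ω' ∈ E) :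
    ν₁ E = ν₂ E := by
  refine measure_eq_of_forall_fiber_eq (W := fun i : Icc j K => W i) (fun i => hW i) (fun f => ?_)
    fun ω ω' hωω' => hE ω ω' fun l hjl hlK => hωω' ⟨l, mem_Icc.2 ⟨hjl, hlK⟩⟩
  convert h fun l => if hl : l ∈ Icc j K then f ⟨l, hl⟩ else 0 using 2 <;>
  · ext ω
    simp only [Set.mem_ofPred_eq, Subtype.forall, mem_Icc]
    exact ⟨fun hω l hjl hlK => by simp [hjl, hlK, hω l ⟨hjl, hlK⟩],
      fun hω l hl => by simpa [hl] using hω l hl.1 hl.2⟩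

theorem cond_eq_cond_mul_cond_inter {μ : Measure Ω} [IsFiniteMeasure μ] {s T Z : Set Ω}
    (hT : MeasurableSet T) (hZ : MeasurableSet Z) (hsT : μ (s ∩ T) ≠ 0) (hsZ : s ∩ Z ⊆ T) :
    μ[Z|s] = μ[T|s] * μ[Z|s ∩ T] := by
  have hsTZ : s ∩ T ∩ Z = s ∩ Z := by
    rw [Set.inter_right_comm]; exact Set.inter_eq_left.2 hsZ
  rw [cond_apply' hZ, cond_apply' hT, cond_apply' hZ, hsTZ, mul_assoc, ← mul_assoc (μ (s ∩ T)),
    ENNReal.mul_inv_cancel hsT (measure_ne_top _ _), one_mul]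

theorem cond_eq_one_of_subset {μ : Measure Ω} [IsFiniteMeasure μ] {s Z : Set Ω}
    (hZ : MeasurableSet Z) (hs : μ s ≠ 0) (hsZ : s ⊆ Z) : μ[Z|s] = 1 := by
  rw [cond_apply' hZ, Set.inter_eq_left.2 hsZ, ENNReal.inv_mul_cancel hs (measure_ne_top _ _)]

theorem allZero_zero (V : ℕ → Ω → ℕ) : allZero V 0 = Set.univ :=
  Set.eq_univ_of_forall fun _ l hl hl0 => absurd hl (by omega)

theorem allZero_succ (V : ℕ → Ω → ℕ) (n : ℕ) :
    allZero V (n + 1) = allZero V n ∩ {ω | V (n + 1) ω = 0} := by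
  ext ω
  simp only [allZero, Set.mem_inter_iff, Set.mem_ofPred_eq]
  refine ⟨fun h => ⟨fun l hl hln => h l hl (by omega), h (n + 1) (by omega) le_rfl⟩,
    fun ⟨h, hn⟩ l hl hln => ?_⟩
  rcases Nat.lt_or_ge l (n + 1) with hln' | hln'
  · exact h l hl (by omega)
  · rwa [show l = n + 1 by omega]

theorem measurableSet_allZero {V : ℕ → Ω → ℕ} (hV : ∀ l, Measurable (V l)) (n : ℕ) :
    MeasurableSet (allZero V n) := by
  induction n with
  | zero => simp [allZero_zero]
  | succ n ih => rw [allZero_succ]; exact ih.inter (hV _ (measurableSet_singleton 0))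

theorem mem_allZero_iff_of_monotone {V : ℕ → Ω → ℕ} {ω : Ω} (hV : Monotone fun l => V l ω)
    {n : ℕ} (hn : 1 ≤ n) : ω ∈ allZero V n ↔ V n ω = 0 :=
  ⟨fun h => h n hn le_rfl, fun h _ _ hln => Nat.eq_zero_of_le_zero (h ▸ hV hln)⟩

theorem measure_allZero_eq_of_forall_fiber_eq {ν₁ ν₂ : Measure Ω} {W : ℕ → Ω → ℕ}
    (hW : ∀ l, Measurable (W l)) (hWmono : ∀ l ω, W l ω ≤ W (l + 1) ω) {j n K : ℕ}
    (hj : 1 ≤ j) (hjn : j ≤ n) (hnK : n ≤ K)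
    (h : ∀ f : ℕ → ℕ, ν₁ {ω | ∀ l, j ≤ l → l ≤ K → W l ω = f l}
      = ν₂ {ω | ∀ l, j ≤ l → l ≤ K → W l ω = f l}) :
    ν₁ (allZero W n) = ν₂ (allZero W n) := by
  have hmono : ∀ ω, Monotone fun l => W l ω := fun ω => monotone_nat_of_le_succ (hWmono · ω)
  refine measure_eq_of_forall_fiber_Icc_eq hW h fun ω ω' hωω' hω => ?_
  rw [mem_allZero_iff_of_monotone (hmono ω') (hj.trans hjn), ← hωω' n hjn hnK]
  exact (mem_allZero_iff_of_monotone (hmono ω) (hj.trans hjn)).1 hω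

section AtRisk

variable {μ : Measure Ω} [IsFiniteMeasure μ] {Y D W : ℕ → Ω → ℕ} {X : Ω → 𝓧} {A : Ω → ℕ}
  {x : 𝓧} {a : ℕ}

theorem atRiskD_eq (k : ℕ) : atRiskD Y D X A k x a
    = {ω | X ω = x} ∩ {ω | A ω = a} ∩ allZero Y (k - 1) ∩ allZero D (k - 1) := by
  simp only [atRiskD, Set.inter_comm, Set.inter_left_comm, Set.inter_assoc]

theorem atRiskD_one : atRiskD Y D X A 1 x a = {ω | X ω = x} ∩ {ω | A ω = a} := by
  simp [atRiskD, allZero_zero]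

theorem atRiskY_eq_atRiskD_inter {k : ℕ} (hk : 1 ≤ k) :
    atRiskY Y D X A k x a = atRiskD Y D X A k x a ∩ {ω | D k ω = 0} := by
  obtain ⟨k, rfl⟩ := Nat.exists_eq_add_of_le' hk
  simp only [atRiskY, atRiskD, allZero_succ, Nat.add_sub_cancel]
  ext ω; simp only [Set.mem_inter_iff]; tauto

theorem atRiskD_succ {k : ℕ} (hk : 1 ≤ k) :
    atRiskD Y D X A (k + 1) x a = atRiskY Y D X A k x a ∩ {ω | Y k ω = 0} := by
  obtain ⟨k, rfl⟩ := Nat.exists_eq_add_of_le' hk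
  simp only [atRiskY, atRiskD, allZero_succ, Nat.add_sub_cancel]
  ext ω; simp only [Set.mem_inter_iff]; tauto

theorem one_sub_hazY {k : ℕ} (hY : Measurable (Y k))
    (hYbin : ∀ ω, Y k ω = 0 ∨ Y k ω = 1) (hpos : μ (atRiskY Y D X A k x a) ≠ 0) :
    1 - hazY μ Y D X A k x a = μ[{ω | Y k ω = 0}|atRiskY Y D X A k x a] := by
  have : IsProbabilityMeasure μ[|atRiskY Y D X A k x a] := cond_isProbabilityMeasure hpos
  have hY0 : {ω | Y k ω = 0} = {ω | Y k ω = 1}ᶜ := by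
    ext ω; rcases hYbin ω with h | h <;> simp [h]
  rw [hY0, prob_compl_eq_one_sub (s := {ω | Y k ω = 1}) (hY (measurableSet_singleton 1)), hazY]

theorem cond_allZero_atRiskD_eq_cond_atRiskY (hW : ∀ l, Measurable (W l))
    (hWmono : ∀ l ω, W l ω ≤ W (l + 1) ω) {l n K : ℕ} (hl : 1 ≤ l) (hln : l ≤ n) (hnK : n ≤ K)
    (hexch : ∀ f : ℕ → ℕ,
      μ[{ω | ∀ m, l ≤ m → m ≤ K → W m ω = f m}|{ω | X ω = x} ∩ {ω | A ω = a}
          ∩ allZero Y (l - 1) ∩ allZero D (l - 1) ∩ {ω | D l ω = 0}]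
        = μ[{ω | ∀ m, l ≤ m → m ≤ K → W m ω = f m}|{ω | X ω = x} ∩ {ω | A ω = a}
          ∩ allZero Y (l - 1) ∩ allZero D (l - 1)]) :
    μ[allZero W n|atRiskD Y D X A l x a] = μ[allZero W n|atRiskY Y D X A l x a] := by
  rw [atRiskY_eq_atRiskD_inter hl, atRiskD_eq]
  exact (measure_allZero_eq_of_forall_fiber_eq hW hWmono hl hln hnK hexch).symm

theorem cond_allZero_atRiskD_eq_one (hW : ∀ l, Measurable (W l)) {n : ℕ}
    (hcons : ∀ ω, A ω = a → ω ∈ allZero D n → ∀ l, 1 ≤ l → l ≤ n → Y l ω = W l ω)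
    (hpos : μ (atRiskD Y D X A (n + 1) x a) ≠ 0) :
    μ[allZero W n|atRiskD Y D X A (n + 1) x a] = 1 := by
  refine cond_eq_one_of_subset (measurableSet_allZero hW n) hpos ?_
  rintro ω ⟨⟨⟨hD, hY⟩, -⟩, hA⟩ l hl hln
  rw [Nat.add_sub_cancel] at hD hY
  rw [← hcons ω hA hD l hl hln]
  exact hY l hl hln

theorem cond_allZero_atRiskY_eq_mul (hW : ∀ l, Measurable (W l)) {l n : ℕ} (hl : 1 ≤ l)
    (hln : l ≤ n) (hY : Measurable (Y l)) (hYbin : ∀ ω, Y l ω = 0 ∨ Y l ω = 1)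
    (hcons : ∀ ω, A ω = a → ω ∈ allZero D l → Y l ω = W l ω)
    (hposY : μ (atRiskY Y D X A l x a) ≠ 0) (hposD : μ (atRiskD Y D X A (l + 1) x a) ≠ 0) :
    μ[allZero W n|atRiskY Y D X A l x a]
      = (1 - hazY μ Y D X A l x a) * μ[allZero W n|atRiskD Y D X A (l + 1) x a] := by
  rw [one_sub_hazY hY hYbin hposY, atRiskD_succ hl]
  refine cond_eq_cond_mul_cond_inter (hY (measurableSet_singleton 0))
    (measurableSet_allZero hW n) (by rwa [← atRiskD_succ hl]) ?_
  rintro ω ⟨⟨⟨⟨hD, -⟩, -⟩, hA⟩, hWω⟩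
  show Y l ω = 0
  rw [hcons ω hA hD]
  exact hWω l hl hln

end AtRisk

theorem direct_effect_interventional_at_risk_distribution_general
    (μ : Measure Ω) [IsProbabilityMeasure μ]
    (Y D : ℕ → Ω → ℕ) (X : Ω → 𝓧) (A : Ω → ℕ)
    -- measurability of the random variables
    (hXm : Measurable X)
    (hYm : ∀ k, Measurable (Y k))
    -- binary indicators, absorbing events, mutual exclusivity
    (hYbin : ∀ k ω, Y k ω = 0 ∨ Y k ω = 1)
    (K : ℕ)
    -- Assumption 1 (ii): positivity
    (hposA : ∀ x, μ {ω | X ω = x} ≠ 0 → ∀ a', (a' = 0 ∨ a' = 1) →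
      μ ({ω | X ω = x} ∩ {ω | A ω = a'}) ≠ 0)
    -- counterfactual indicators Y^{a,d̄=0}_k under the joint intervention
    -- do(A = a, D̄_K = 0) eliminating the competing event
    (Ycf0 : ℕ → ℕ → Ω → ℕ)
    (hYcf0m : ∀ a k, Measurable (Ycf0 a k))
    (hYcf0mono : ∀ a k ω, Ycf0 a k ω ≤ Ycf0 a (k + 1) ω)
    -- (Y^{a,d̄=0}_1, …, Y^{a,d̄=0}_K) is conditionally independent of A given X
    -- (stated through the atoms of the discrete counterfactual family)
    (hexch0 : ∀ a a' x, (a = 0 ∨ a = 1) → (a' = 0 ∨ a' = 1) →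
      μ {ω | X ω = x} ≠ 0 → μ ({ω | X ω = x} ∩ {ω | A ω = a'}) ≠ 0 →
      ∀ f : ℕ → ℕ,
        μ[|{ω | X ω = x} ∩ {ω | A ω = a'}]
            {ω | ∀ j, 1 ≤ j → j ≤ K → Ycf0 a j ω = f j}
          = μ[|{ω | X ω = x}] {ω | ∀ j, 1 ≤ j → j ≤ K → Ycf0 a j ω = f j})
    -- Assumption 2 (i): sequential exchangeability — (Y^{a,d̄=0}_k, …, Y^{a,d̄=0}_K)
    -- is conditionally independent of D_k given X = x, A = a, Ȳ_{k−1} = D̄_{k−1} = 0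
    (hseqexch : ∀ a x k, (a = 0 ∨ a = 1) → 1 ≤ k → k ≤ K →
      μ ({ω | X ω = x} ∩ {ω | A ω = a} ∩ allZero Y (k - 1) ∩ allZero D (k - 1)) ≠ 0 →
      μ ({ω | X ω = x} ∩ {ω | A ω = a} ∩ allZero Y (k - 1) ∩ allZero D (k - 1)
          ∩ {ω | D k ω = 0}) ≠ 0 →
      ∀ f : ℕ → ℕ,
        μ[|{ω | X ω = x} ∩ {ω | A ω = a} ∩ allZero Y (k - 1) ∩ allZero D (k - 1)
            ∩ {ω | D k ω = 0}]
            {ω | ∀ l, k ≤ l → l ≤ K → Ycf0 a l ω = f l}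
          = μ[|{ω | X ω = x} ∩ {ω | A ω = a} ∩ allZero Y (k - 1) ∩ allZero D (k - 1)]
              {ω | ∀ l, k ≤ l → l ≤ K → Ycf0 a l ω = f l})
    -- Assumption 2 (iii): consistency w.r.t. elimination of the competing event:
    -- on the event {A = a, D̄_k = 0} one has Ȳ_k = Ȳ^{a,d̄=0}_k
    (hcons0 : ∀ a ω k, (a = 0 ∨ a = 1) → k ≤ K → A ω = a →
      (∀ l, 1 ≤ l → l ≤ k → D l ω = 0) →
      ∀ l, 1 ≤ l → l ≤ k → Y l ω = Ycf0 a l ω)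
    (k : ℕ) (hk1 : 1 ≤ k) (hkK : k ≤ K)
    (x : 𝓧) (a : ℕ) (ha : a = 0 ∨ a = 1)
    -- positivity of all conditioning events appearing in the statement
    (hposX : μ {ω | X ω = x} ≠ 0)
    (hposY : ∀ l, 1 ≤ l → l ≤ K → μ (atRiskY Y D X A l x a) ≠ 0)
    (hposD : ∀ l, 1 ≤ l → l ≤ K → μ (atRiskD Y D X A l x a) ≠ 0) :
    μ[|allZero (Ycf0 a) (k - 1)] {ω | X ω = x}
      = (μ {ω | X ω = x} * ∏ l ∈ Icc 1 (k - 1), (1 - hazY μ Y D X A l x a))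
          / μ (allZero (Ycf0 a) (k - 1)) := by
  obtain ⟨n, rfl⟩ : ∃ n, k = n + 1 := ⟨k - 1, by omega⟩
  rw [Nat.add_sub_cancel]
  set Z := allZero (Ycf0 a) n
  have hZ : MeasurableSet Z := measurableSet_allZero (hYcf0m a) n
  have hcons : ∀ ω l, l ≤ n + 1 → A ω = a → ω ∈ allZero D l →
      ∀ m, 1 ≤ m → m ≤ l → Y m ω = Ycf0 a m ω :=
    fun ω l hl hA hD => hcons0 a ω l ha (by omega) hA hD
  have hstep : ∀ l, 1 ≤ l → l < n + 1 → μ[Z|atRiskD Y D X A l x a]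
      = (1 - hazY μ Y D X A l x a) * μ[Z|atRiskD Y D X A (l + 1) x a] := by
    intro l hl hln
    have hpD := hposD l hl (by omega)
    have hpY := hposY l hl (by omega)
    rw [atRiskD_eq] at hpD
    rw [atRiskY_eq_atRiskD_inter hl, atRiskD_eq] at hpY
    rw [cond_allZero_atRiskD_eq_cond_atRiskY (hYcf0m a) (hYcf0mono a) hl (by omega)
      (by omega : n ≤ K) (hseqexch a x l ha hl (by omega) hpD hpY)]
    exact cond_allZero_atRiskY_eq_mul (hYcf0m a) hl (by omega) (hYm l) (hYbin l)
      (fun ω hA hD => hcons ω l (by omega) hA hD l hl le_rfl) (hposY l hl (by omega))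
      (hposD (l + 1) (by omega) (by omega))
  have hbase : μ[Z|atRiskD Y D X A (n + 1) x a] = 1 :=
    cond_allZero_atRiskD_eq_one (hYcf0m a) (hcons · n (by omega)) (hposD (n + 1) hk1 hkK)
  have htreat : μ[Z|{ω | X ω = x}] = μ[Z|{ω | X ω = x} ∩ {ω | A ω = a}] :=
    (measure_eq_of_forall_fiber_Icc_eq (E := Z) (hYcf0m a)
      (hexch0 a a x ha ha hposX (hposA x hposX a ha)) fun ω ω' hωω' hω l hl hln =>
        hωω' l hl (by omega) ▸ hω l hl hln).symm
  rw [cond_eq_inv_mul_cond_mul (t := {ω | X ω = x}) hZ (hXm (measurableSet_singleton x)),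
    htreat, ← atRiskD_one,
    eq_prod_Ico_mul_of_eq_mul_succ (u := fun l => μ[Z|atRiskD Y D X A l x a]) hk1 hstep, hbase,
    Ico_add_one_right_eq_Icc, mul_one, div_eq_mul_inv]
  ring

theorem direct_effect_interventional_at_risk_distribution
    (μ : Measure Ω) [IsProbabilityMeasure μ]
    (Y D : ℕ → Ω → ℕ) (X : Ω → 𝓧) (A : Ω → ℕ)
    -- measurability of the random variables
    (hXm : Measurable X) (hAm : Measurable A)
    (hYm : ∀ k, Measurable (Y k)) (hDm : ∀ k, Measurable (D k))
    -- binary indicators, absorbing events, mutual exclusivity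
    (hYbin : ∀ k ω, Y k ω = 0 ∨ Y k ω = 1) (hDbin : ∀ k ω, D k ω = 0 ∨ D k ω = 1)
    (hYmono : ∀ k ω, Y k ω ≤ Y (k + 1) ω) (hDmono : ∀ k ω, D k ω ≤ D (k + 1) ω)
    (hexcl : ∀ k ω, Y k ω * D k ω = 0)
    (hAbin : ∀ ω, A ω = 0 ∨ A ω = 1)
    (K : ℕ) (hK : 1 ≤ K)
    -- counterfactual indicators Y^a_k, D^a_k under the intervention do(A = a)
    (Ycf Dcf : ℕ → ℕ → Ω → ℕ)
    (hYcfm : ∀ a k, Measurable (Ycf a k)) (hDcfm : ∀ a k, Measurable (Dcf a k))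
    (hYcfbin : ∀ a k ω, Ycf a k ω = 0 ∨ Ycf a k ω = 1)
    (hDcfbin : ∀ a k ω, Dcf a k ω = 0 ∨ Dcf a k ω = 1)
    (hYcfmono : ∀ a k ω, Ycf a k ω ≤ Ycf a (k + 1) ω)
    (hDcfmono : ∀ a k ω, Dcf a k ω ≤ Dcf a (k + 1) ω)
    (hcfexcl : ∀ a k ω, Ycf a k ω * Dcf a k ω = 0)
    -- Assumption 1 (i): exchangeability — the family (Y^a_1, D^a_1, …, Y^a_K, D^a_K)
    -- is conditionally independent of A given X (stated through the atoms of the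
    -- discrete counterfactual family)
    (hexch : ∀ a a' x, (a = 0 ∨ a = 1) → (a' = 0 ∨ a' = 1) →
      μ {ω | X ω = x} ≠ 0 → μ ({ω | X ω = x} ∩ {ω | A ω = a'}) ≠ 0 →
      ∀ f g : ℕ → ℕ,
        μ[|{ω | X ω = x} ∩ {ω | A ω = a'}]
            {ω | ∀ j, 1 ≤ j → j ≤ K → (Ycf a j ω = f j ∧ Dcf a j ω = g j)}
          = μ[|{ω | X ω = x}]
              {ω | ∀ j, 1 ≤ j → j ≤ K → (Ycf a j ω = f j ∧ Dcf a j ω = g j)})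
    -- Assumption 1 (ii): positivity
    (hposA : ∀ x, μ {ω | X ω = x} ≠ 0 → ∀ a', (a' = 0 ∨ a' = 1) →
      μ ({ω | X ω = x} ∩ {ω | A ω = a'}) ≠ 0)
    -- Assumption 1 (iii): consistency
    (hconsY : ∀ k ω, Y k ω = A ω * Ycf 1 k ω + (1 - A ω) * Ycf 0 k ω)
    (hconsD : ∀ k ω, D k ω = A ω * Dcf 1 k ω + (1 - A ω) * Dcf 0 k ω)
    -- counterfactual indicators Y^{a,d̄=0}_k under the joint intervention
    -- do(A = a, D̄_K = 0) eliminating the competing event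
    (Ycf0 : ℕ → ℕ → Ω → ℕ)
    (hYcf0m : ∀ a k, Measurable (Ycf0 a k))
    (hYcf0bin : ∀ a k ω, Ycf0 a k ω = 0 ∨ Ycf0 a k ω = 1)
    (hYcf0mono : ∀ a k ω, Ycf0 a k ω ≤ Ycf0 a (k + 1) ω)
    -- (Y^{a,d̄=0}_1, …, Y^{a,d̄=0}_K) is conditionally independent of A given X
    -- (stated through the atoms of the discrete counterfactual family)
    (hexch0 : ∀ a a' x, (a = 0 ∨ a = 1) → (a' = 0 ∨ a' = 1) →
      μ {ω | X ω = x} ≠ 0 → μ ({ω | X ω = x} ∩ {ω | A ω = a'}) ≠ 0 →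
      ∀ f : ℕ → ℕ,
        μ[|{ω | X ω = x} ∩ {ω | A ω = a'}]
            {ω | ∀ j, 1 ≤ j → j ≤ K → Ycf0 a j ω = f j}
          = μ[|{ω | X ω = x}] {ω | ∀ j, 1 ≤ j → j ≤ K → Ycf0 a j ω = f j})
    -- Assumption 2 (i): sequential exchangeability — (Y^{a,d̄=0}_k, …, Y^{a,d̄=0}_K)
    -- is conditionally independent of D_k given X = x, A = a, Ȳ_{k−1} = D̄_{k−1} = 0
    (hseqexch : ∀ a x k, (a = 0 ∨ a = 1) → 1 ≤ k → k ≤ K →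
      μ ({ω | X ω = x} ∩ {ω | A ω = a} ∩ allZero Y (k - 1) ∩ allZero D (k - 1)) ≠ 0 →
      μ ({ω | X ω = x} ∩ {ω | A ω = a} ∩ allZero Y (k - 1) ∩ allZero D (k - 1)
          ∩ {ω | D k ω = 0}) ≠ 0 →
      ∀ f : ℕ → ℕ,
        μ[|{ω | X ω = x} ∩ {ω | A ω = a} ∩ allZero Y (k - 1) ∩ allZero D (k - 1)
            ∩ {ω | D k ω = 0}]
            {ω | ∀ l, k ≤ l → l ≤ K → Ycf0 a l ω = f l}
          = μ[|{ω | X ω = x} ∩ {ω | A ω = a} ∩ allZero Y (k - 1) ∩ allZero D (k - 1)]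
              {ω | ∀ l, k ≤ l → l ≤ K → Ycf0 a l ω = f l})
    -- Assumption 2 (ii): positivity w.r.t. the competing event
    (hposDcomp : ∀ a x k, (a = 0 ∨ a = 1) → 1 ≤ k → k ≤ K →
      μ ({ω | X ω = x} ∩ {ω | A ω = a} ∩ allZero Y (k - 1) ∩ allZero D (k - 1)) ≠ 0 →
      μ ({ω | X ω = x} ∩ {ω | A ω = a} ∩ allZero Y (k - 1) ∩ allZero D (k - 1)
          ∩ {ω | D k ω = 0}) ≠ 0)
    -- Assumption 2 (iii): consistency w.r.t. elimination of the competing event: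
    -- on the event {A = a, D̄_k = 0} one has Ȳ_k = Ȳ^{a,d̄=0}_k
    (hcons0 : ∀ a ω k, (a = 0 ∨ a = 1) → k ≤ K → A ω = a →
      (∀ l, 1 ≤ l → l ≤ k → D l ω = 0) →
      ∀ l, 1 ≤ l → l ≤ k → Y l ω = Ycf0 a l ω)
    (k : ℕ) (hk1 : 1 ≤ k) (hkK : k ≤ K)
    (x : 𝓧) (a : ℕ) (ha : a = 0 ∨ a = 1)
    -- positivity of all conditioning events appearing in the statement
    (hposX : μ {ω | X ω = x} ≠ 0)
    (hposY : ∀ l, 1 ≤ l → l ≤ K → μ (atRiskY Y D X A l x a) ≠ 0)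
    (hposD : ∀ l, 1 ≤ l → l ≤ K → μ (atRiskD Y D X A l x a) ≠ 0)
    (hposInt : μ (allZero (Ycf0 a) (k - 1)) ≠ 0) :
    μ[|allZero (Ycf0 a) (k - 1)] {ω | X ω = x}
      = (μ {ω | X ω = x} * ∏ l ∈ Icc 1 (k - 1), (1 - hazY μ Y D X A l x a))
          / μ (allZero (Ycf0 a) (k - 1)) :=
  direct_effect_interventional_at_risk_distribution_general μ Y D X A hXm hYm hYbin K hposA Ycf0
    hYcf0m hYcf0mono hexch0 hseqexch hcons0 k hk1 hkK x a ha hposX hposY hposD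

end Stmt7
end
end

section
/- Identification of the interventional at-risk covariate distribution for separable effects: under the separable-effects assumptions (exchangeability, positivity, consistency, and the dismissible components conditions), for every k ∈ {1,…,K}, every x with P(X = x) > 0 and every a_Y, a_D ∈ {0,1}, P(X = x, D̄^{a_Y,a_D}_k = 0, Ȳ^{a_Y,a_D}_{k−1} = 0) = P(X = x)·(1 − h_D(k,x,a_D))·Π_{l=1}^{k−1} (1 − h_D(l,x,a_D))·(1 − h_Y(l,x,a_Y)). -/
/-!
STATEMENT 9: Identification of the interventional at-risk covariate distribution
for separable effects. Under the separable-effects assumptions (exchangeability,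
positivity, consistency, and the dismissible components conditions), for every
`k ∈ {1,…,K}`, every `x` with `P(X = x) > 0` and every `a_Y, a_D ∈ {0,1}`,
`P(X = x, D̄^{a_Y,a_D}_k = 0, Ȳ^{a_Y,a_D}_{k−1} = 0)
  = P(X = x)·(1 − h_D(k,x,a_D))·Π_{l=1}^{k−1} (1 − h_D(l,x,a_D))·(1 − h_Y(l,x,a_Y))`.
-/

open MeasureTheory ProbabilityTheory Finset
open scoped ENNReal

noncomputable section

namespace Stmt9

variable {Ω 𝓧 : Type*} [MeasurableSpace Ω] [MeasurableSpace 𝓧] [MeasurableSingletonClass 𝓧]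

/-- The event that the history `V̄_k = (V_1, …, V_k)` is identically zero; for `k = 0`
this is all of `Ω` (the convention `V̄_0 = 0`). -/
def allZero (V : ℕ → Ω → ℕ) (k : ℕ) : Set Ω :=
  {ω | ∀ l, 1 ≤ l → l ≤ k → V l ω = 0}

/-- Conditioning event of the main-event hazard `h_Y(k,x,a)`:
`{D̄_k = 0, Ȳ_{k−1} = 0, X = x, A = a}` (the competing event is resolved before the
main event within each interval). -/
def atRiskY (Y D : ℕ → Ω → ℕ) (X : Ω → 𝓧) (A : Ω → ℕ) (k : ℕ) (x : 𝓧) (a : ℕ) : Set Ω :=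
  allZero D k ∩ allZero Y (k - 1) ∩ {ω | X ω = x} ∩ {ω | A ω = a}

/-- Conditioning event of the competing-event hazard `h_D(k,x,a)`:
`{D̄_{k−1} = 0, Ȳ_{k−1} = 0, X = x, A = a}`. -/
def atRiskD (Y D : ℕ → Ω → ℕ) (X : Ω → 𝓧) (A : Ω → ℕ) (k : ℕ) (x : 𝓧) (a : ℕ) : Set Ω :=
  allZero D (k - 1) ∩ allZero Y (k - 1) ∩ {ω | X ω = x} ∩ {ω | A ω = a}

/-- Conditional hazard of the main event,
`h_Y(k,x,a) = P(Y_k = 1 | D̄_k = 0, Ȳ_{k−1} = 0, X = x, A = a)`. -/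
def hazY (μ : Measure Ω) (Y D : ℕ → Ω → ℕ) (X : Ω → 𝓧) (A : Ω → ℕ)
    (k : ℕ) (x : 𝓧) (a : ℕ) : ℝ≥0∞ :=
  μ[|atRiskY Y D X A k x a] {ω | Y k ω = 1}

/-- Conditional hazard of the competing event,
`h_D(k,x,a) = P(D_k = 1 | D̄_{k−1} = 0, Ȳ_{k−1} = 0, X = x, A = a)`. -/
def hazD (μ : Measure Ω) (Y D : ℕ → Ω → ℕ) (X : Ω → 𝓧) (A : Ω → ℕ)
    (k : ℕ) (x : 𝓧) (a : ℕ) : ℝ≥0∞ :=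
  μ[|atRiskD Y D X A k x a] {ω | D k ω = 1}

end Stmt9

/-!
Along the discrete history, the at-risk probability factorises by the chain rule into the
hazards of the counterfactual processes under `(a_Y, a_D)` within the stratum `{X = x}`; this
holds for any binary processes. The dismissible components conditions replace `(a_Y, a_D)` by
`(a_Y, a_Y)` in the main-event hazards and by `(a_D, a_D)` in the competing-event hazards. For
equal components `(b, b)`, exchangeability says that conditioning on `{X = x, A = b}` rather than
on `{X = x}` leaves the law of the whole counterfactual history unchanged, hence also every
conditional probability of history events; on `{A = b}` consistency identifies the
counterfactual history with the observed one, so these hazards are the observational ones.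
-/

namespace Stmt9

variable {Ω : Type*}

lemma apply_eq_apply_of_binary {α : Type*} {f : ℕ → α} (h : f 1 = f 0) {a b : ℕ}
    (ha : a = 0 ∨ a = 1) (hb : b = 0 ∨ b = 1) : f a = f b := by
  rcases ha with rfl | rfl <;> rcases hb with rfl | rfl <;> simp [h]

lemma allZero_zero (V : ℕ → Ω → ℕ) : allZero V 0 = Set.univ :=
  Set.eq_univ_of_forall fun _ l h1 h2 => absurd (h1.trans h2) (by omega)

lemma allZero_succ (V : ℕ → Ω → ℕ) (k : ℕ) :
    allZero V (k + 1) = allZero V k ∩ {ω | V (k + 1) ω = 0} := by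
  ext ω
  simp only [allZero, Set.mem_inter_iff, Set.mem_ofPred_eq]
  refine ⟨fun h => ⟨fun l h1 h2 => h l h1 (by omega), h (k + 1) (by omega) le_rfl⟩,
    fun ⟨h, hk⟩ l h1 h2 => ?_⟩
  rcases Nat.lt_or_eq_of_le h2 with h2 | rfl
  exacts [h l h1 (by omega), hk]

lemma setOf_eq_zero_eq_compl {V : Ω → ℕ} (hV : ∀ ω, V ω = 0 ∨ V ω = 1) :
    {ω | V ω = 0} = {ω | V ω = 1}ᶜ := by
  ext ω
  rcases hV ω with h | h <;> simp [h]

-- A point of a countable space, so that its law is determined by its atoms.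
def history (Ys Ds : ℕ → Ω → ℕ) (K : ℕ) (ω : Ω) : Icc 1 K → ℕ × ℕ :=
  fun j => (Ys j ω, Ds j ω)

lemma allZero_inter_allZero_eq_preimage_history {Ys Ds : ℕ → Ω → ℕ} {K k k' : ℕ}
    (hk : k ≤ K) (hk' : k' ≤ K) :
    allZero Ds k ∩ allZero Ys k' = history Ys Ds K ⁻¹'
      {z | ∀ j : Icc 1 K, ((j : ℕ) ≤ k → (z j).2 = 0) ∧ ((j : ℕ) ≤ k' → (z j).1 = 0)} := by
  ext ω
  simp only [allZero, history, Set.mem_inter_iff, Set.mem_ofPred_eq, Set.mem_preimage,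
    Subtype.forall, mem_Icc]
  exact ⟨fun ⟨hD, hY⟩ j hj => ⟨hD j hj.1, hY j hj.1⟩,
    fun h => ⟨fun j h1 h2 => (h j ⟨h1, by omega⟩).1 h2, fun j h1 h2 => (h j ⟨h1, by omega⟩).2 h2⟩⟩

variable [MeasurableSpace Ω]

lemma measurableSet_allZero {V : ℕ → Ω → ℕ} (hV : ∀ l, Measurable (V l)) (k : ℕ) :
    MeasurableSet (allZero V k) := by
  simp only [allZero, Set.ofPred_forall]
  exact .iInter fun l => .iInter fun _ => .iInter fun _ => hV l (measurableSet_singleton 0)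

def hazYOn (μ : Measure Ω) (Ys Ds : ℕ → Ω → ℕ) (C : Set Ω) (k : ℕ) : ℝ≥0∞ :=
  μ[|allZero Ds k ∩ allZero Ys (k - 1) ∩ C] {ω | Ys k ω = 1}

def hazDOn (μ : Measure Ω) (Ys Ds : ℕ → Ω → ℕ) (C : Set Ω) (k : ℕ) : ℝ≥0∞ :=
  μ[|allZero Ds (k - 1) ∩ allZero Ys (k - 1) ∩ C] {ω | Ds k ω = 1}

lemma measure_inter_compl_eq_mul_one_sub_cond {μ : Measure Ω} [IsFiniteMeasure μ] {C T : Set Ω}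
    (hC : MeasurableSet C) (hT : MeasurableSet T) :
    μ (C ∩ Tᶜ) = μ C * (1 - μ[|C] T) := by
  rw [← cond_mul_eq_inter hC, mul_comm]
  rcases eq_or_ne (μ C) 0 with h | h
  · simp [h]
  · have := cond_isProbabilityMeasure (μ := μ) h
    rw [prob_compl_eq_one_sub hT]

section ProductLimit

variable {μ : Measure Ω} [IsFiniteMeasure μ] {Ys Ds : ℕ → Ω → ℕ} {C : Set Ω}

lemma measure_allZero_succ_eq_mul_hazDOn (hYs : ∀ l, Measurable (Ys l))
    (hDs : ∀ l, Measurable (Ds l)) (hDbin : ∀ l ω, Ds l ω = 0 ∨ Ds l ω = 1)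
    (hC : MeasurableSet C) (k : ℕ) :
    μ (allZero Ds (k + 1) ∩ allZero Ys k ∩ C)
      = μ (allZero Ds k ∩ allZero Ys k ∩ C) * (1 - hazDOn μ Ys Ds C (k + 1)) := by
  have hset : allZero Ds (k + 1) ∩ allZero Ys k ∩ C
      = (allZero Ds k ∩ allZero Ys k ∩ C) ∩ {ω | Ds (k + 1) ω = 1}ᶜ := by
    rw [allZero_succ, ← setOf_eq_zero_eq_compl (hDbin (k + 1))]
    ext ω; simp only [Set.mem_inter_iff]; tauto
  rw [hset, measure_inter_compl_eq_mul_one_sub_cond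
    (T := {ω | Ds (k + 1) ω = 1})
    (((measurableSet_allZero hDs k).inter (measurableSet_allZero hYs k)).inter hC)
    (hDs (k + 1) (measurableSet_singleton 1)), hazDOn, Nat.add_sub_cancel]

lemma measure_allZero_succ_eq_mul_hazYOn (hYs : ∀ l, Measurable (Ys l))
    (hDs : ∀ l, Measurable (Ds l)) (hYbin : ∀ l ω, Ys l ω = 0 ∨ Ys l ω = 1)
    (hC : MeasurableSet C) (k : ℕ) :
    μ (allZero Ds (k + 1) ∩ allZero Ys (k + 1) ∩ C)
      = μ (allZero Ds (k + 1) ∩ allZero Ys k ∩ C) * (1 - hazYOn μ Ys Ds C (k + 1)) := by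
  have hset : allZero Ds (k + 1) ∩ allZero Ys (k + 1) ∩ C
      = (allZero Ds (k + 1) ∩ allZero Ys k ∩ C) ∩ {ω | Ys (k + 1) ω = 1}ᶜ := by
    rw [allZero_succ Ys, ← setOf_eq_zero_eq_compl (hYbin (k + 1))]
    ext ω; simp only [Set.mem_inter_iff]; tauto
  rw [hset, measure_inter_compl_eq_mul_one_sub_cond
    (T := {ω | Ys (k + 1) ω = 1})
    (((measurableSet_allZero hDs (k + 1)).inter (measurableSet_allZero hYs k)).inter hC)
    (hYs (k + 1) (measurableSet_singleton 1)), hazYOn, Nat.add_sub_cancel]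

lemma measure_allZero_eq_prod (hYs : ∀ l, Measurable (Ys l))
    (hDs : ∀ l, Measurable (Ds l)) (hYbin : ∀ l ω, Ys l ω = 0 ∨ Ys l ω = 1)
    (hDbin : ∀ l ω, Ds l ω = 0 ∨ Ds l ω = 1) (hC : MeasurableSet C) (k : ℕ) :
    μ (allZero Ds (k + 1) ∩ allZero Ys k ∩ C)
      = μ C * (1 - hazDOn μ Ys Ds C (k + 1))
          * ∏ l ∈ Icc 1 k, (1 - hazDOn μ Ys Ds C l) * (1 - hazYOn μ Ys Ds C l) := by
  induction k with
  | zero =>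
    rw [measure_allZero_succ_eq_mul_hazDOn hYs hDs hDbin hC, allZero_zero, allZero_zero,
      Set.univ_inter, Set.univ_inter, Icc_eq_empty (by omega), prod_empty, mul_one]
  | succ k ih =>
    rw [measure_allZero_succ_eq_mul_hazDOn hYs hDs hDbin hC,
      measure_allZero_succ_eq_mul_hazYOn hYs hDs hYbin hC, ih, prod_Icc_succ_top (by omega)]
    ring

end ProductLimit

lemma measurable_history {Ys Ds : ℕ → Ω → ℕ} (hYs : ∀ l, Measurable (Ys l))
    (hDs : ∀ l, Measurable (Ds l)) (K : ℕ) : Measurable (history Ys Ds K) :=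
  measurable_pi_lambda _ fun j => (hYs j).prodMk (hDs j)

lemma map_history_eq_of_forall_eq {ν₁ ν₂ : Measure Ω} {Ys Ds : ℕ → Ω → ℕ}
    (hYs : ∀ l, Measurable (Ys l)) (hDs : ∀ l, Measurable (Ds l)) {K : ℕ}
    (h : ∀ f g : ℕ → ℕ,
      ν₁ {ω | ∀ j, 1 ≤ j → j ≤ K → (Ys j ω = f j ∧ Ds j ω = g j)}
        = ν₂ {ω | ∀ j, 1 ≤ j → j ≤ K → (Ys j ω = f j ∧ Ds j ω = g j)}) :
    ν₁.map (history Ys Ds K) = ν₂.map (history Ys Ds K) := by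
  refine Measure.ext_of_singleton fun z => ?_
  have hz : history Ys Ds K ⁻¹' {z} = {ω | ∀ j, 1 ≤ j → j ≤ K →
      (Ys j ω = (if hj : j ∈ Icc 1 K then (z ⟨j, hj⟩).1 else 0) ∧
        Ds j ω = (if hj : j ∈ Icc 1 K then (z ⟨j, hj⟩).2 else 0))} := by
    ext ω
    simp +contextual [history, funext_iff, Prod.ext_iff]
  have hH := measurable_history hYs hDs K
  rw [Measure.map_apply hH (measurableSet_singleton z),
    Measure.map_apply hH (measurableSet_singleton z), hz]
  exact h _ _

lemma cond_preimage_eq_map_cond {β : Type*} [MeasurableSpace β] {ν : Measure Ω} {H : Ω → β}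
    (hH : Measurable H) {S T : Set β} (hS : MeasurableSet S) (hT : MeasurableSet T) :
    ν[|H ⁻¹' S] (H ⁻¹' T) = (ν.map H)[|S] T := by
  rw [cond_apply (hH hS), cond_apply hS, Measure.map_apply hH hS,
    Measure.map_apply hH (hS.inter hT), Set.preimage_inter]

lemma cond_preimage_inter_eq_of_map_cond_eq {β : Type*} [MeasurableSpace β] {μ : Measure Ω}
    [IsFiniteMeasure μ] {H : Ω → β} (hH : Measurable H) {s t : Set Ω} (hs : MeasurableSet s)
    (ht : MeasurableSet t) (hmap : (μ[|s]).map H = (μ[|t]).map H) {S T : Set β}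
    (hS : MeasurableSet S) (hT : MeasurableSet T) :
    μ[|H ⁻¹' S ∩ s] (H ⁻¹' T) = μ[|H ⁻¹' S ∩ t] (H ⁻¹' T) := by
  rw [Set.inter_comm _ s, Set.inter_comm _ t, ← cond_cond_eq_cond_inter hs (hH hS),
    ← cond_cond_eq_cond_inter ht (hH hS), cond_preimage_eq_map_cond hH hS hT,
    cond_preimage_eq_map_cond hH hS hT, hmap]

end Stmt9

namespace Stmt9

variable {Ω 𝓧 : Type*} [MeasurableSpace Ω] [MeasurableSpace 𝓧] [MeasurableSingletonClass 𝓧]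

section Identification

variable {μ : Measure Ω} [IsFiniteMeasure μ] {Y D Ys Ds : ℕ → Ω → ℕ} {X : Ω → 𝓧} {A : Ω → ℕ}
  {K k : ℕ} {x : 𝓧} {b : ℕ}

lemma hazY_eq_hazYOn (hX : Measurable X) (hA : Measurable A) (hYs : ∀ l, Measurable (Ys l))
    (hDs : ∀ l, Measurable (Ds l)) (hcons : ∀ l ω, A ω = b → Y l ω = Ys l ω ∧ D l ω = Ds l ω)
    (hmap : (μ[|{ω | X ω = x} ∩ {ω | A ω = b}]).map (history Ys Ds K)
      = (μ[|{ω | X ω = x}]).map (history Ys Ds K))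
    (hk1 : 1 ≤ k) (hkK : k ≤ K) :
    hazY μ Y D X A k x b = hazYOn μ Ys Ds {ω | X ω = x} k := by
  set s := allZero Ds k ∩ allZero Ys (k - 1) ∩ ({ω | X ω = x} ∩ {ω | A ω = b}) with hs_def
  have hs : MeasurableSet s := ((measurableSet_allZero hDs k).inter
    (measurableSet_allZero hYs (k - 1))).inter ((hX (measurableSet_singleton x)).inter
      (hA (measurableSet_singleton b)))
  have hrisk : atRiskY Y D X A k x b = s := by
    ext ω
    by_cases hω : A ω = b
    · simp [s, atRiskY, allZero, hω, fun l => (hcons l ω hω).1, fun l => (hcons l ω hω).2]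
    · simp [s, atRiskY, hω]
  have hevent : s ∩ {ω | Y k ω = 1} = s ∩ {ω | Ys k ω = 1} := by
    ext ω
    simp +contextual [s, hcons k ω]
  rw [hazY, hrisk, ← cond_inter_self hs, hevent, cond_inter_self hs, hazYOn, hs_def,
    allZero_inter_allZero_eq_preimage_history hkK (by omega)]
  exact cond_preimage_inter_eq_of_map_cond_eq (measurable_history hYs hDs K)
    ((hX (measurableSet_singleton x)).inter (hA (measurableSet_singleton b)))
    (hX (measurableSet_singleton x)) hmap .of_discrete
    (.of_discrete (s := {z | (z ⟨k, mem_Icc.2 ⟨hk1, hkK⟩⟩).1 = 1}))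

lemma hazD_eq_hazDOn (hX : Measurable X) (hA : Measurable A) (hYs : ∀ l, Measurable (Ys l))
    (hDs : ∀ l, Measurable (Ds l)) (hcons : ∀ l ω, A ω = b → Y l ω = Ys l ω ∧ D l ω = Ds l ω)
    (hmap : (μ[|{ω | X ω = x} ∩ {ω | A ω = b}]).map (history Ys Ds K)
      = (μ[|{ω | X ω = x}]).map (history Ys Ds K))
    (hk1 : 1 ≤ k) (hkK : k ≤ K) :
    hazD μ Y D X A k x b = hazDOn μ Ys Ds {ω | X ω = x} k := by
  set s := allZero Ds (k - 1) ∩ allZero Ys (k - 1) ∩ ({ω | X ω = x} ∩ {ω | A ω = b}) with hs_def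
  have hs : MeasurableSet s := ((measurableSet_allZero hDs (k - 1)).inter
    (measurableSet_allZero hYs (k - 1))).inter ((hX (measurableSet_singleton x)).inter
      (hA (measurableSet_singleton b)))
  have hrisk : atRiskD Y D X A k x b = s := by
    ext ω
    by_cases hω : A ω = b
    · simp [s, atRiskD, allZero, hω, fun l => (hcons l ω hω).1, fun l => (hcons l ω hω).2]
    · simp [s, atRiskD, hω]
  have hevent : s ∩ {ω | D k ω = 1} = s ∩ {ω | Ds k ω = 1} := by
    ext ω
    simp +contextual [s, hcons k ω]
  rw [hazD, hrisk, ← cond_inter_self hs, hevent, cond_inter_self hs, hazDOn, hs_def,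
    allZero_inter_allZero_eq_preimage_history (K := K) (k := k - 1) (k' := k - 1)
      (by omega) (by omega)]
  exact cond_preimage_inter_eq_of_map_cond_eq (measurable_history hYs hDs K)
    ((hX (measurableSet_singleton x)).inter (hA (measurableSet_singleton b)))
    (hX (measurableSet_singleton x)) hmap .of_discrete
    (.of_discrete (s := {z | (z ⟨k, mem_Icc.2 ⟨hk1, hkK⟩⟩).2 = 1}))

end Identification

theorem separable_effect_at_risk_identification_general
    (μ : Measure Ω) [IsProbabilityMeasure μ]
    (Y D : ℕ → Ω → ℕ) (X : Ω → 𝓧) (A : Ω → ℕ)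
    -- measurability of the random variables
    (hXm : Measurable X) (hAm : Measurable A)
    (K : ℕ)
    -- counterfactual indicators Y^{a_Y,a_D}_k, D^{a_Y,a_D}_k under the intervention
    -- do(A_Y = a_Y, A_D = a_D) on the two treatment components
    (Ysep Dsep : ℕ → ℕ → ℕ → Ω → ℕ)
    (hYsm : ∀ aY aD k, Measurable (Ysep aY aD k))
    (hDsm : ∀ aY aD k, Measurable (Dsep aY aD k))
    (hYsbin : ∀ aY aD k ω, Ysep aY aD k ω = 0 ∨ Ysep aY aD k ω = 1)
    (hDsbin : ∀ aY aD k ω, Dsep aY aD k ω = 0 ∨ Dsep aY aD k ω = 1)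
    -- (i) exchangeability: the family (Y^{a_Y,a_D}_k, D^{a_Y,a_D}_k)_{k ≤ K} is
    -- conditionally independent of A given X (stated through the atoms of the
    -- discrete counterfactual family)
    (hexchS : ∀ aY aD a' x, (aY = 0 ∨ aY = 1) → (aD = 0 ∨ aD = 1) → (a' = 0 ∨ a' = 1) →
      μ {ω | X ω = x} ≠ 0 → μ ({ω | X ω = x} ∩ {ω | A ω = a'}) ≠ 0 →
      ∀ f g : ℕ → ℕ,
        μ[|{ω | X ω = x} ∩ {ω | A ω = a'}]
            {ω | ∀ j, 1 ≤ j → j ≤ K → (Ysep aY aD j ω = f j ∧ Dsep aY aD j ω = g j)}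
          = μ[|{ω | X ω = x}]
              {ω | ∀ j, 1 ≤ j → j ≤ K → (Ysep aY aD j ω = f j ∧ Dsep aY aD j ω = g j)})
    -- (ii) positivity
    (hposA : ∀ x, μ {ω | X ω = x} ≠ 0 → ∀ a', (a' = 0 ∨ a' = 1) →
      μ ({ω | X ω = x} ∩ {ω | A ω = a'}) ≠ 0)
    -- (iii) consistency: Y_k = Y^{A,A}_k and D_k = D^{A,A}_k
    (hconsS : ∀ k ω, Y k ω = Ysep (A ω) (A ω) k ω ∧ D k ω = Dsep (A ω) (A ω) k ω)
    -- (iv) dismissible components conditions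
    (hdisY : ∀ aY k x, (aY = 0 ∨ aY = 1) → 1 ≤ k → k ≤ K →
      μ[|allZero (Dsep aY 1) k ∩ allZero (Ysep aY 1) (k - 1) ∩ {ω | X ω = x}]
          {ω | Ysep aY 1 k ω = 1}
        = μ[|allZero (Dsep aY 0) k ∩ allZero (Ysep aY 0) (k - 1) ∩ {ω | X ω = x}]
            {ω | Ysep aY 0 k ω = 1})
    (hdisD : ∀ aD k x, (aD = 0 ∨ aD = 1) → 1 ≤ k → k ≤ K →
      μ[|allZero (Dsep 1 aD) (k - 1) ∩ allZero (Ysep 1 aD) (k - 1) ∩ {ω | X ω = x}]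
          {ω | Dsep 1 aD k ω = 1}
        = μ[|allZero (Dsep 0 aD) (k - 1) ∩ allZero (Ysep 0 aD) (k - 1) ∩ {ω | X ω = x}]
            {ω | Dsep 0 aD k ω = 1})
    (k : ℕ) (hk1 : 1 ≤ k) (hkK : k ≤ K)
    (x : 𝓧) (hposX : μ {ω | X ω = x} ≠ 0)
    (aY aD : ℕ) (haY : aY = 0 ∨ aY = 1) (haD : aD = 0 ∨ aD = 1) :
    μ ({ω | X ω = x} ∩ allZero (Dsep aY aD) k ∩ allZero (Ysep aY aD) (k - 1))
      = μ {ω | X ω = x} * (1 - hazD μ Y D X A k x aD)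
          * ∏ l ∈ Icc 1 (k - 1),
              (1 - hazD μ Y D X A l x aD) * (1 - hazY μ Y D X A l x aY) := by
  have hcons : ∀ b l ω, A ω = b → Y l ω = Ysep b b l ω ∧ D l ω = Dsep b b l ω :=
    fun _ l ω hA => hA ▸ hconsS l ω
  have hmap : ∀ b, (b = 0 ∨ b = 1) →
      (μ[|{ω | X ω = x} ∩ {ω | A ω = b}]).map (history (Ysep b b) (Dsep b b) K)
        = (μ[|{ω | X ω = x}]).map (history (Ysep b b) (Dsep b b) K) := fun b hb =>
    map_history_eq_of_forall_eq (hYsm b b) (hDsm b b)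
      (hexchS b b b x hb hb hb hposX (hposA x hposX b hb))
  have hY : ∀ l, 1 ≤ l → l ≤ K →
      hazYOn μ (Ysep aY aD) (Dsep aY aD) {ω | X ω = x} l = hazY μ Y D X A l x aY :=
    fun l hl1 hlK => (apply_eq_apply_of_binary (f := fun aD => hazYOn μ (Ysep aY aD)
      (Dsep aY aD) {ω | X ω = x} l) (hdisY aY l x haY hl1 hlK) haD haY).trans
      (hazY_eq_hazYOn hXm hAm (hYsm aY aY) (hDsm aY aY) (hcons aY) (hmap aY haY) hl1 hlK).symm
  have hD : ∀ l, 1 ≤ l → l ≤ K →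
      hazDOn μ (Ysep aY aD) (Dsep aY aD) {ω | X ω = x} l = hazD μ Y D X A l x aD :=
    fun l hl1 hlK => (apply_eq_apply_of_binary (f := fun aY => hazDOn μ (Ysep aY aD)
      (Dsep aY aD) {ω | X ω = x} l) (hdisD aD l x haD hl1 hlK) haY haD).trans
      (hazD_eq_hazDOn hXm hAm (hYsm aD aD) (hDsm aD aD) (hcons aD) (hmap aD haD) hl1 hlK).symm
  obtain ⟨n, rfl⟩ : ∃ n, k = n + 1 := ⟨k - 1, by omega⟩
  rw [Nat.add_sub_cancel, Set.inter_assoc, Set.inter_comm,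
    measure_allZero_eq_prod (C := {ω | X ω = x}) (hYsm aY aD) (hDsm aY aD) (hYsbin aY aD)
      (hDsbin aY aD) (hXm (measurableSet_singleton x)), hD (n + 1) hk1 hkK]
  congr 1
  refine prod_congr rfl fun l hl => ?_
  obtain ⟨hl1, hln⟩ := mem_Icc.1 hl
  rw [hY l hl1 (by omega), hD l hl1 (by omega)]

theorem separable_effect_at_risk_identification
    (μ : Measure Ω) [IsProbabilityMeasure μ]
    (Y D : ℕ → Ω → ℕ) (X : Ω → 𝓧) (A : Ω → ℕ)
    -- measurability of the random variables
    (hXm : Measurable X) (hAm : Measurable A)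
    (hYm : ∀ k, Measurable (Y k)) (hDm : ∀ k, Measurable (D k))
    -- binary indicators, absorbing events, mutual exclusivity
    (hYbin : ∀ k ω, Y k ω = 0 ∨ Y k ω = 1) (hDbin : ∀ k ω, D k ω = 0 ∨ D k ω = 1)
    (hYmono : ∀ k ω, Y k ω ≤ Y (k + 1) ω) (hDmono : ∀ k ω, D k ω ≤ D (k + 1) ω)
    (hexcl : ∀ k ω, Y k ω * D k ω = 0)
    (hAbin : ∀ ω, A ω = 0 ∨ A ω = 1)
    (K : ℕ) (hK : 1 ≤ K)
    -- counterfactual indicators Y^{a_Y,a_D}_k, D^{a_Y,a_D}_k under the intervention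
    -- do(A_Y = a_Y, A_D = a_D) on the two treatment components
    (Ysep Dsep : ℕ → ℕ → ℕ → Ω → ℕ)
    (hYsm : ∀ aY aD k, Measurable (Ysep aY aD k))
    (hDsm : ∀ aY aD k, Measurable (Dsep aY aD k))
    (hYsbin : ∀ aY aD k ω, Ysep aY aD k ω = 0 ∨ Ysep aY aD k ω = 1)
    (hDsbin : ∀ aY aD k ω, Dsep aY aD k ω = 0 ∨ Dsep aY aD k ω = 1)
    (hYsmono : ∀ aY aD k ω, Ysep aY aD k ω ≤ Ysep aY aD (k + 1) ω)
    (hDsmono : ∀ aY aD k ω, Dsep aY aD k ω ≤ Dsep aY aD (k + 1) ω)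
    (hsexcl : ∀ aY aD k ω, Ysep aY aD k ω * Dsep aY aD k ω = 0)
    -- (i) exchangeability: the family (Y^{a_Y,a_D}_k, D^{a_Y,a_D}_k)_{k ≤ K} is
    -- conditionally independent of A given X (stated through the atoms of the
    -- discrete counterfactual family)
    (hexchS : ∀ aY aD a' x, (aY = 0 ∨ aY = 1) → (aD = 0 ∨ aD = 1) → (a' = 0 ∨ a' = 1) →
      μ {ω | X ω = x} ≠ 0 → μ ({ω | X ω = x} ∩ {ω | A ω = a'}) ≠ 0 →
      ∀ f g : ℕ → ℕ,
        μ[|{ω | X ω = x} ∩ {ω | A ω = a'}]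
            {ω | ∀ j, 1 ≤ j → j ≤ K → (Ysep aY aD j ω = f j ∧ Dsep aY aD j ω = g j)}
          = μ[|{ω | X ω = x}]
              {ω | ∀ j, 1 ≤ j → j ≤ K → (Ysep aY aD j ω = f j ∧ Dsep aY aD j ω = g j)})
    -- (ii) positivity
    (hposA : ∀ x, μ {ω | X ω = x} ≠ 0 → ∀ a', (a' = 0 ∨ a' = 1) →
      μ ({ω | X ω = x} ∩ {ω | A ω = a'}) ≠ 0)
    -- (iii) consistency: Y_k = Y^{A,A}_k and D_k = D^{A,A}_k
    (hconsS : ∀ k ω, Y k ω = Ysep (A ω) (A ω) k ω ∧ D k ω = Dsep (A ω) (A ω) k ω)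
    -- (iv) dismissible components conditions
    (hdisY : ∀ aY k x, (aY = 0 ∨ aY = 1) → 1 ≤ k → k ≤ K →
      μ[|allZero (Dsep aY 1) k ∩ allZero (Ysep aY 1) (k - 1) ∩ {ω | X ω = x}]
          {ω | Ysep aY 1 k ω = 1}
        = μ[|allZero (Dsep aY 0) k ∩ allZero (Ysep aY 0) (k - 1) ∩ {ω | X ω = x}]
            {ω | Ysep aY 0 k ω = 1})
    (hdisD : ∀ aD k x, (aD = 0 ∨ aD = 1) → 1 ≤ k → k ≤ K →
      μ[|allZero (Dsep 1 aD) (k - 1) ∩ allZero (Ysep 1 aD) (k - 1) ∩ {ω | X ω = x}]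
          {ω | Dsep 1 aD k ω = 1}
        = μ[|allZero (Dsep 0 aD) (k - 1) ∩ allZero (Ysep 0 aD) (k - 1) ∩ {ω | X ω = x}]
            {ω | Dsep 0 aD k ω = 1})
    -- positivity of all counterfactual conditioning events appearing above
    (hposSep : ∀ aY aD k x, (aY = 0 ∨ aY = 1) → (aD = 0 ∨ aD = 1) → 1 ≤ k → k ≤ K →
      μ {ω | X ω = x} ≠ 0 →
      μ (allZero (Dsep aY aD) k ∩ allZero (Ysep aY aD) (k - 1) ∩ {ω | X ω = x}) ≠ 0 ∧
        μ (allZero (Dsep aY aD) (k - 1) ∩ allZero (Ysep aY aD) (k - 1)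
            ∩ {ω | X ω = x}) ≠ 0)
    (k : ℕ) (hk1 : 1 ≤ k) (hkK : k ≤ K)
    (x : 𝓧) (hposX : μ {ω | X ω = x} ≠ 0)
    (aY aD : ℕ) (haY : aY = 0 ∨ aY = 1) (haD : aD = 0 ∨ aD = 1)
    -- positivity of the observational conditioning events of the hazards
    (hposY : ∀ l a, 1 ≤ l → l ≤ K → (a = 0 ∨ a = 1) →
      μ (atRiskY Y D X A l x a) ≠ 0)
    (hposD : ∀ l a, 1 ≤ l → l ≤ K → (a = 0 ∨ a = 1) →
      μ (atRiskD Y D X A l x a) ≠ 0) :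
    μ ({ω | X ω = x} ∩ allZero (Dsep aY aD) k ∩ allZero (Ysep aY aD) (k - 1))
      = μ {ω | X ω = x} * (1 - hazD μ Y D X A k x aD)
          * ∏ l ∈ Icc 1 (k - 1),
              (1 - hazD μ Y D X A l x aD) * (1 - hazY μ Y D X A l x aY) :=
  separable_effect_at_risk_identification_general μ Y D X A hXm hAm K Ysep Dsep hYsm hDsm hYsbin
    hDsbin hexchS hposA hconsS hdisY hdisD k hk1 hkK x hposX aY aD haY haD

end Stmt9
end
end

section
/- Importance weights for the total effect: under Assumption 1, fix k ∈ {1,…,K} and a ∈ {0,1}, and let p^{obs}_{a,k}(x) = P(X = x | Ȳ_{k−1} = 0, D̄_k = 0, A = a) and p^{int}_{a,k}(x) = P(X = x | Ȳ^a_{k−1} = 0, D̄^a_k = 0). Then there exists a constant c > 0, not depending on x, such that for every x with p^{obs}_{a,k}(x) > 0, p^{int}_{a,k}(x) / p^{obs}_{a,k}(x) = c / P(A = a | X = x). -/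
/-!
By consistency, on `{A = a}` the observed histories coincide with the counterfactual ones, so the
observational at-risk event is `C ∩ {A = a}`, where `C` is the interventional at-risk event. Since
`C` is a countable union of atoms of `(Y^a_j, D^a_j)_{j ≤ K}`, exchangeability yields
`P(C | X = x, A = a) = P(C | X = x)`, and Bayes' rule turns this into
`p^{int}_{a,k}(x) / p^{obs}_{a,k}(x) = P(A = a | C) / P(A = a | X = x)`; so `c = P(A = a | C)`.
-/

open MeasureTheory ProbabilityTheory Finset
open scoped ENNReal

noncomputable section

namespace Stmt10

variable {Ω 𝓧 : Type*} [MeasurableSpace Ω] [MeasurableSpace 𝓧] [MeasurableSingletonClass 𝓧]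

/-- The event that the history `V̄_k = (V_1, …, V_k)` is identically zero; for `k = 0`
this is all of `Ω` (the convention `V̄_0 = 0`). -/
def allZero (V : ℕ → Ω → ℕ) (k : ℕ) : Set Ω :=
  {ω | ∀ l, 1 ≤ l → l ≤ k → V l ω = 0}

/-- Conditioning event of the main-event hazard `h_Y(k,x,a)`:
`{D̄_k = 0, Ȳ_{k−1} = 0, X = x, A = a}` (the competing event is resolved before the
main event within each interval). -/
def atRiskY (Y D : ℕ → Ω → ℕ) (X : Ω → 𝓧) (A : Ω → ℕ) (k : ℕ) (x : 𝓧) (a : ℕ) : Set Ω :=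
  allZero D k ∩ allZero Y (k - 1) ∩ {ω | X ω = x} ∩ {ω | A ω = a}

/-- Conditioning event of the competing-event hazard `h_D(k,x,a)`:
`{D̄_{k−1} = 0, Ȳ_{k−1} = 0, X = x, A = a}`. -/
def atRiskD (Y D : ℕ → Ω → ℕ) (X : Ω → 𝓧) (A : Ω → ℕ) (k : ℕ) (x : 𝓧) (a : ℕ) : Set Ω :=
  allZero D (k - 1) ∩ allZero Y (k - 1) ∩ {ω | X ω = x} ∩ {ω | A ω = a}

/-- Conditional hazard of the main event,
`h_Y(k,x,a) = P(Y_k = 1 | D̄_k = 0, Ȳ_{k−1} = 0, X = x, A = a)`. -/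
def hazY (μ : Measure Ω) (Y D : ℕ → Ω → ℕ) (X : Ω → 𝓧) (A : Ω → ℕ)
    (k : ℕ) (x : 𝓧) (a : ℕ) : ℝ≥0∞ :=
  μ[|atRiskY Y D X A k x a] {ω | Y k ω = 1}

/-- Conditional hazard of the competing event,
`h_D(k,x,a) = P(D_k = 1 | D̄_{k−1} = 0, Ȳ_{k−1} = 0, X = x, A = a)`. -/
def hazD (μ : Measure Ω) (Y D : ℕ → Ω → ℕ) (X : Ω → 𝓧) (A : Ω → ℕ)
    (k : ℕ) (x : 𝓧) (a : ℕ) : ℝ≥0∞ :=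
  μ[|atRiskD Y D X A k x a] {ω | D k ω = 1}


lemma measurableSet_allZero {V : ℕ → Ω → ℕ} (hV : ∀ l, Measurable (V l)) (m : ℕ) :
    MeasurableSet (allZero V m) := by
  have hInter : allZero V m = ⋂ l ∈ Icc 1 m, V l ⁻¹' {0} := by
    ext ω
    simp [allZero, and_imp]
  rw [hInter]
  exact .biInter (Icc 1 m).countable_toSet fun l _ => hV l (measurableSet_singleton 0)

lemma allZero_inter_allZero_inter_congr {α : Type*} {Y D Y' D' : ℕ → α → ℕ} {S : Set α}
    (hY : ∀ ω ∈ S, ∀ l, Y l ω = Y' l ω) (hD : ∀ ω ∈ S, ∀ l, D l ω = D' l ω) (m n : ℕ) :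
    allZero Y m ∩ allZero D n ∩ S = allZero Y' m ∩ allZero D' n ∩ S := by
  ext ω
  by_cases hω : ω ∈ S
  · simp [allZero, hω, hY ω hω, hD ω hω]
  · simp [hω]

lemma eq_counterfactual_of_consistency {α : Type*} {V : ℕ → α → ℕ} {Vcf : ℕ → ℕ → α → ℕ}
    {A : α → ℕ} (hcons : ∀ l ω, V l ω = A ω * Vcf 1 l ω + (1 - A ω) * Vcf 0 l ω) {a : ℕ}
    (ha : a = 0 ∨ a = 1) {ω : α} (hω : A ω = a) (l : ℕ) : V l ω = Vcf a l ω := by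
  rcases ha with rfl | rfl <;> simp [hcons l ω, hω]

lemma measure_preimage_eq_of_forall_fiber {β : Type*} [Countable β] {ν₁ ν₂ : Measure Ω}
    {ψ : Ω → β} (hψ : ∀ b, MeasurableSet (ψ ⁻¹' {b}))
    (h : ∀ b, ν₁ (ψ ⁻¹' {b}) = ν₂ (ψ ⁻¹' {b})) (T : Set β) :
    ν₁ (ψ ⁻¹' T) = ν₂ (ψ ⁻¹' T) := by
  rw [← tsum_measure_preimage_singleton T.to_countable fun b _ => hψ b,
    ← tsum_measure_preimage_singleton T.to_countable fun b _ => hψ b]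
  exact tsum_congr fun b => h b

lemma measure_allZero_inter_allZero_eq_of_atoms {ν₁ ν₂ : Measure Ω} {U V : ℕ → Ω → ℕ}
    (hU : ∀ j, Measurable (U j)) (hV : ∀ j, Measurable (V j)) {K : ℕ}
    (h : ∀ f g : ℕ → ℕ, ν₁ {ω | ∀ j, 1 ≤ j → j ≤ K → U j ω = f j ∧ V j ω = g j}
      = ν₂ {ω | ∀ j, 1 ≤ j → j ≤ K → U j ω = f j ∧ V j ω = g j})
    {m n : ℕ} (hm : m ≤ K) (hn : n ≤ K) :
    ν₁ (allZero U m ∩ allZero V n) = ν₂ (allZero U m ∩ allZero V n) := by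
  -- the history on `1, …, K`: a countable range, and its fibres are the atoms of `h`
  let ψ : Ω → Icc 1 K → ℕ × ℕ := fun ω j => (U j ω, V j ω)
  have hψ : Measurable ψ := measurable_pi_lambda _ fun j => (hU j).prodMk (hV j)
  have hfiber (p : Icc 1 K → ℕ × ℕ) : ψ ⁻¹' {p} =
      {ω | ∀ j, 1 ≤ j → j ≤ K →
        U j ω = (if hj : j ∈ Icc 1 K then (p ⟨j, hj⟩).1 else 0) ∧
        V j ω = (if hj : j ∈ Icc 1 K then (p ⟨j, hj⟩).2 else 0)} := by
    ext ω
    simp +contextual [ψ, funext_iff, Prod.ext_iff]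
  have hcyl : allZero U m ∩ allZero V n =
      ψ ⁻¹' {p | ∀ j : Icc 1 K, ((j : ℕ) ≤ m → (p j).1 = 0) ∧ ((j : ℕ) ≤ n → (p j).2 = 0)} := by
    ext ω
    simp only [allZero, Set.mem_inter_iff, Set.mem_ofPred_eq, Subtype.forall, mem_Icc,
      forall_and_index, Set.preimage_ofPred_eq, ψ]
    exact ⟨fun ⟨hU0, hV0⟩ j hj _ => ⟨hU0 j hj, hV0 j hj⟩,
      fun h => ⟨fun l hl hlm => (h l hl (hlm.trans hm)).1 hlm,
        fun l hl hln => (h l hl (hln.trans hn)).2 hln⟩⟩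
  rw [hcyl]
  exact measure_preimage_eq_of_forall_fiber (fun p => hψ (measurableSet_singleton p))
    (fun p => by rw [hfiber]; exact h _ _) _

lemma measure_inter_ne_zero_of_cond_inter_ne_zero {μ : Measure Ω} {C S T : Set Ω}
    (hC : MeasurableSet C) (hS : MeasurableSet S) (h : μ[|C ∩ S] T ≠ 0) : μ (T ∩ S) ≠ 0 :=
  fun h0 => (inter_pos_of_cond_ne_zero (hC.inter hS) h).ne' <|
    measure_mono_null (fun ω (hω : ω ∈ C ∩ S ∩ T) => (⟨hω.2, hω.1.2⟩ : ω ∈ T ∩ S)) h0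

lemma cond_div_cond_inter_eq_cond_div_cond {μ : Measure Ω} [IsFiniteMeasure μ] {C S T : Set Ω}
    (hC : MeasurableSet C) (hS : MeasurableSet S) (hT : MeasurableSet T)
    (hindep : μ[|T ∩ S] C = μ[|T] C) (hpos : μ[|C ∩ S] T ≠ 0) :
    μ[|C] T / μ[|C ∩ S] T = μ[|C] S / μ[|T] S := by
  have hTS := measure_inter_ne_zero_of_cond_inter_ne_zero hC hS hpos
  have chain : μ[|C ∩ S] T * μ[|C] S = μ[|C] T * μ[|T] S :=
    calc μ[|C ∩ S] T * μ[|C] S = μ[|C] (S ∩ T) := by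
          rw [← cond_cond_eq_cond_inter hC hS, cond_mul_eq_inter hS]
      _ = (μ C)⁻¹ * (μ[|T ∩ S] C * μ (T ∩ S)) := by
          rw [cond_apply hC, cond_mul_eq_inter (hT.inter hS), Set.inter_comm S T, Set.inter_comm C]
      _ = (μ C)⁻¹ * (μ[|T] C * (μ[|T] S * μ T)) := by rw [hindep, cond_mul_eq_inter hT]
      _ = μ[|C] T * μ[|T] S := by rw [cond_eq_inv_mul_cond_mul hC hT]; ring
  rw [ENNReal.div_eq_div_iff (cond_pos_of_inter_ne_zero hT hTS).ne' (measure_ne_top _ _) hpos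
    (measure_ne_top _ _), chain, mul_comm]

theorem total_effect_importance_weights_general
    (μ : Measure Ω) [IsProbabilityMeasure μ]
    (Y D : ℕ → Ω → ℕ) (X : Ω → 𝓧) (A : Ω → ℕ)
    -- measurability of the random variables
    (hXm : Measurable X) (hAm : Measurable A)
    (K : ℕ)
    -- counterfactual indicators Y^a_k, D^a_k under the intervention do(A = a)
    (Ycf Dcf : ℕ → ℕ → Ω → ℕ)
    (hYcfm : ∀ a k, Measurable (Ycf a k)) (hDcfm : ∀ a k, Measurable (Dcf a k))
    -- Assumption 1 (i): exchangeability — the family (Y^a_1, D^a_1, …, Y^a_K, D^a_K)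
    -- is conditionally independent of A given X (stated through the atoms of the
    -- discrete counterfactual family)
    (hexch : ∀ a a' x, (a = 0 ∨ a = 1) → (a' = 0 ∨ a' = 1) →
      μ {ω | X ω = x} ≠ 0 → μ ({ω | X ω = x} ∩ {ω | A ω = a'}) ≠ 0 →
      ∀ f g : ℕ → ℕ,
        μ[|{ω | X ω = x} ∩ {ω | A ω = a'}]
            {ω | ∀ j, 1 ≤ j → j ≤ K → (Ycf a j ω = f j ∧ Dcf a j ω = g j)}
          = μ[|{ω | X ω = x}]
              {ω | ∀ j, 1 ≤ j → j ≤ K → (Ycf a j ω = f j ∧ Dcf a j ω = g j)})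
    -- Assumption 1 (iii): consistency
    (hconsY : ∀ k ω, Y k ω = A ω * Ycf 1 k ω + (1 - A ω) * Ycf 0 k ω)
    (hconsD : ∀ k ω, D k ω = A ω * Dcf 1 k ω + (1 - A ω) * Dcf 0 k ω)
    (k : ℕ) (hkK : k ≤ K) (a : ℕ) (ha : a = 0 ∨ a = 1)
    -- positivity of the observational and interventional at-risk events
    (hposObs : μ (allZero Y (k - 1) ∩ allZero D k ∩ {ω | A ω = a}) ≠ 0) :
    ∃ c : ℝ≥0∞, c ≠ 0 ∧ c ≠ ⊤ ∧
      ∀ x : 𝓧,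
        μ[|allZero Y (k - 1) ∩ allZero D k ∩ {ω | A ω = a}] {ω | X ω = x} ≠ 0 →
        μ[|allZero (Ycf a) (k - 1) ∩ allZero (Dcf a) k] {ω | X ω = x}
            / μ[|allZero Y (k - 1) ∩ allZero D k ∩ {ω | A ω = a}] {ω | X ω = x}
          = c / μ[|{ω | X ω = x}] {ω | A ω = a} := by
  set C := allZero (Ycf a) (k - 1) ∩ allZero (Dcf a) k
  have hobs : allZero Y (k - 1) ∩ allZero D k ∩ {ω | A ω = a} = C ∩ {ω | A ω = a} :=
    allZero_inter_allZero_inter_congr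
      (fun _ hω => eq_counterfactual_of_consistency hconsY ha hω)
      (fun _ hω => eq_counterfactual_of_consistency hconsD ha hω) _ _
  have hC : MeasurableSet C :=
    (measurableSet_allZero (hYcfm a) _).inter (measurableSet_allZero (hDcfm a) _)
  have hA : MeasurableSet {ω | A ω = a} := hAm (measurableSet_singleton a)
  rw [hobs] at hposObs ⊢
  refine ⟨μ[|C] {ω | A ω = a}, (cond_pos_of_inter_ne_zero hC hposObs).ne', measure_ne_top _ _,
    fun x hx => ?_⟩
  have hX : MeasurableSet {ω | X ω = x} := hXm (measurableSet_singleton x)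
  have hXA := measure_inter_ne_zero_of_cond_inter_ne_zero hC hA hx
  refine cond_div_cond_inter_eq_cond_div_cond hC hA hX ?_ hx
  exact measure_allZero_inter_allZero_eq_of_atoms (hYcfm a) (hDcfm a)
    (hexch a a x ha ha (fun h0 => hXA (measure_mono_null Set.inter_subset_left h0)) hXA)
    ((k.sub_le 1).trans hkK) hkK

theorem total_effect_importance_weights
    [Countable 𝓧]
    (μ : Measure Ω) [IsProbabilityMeasure μ]
    (Y D : ℕ → Ω → ℕ) (X : Ω → 𝓧) (A : Ω → ℕ)
    -- measurability of the random variables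
    (hXm : Measurable X) (hAm : Measurable A)
    (hYm : ∀ k, Measurable (Y k)) (hDm : ∀ k, Measurable (D k))
    -- binary indicators, absorbing events, mutual exclusivity
    (hYbin : ∀ k ω, Y k ω = 0 ∨ Y k ω = 1) (hDbin : ∀ k ω, D k ω = 0 ∨ D k ω = 1)
    (hYmono : ∀ k ω, Y k ω ≤ Y (k + 1) ω) (hDmono : ∀ k ω, D k ω ≤ D (k + 1) ω)
    (hexcl : ∀ k ω, Y k ω * D k ω = 0)
    (hAbin : ∀ ω, A ω = 0 ∨ A ω = 1)
    (K : ℕ) (hK : 1 ≤ K)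
    -- counterfactual indicators Y^a_k, D^a_k under the intervention do(A = a)
    (Ycf Dcf : ℕ → ℕ → Ω → ℕ)
    (hYcfm : ∀ a k, Measurable (Ycf a k)) (hDcfm : ∀ a k, Measurable (Dcf a k))
    (hYcfbin : ∀ a k ω, Ycf a k ω = 0 ∨ Ycf a k ω = 1)
    (hDcfbin : ∀ a k ω, Dcf a k ω = 0 ∨ Dcf a k ω = 1)
    (hYcfmono : ∀ a k ω, Ycf a k ω ≤ Ycf a (k + 1) ω)
    (hDcfmono : ∀ a k ω, Dcf a k ω ≤ Dcf a (k + 1) ω)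
    (hcfexcl : ∀ a k ω, Ycf a k ω * Dcf a k ω = 0)
    -- Assumption 1 (i): exchangeability — the family (Y^a_1, D^a_1, …, Y^a_K, D^a_K)
    -- is conditionally independent of A given X (stated through the atoms of the
    -- discrete counterfactual family)
    (hexch : ∀ a a' x, (a = 0 ∨ a = 1) → (a' = 0 ∨ a' = 1) →
      μ {ω | X ω = x} ≠ 0 → μ ({ω | X ω = x} ∩ {ω | A ω = a'}) ≠ 0 →
      ∀ f g : ℕ → ℕ,
        μ[|{ω | X ω = x} ∩ {ω | A ω = a'}]
            {ω | ∀ j, 1 ≤ j → j ≤ K → (Ycf a j ω = f j ∧ Dcf a j ω = g j)}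
          = μ[|{ω | X ω = x}]
              {ω | ∀ j, 1 ≤ j → j ≤ K → (Ycf a j ω = f j ∧ Dcf a j ω = g j)})
    -- Assumption 1 (ii): positivity
    (hposA : ∀ x, μ {ω | X ω = x} ≠ 0 → ∀ a', (a' = 0 ∨ a' = 1) →
      μ ({ω | X ω = x} ∩ {ω | A ω = a'}) ≠ 0)
    -- Assumption 1 (iii): consistency
    (hconsY : ∀ k ω, Y k ω = A ω * Ycf 1 k ω + (1 - A ω) * Ycf 0 k ω)
    (hconsD : ∀ k ω, D k ω = A ω * Dcf 1 k ω + (1 - A ω) * Dcf 0 k ω)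
    (k : ℕ) (hk1 : 1 ≤ k) (hkK : k ≤ K) (a : ℕ) (ha : a = 0 ∨ a = 1)
    -- positivity of the observational and interventional at-risk events
    (hposObs : μ (allZero Y (k - 1) ∩ allZero D k ∩ {ω | A ω = a}) ≠ 0)
    (hposInt : μ (allZero (Ycf a) (k - 1) ∩ allZero (Dcf a) k) ≠ 0) :
    ∃ c : ℝ≥0∞, c ≠ 0 ∧ c ≠ ⊤ ∧
      ∀ x : 𝓧,
        μ[|allZero Y (k - 1) ∩ allZero D k ∩ {ω | A ω = a}] {ω | X ω = x} ≠ 0 →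
        μ[|allZero (Ycf a) (k - 1) ∩ allZero (Dcf a) k] {ω | X ω = x}
            / μ[|allZero Y (k - 1) ∩ allZero D k ∩ {ω | A ω = a}] {ω | X ω = x}
          = c / μ[|{ω | X ω = x}] {ω | A ω = a} :=
  total_effect_importance_weights_general μ Y D X A hXm hAm K Ycf Dcf hYcfm hDcfm hexch hconsY
    hconsD k hkK a ha hposObs

end Stmt10
end
end

section
/- Importance weights for the direct effect: under Assumptions 1 and 2, fix k ∈ {1,…,K} and a ∈ {0,1}, and let p^{obs}_{a,k}(x) = P(X = x | Ȳ_{k−1} = 0, D̄_k = 0, A = a) and p^{int}_{a,k}(x) = P(X = x | Ȳ^{a,d̄=0}_{k−1} = 0). Assume h_D(l,x,a) < 1 for all l ≤ k. Then there exists a constant c > 0, not depending on x, such that for every x with p^{obs}_{a,k}(x) > 0, p^{int}_{a,k}(x) / p^{obs}_{a,k}(x) = c / [P(A = a | X = x) · Π_{l=1}^{k} (1 − h_D(l,x,a))]. -/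
/-!
STATEMENT 11: Importance weights for the direct effect. Under Assumptions 1 and 2,
fix `k ∈ {1,…,K}` and `a ∈ {0,1}`, and let
`p^{obs}_{a,k}(x) = P(X = x | Ȳ_{k−1} = 0, D̄_k = 0, A = a)` and
`p^{int}_{a,k}(x) = P(X = x | Ȳ^{a,d̄=0}_{k−1} = 0)`.
Assume `h_D(l,x,a) < 1` for all `l ≤ k`. Then there exists a constant `c > 0`
(finite, not depending on `x`) such that for every `x` with `p^{obs}_{a,k}(x) > 0`,
`p^{int}_{a,k}(x) / p^{obs}_{a,k}(x)
   = c / [P(A = a | X = x) · Π_{l=1}^{k} (1 − h_D(l,x,a))]`.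
-/

open MeasureTheory ProbabilityTheory Finset
open scoped ENNReal

noncomputable section

namespace Stmt11

variable {Ω 𝓧 : Type*} [MeasurableSpace Ω] [MeasurableSpace 𝓧] [MeasurableSingletonClass 𝓧]

/-- The event that the history `V̄_k = (V_1, …, V_k)` is identically zero; for `k = 0`
this is all of `Ω` (the convention `V̄_0 = 0`). -/
def allZero (V : ℕ → Ω → ℕ) (k : ℕ) : Set Ω :=
  {ω | ∀ l, 1 ≤ l → l ≤ k → V l ω = 0}

/-- Conditioning event of the main-event hazard `h_Y(k,x,a)`:
`{D̄_k = 0, Ȳ_{k−1} = 0, X = x, A = a}` (the competing event is resolved before the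
main event within each interval). -/
def atRiskY (Y D : ℕ → Ω → ℕ) (X : Ω → 𝓧) (A : Ω → ℕ) (k : ℕ) (x : 𝓧) (a : ℕ) : Set Ω :=
  allZero D k ∩ allZero Y (k - 1) ∩ {ω | X ω = x} ∩ {ω | A ω = a}

/-- Conditioning event of the competing-event hazard `h_D(k,x,a)`:
`{D̄_{k−1} = 0, Ȳ_{k−1} = 0, X = x, A = a}`. -/
def atRiskD (Y D : ℕ → Ω → ℕ) (X : Ω → 𝓧) (A : Ω → ℕ) (k : ℕ) (x : 𝓧) (a : ℕ) : Set Ω :=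
  allZero D (k - 1) ∩ allZero Y (k - 1) ∩ {ω | X ω = x} ∩ {ω | A ω = a}

/-- Conditional hazard of the main event,
`h_Y(k,x,a) = P(Y_k = 1 | D̄_k = 0, Ȳ_{k−1} = 0, X = x, A = a)`. -/
def hazY (μ : Measure Ω) (Y D : ℕ → Ω → ℕ) (X : Ω → 𝓧) (A : Ω → ℕ)
    (k : ℕ) (x : 𝓧) (a : ℕ) : ℝ≥0∞ :=
  μ[|atRiskY Y D X A k x a] {ω | Y k ω = 1}

/-- Conditional hazard of the competing event,
`h_D(k,x,a) = P(D_k = 1 | D̄_{k−1} = 0, Ȳ_{k−1} = 0, X = x, A = a)`. -/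
def hazD (μ : Measure Ω) (Y D : ℕ → Ω → ℕ) (X : Ω → 𝓧) (A : Ω → ℕ)
    (k : ℕ) (x : 𝓧) (a : ℕ) : ℝ≥0∞ :=
  μ[|atRiskD Y D X A k x a] {ω | D k ω = 1}


/-!
At a fixed covariate value `x`, write `R_m = {X = x, A = a, Ȳ_m = 0, D̄_m = 0}`. Peeling off one
interval at a time with the definition of the hazards gives
`P(R_{k-1}, D_k = 0) = P(X = x, A = a) · ∏_{l ≤ k} (1 - h_D(l)) · ∏_{l < k} (1 - h_Y(l))`,
which is `P(obs) · p^obs(x)`. On the interventional side, exchangeability with respect to `A`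
adds the conditioning on `A = a`, and then, backwards in time, sequential exchangeability and
consistency turn each counterfactual survival step into an observed one (the g-formula), so that
`P(X = x, Ȳ^{a,d̄=0}_{k-1} = 0) = P(X = x) · ∏_{l < k} (1 - h_Y(l))`, which is `P(int) · p^int(x)`.
In the ratio the `h_Y` products cancel, leaving `c = P(obs) / P(int)`. Every conditioning event
met along the way contains `{R_{k-1}, D_k = 0}`, which has positive probability as soon as
`p^obs(x) > 0`.
-/

lemma measurableSet_setOf_eq {β : Type*} [MeasurableSpace β] [MeasurableSingletonClass β]
    {f : Ω → β} (hf : Measurable f) (b : β) : MeasurableSet {ω | f ω = b} :=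
  hf (measurableSet_singleton b)

lemma cond_compl_eq_one_sub {μ : Measure Ω} [IsFiniteMeasure μ] {s t : Set Ω} (hs : μ s ≠ 0)
    (ht : MeasurableSet t) : μ[tᶜ|s] = 1 - μ[t|s] :=
  have := cond_isProbabilityMeasure hs
  prob_compl_eq_one_sub ht

lemma measure_inter_compl_eq_mul_one_sub_cond {μ : Measure Ω} [IsFiniteMeasure μ] {s t : Set Ω}
    (hs : MeasurableSet s) (ht : MeasurableSet t) : μ (s ∩ tᶜ) = μ s * (1 - μ[t|s]) := by
  rcases eq_or_ne (μ s) 0 with h | h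
  · simp [h, measure_inter_null_of_null_left]
  · rw [← cond_mul_eq_inter hs, cond_compl_eq_one_sub h ht, mul_comm]

lemma cond_inter_eq_cond_inter_mul_cond {μ : Measure Ω} [IsFiniteMeasure μ] {s u : Set Ω}
    (hu : MeasurableSet u) (hs : MeasurableSet s) (t : Set Ω) :
    μ[s ∩ t|u] = μ[t|u ∩ s] * μ[s|u] := by
  rw [← cond_cond_eq_cond_inter hu hs, cond_mul_eq_inter hs]

omit [MeasurableSpace Ω] in
lemma setOf_eq_zero_eq_compl {V : Ω → ℕ} (hbin : ∀ ω, V ω = 0 ∨ V ω = 1) :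
    {ω | V ω = 0} = {ω | V ω = 1}ᶜ := by
  ext ω
  have := hbin ω
  simp only [Set.mem_ofPred_eq, Set.mem_compl_iff]
  omega

/-- `allZero V k` is `historyEq V 1 k 0` by definition; the atoms in the exchangeability
assumptions are the sets `historyEq V b K f`. -/
def historyEq (V : ℕ → Ω → ℕ) (b e : ℕ) (f : ℕ → ℕ) : Set Ω :=
  {ω | ∀ l, b ≤ l → l ≤ e → V l ω = f l}

lemma measurableSet_historyEq {V : ℕ → Ω → ℕ} (hV : ∀ l, Measurable (V l)) (b e : ℕ)
    (f : ℕ → ℕ) : MeasurableSet (historyEq V b e f) := by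
  simp only [historyEq, Set.ofPred_forall]
  exact .iInter fun l => .iInter fun _ => .iInter fun _ => measurableSet_setOf_eq (hV l) _

lemma measurableSet_allZero {V : ℕ → Ω → ℕ} (hV : ∀ l, Measurable (V l)) (m : ℕ) :
    MeasurableSet (allZero V m) :=
  measurableSet_historyEq hV 1 m 0

omit [MeasurableSpace Ω] in
lemma historyEq_zero_eq_inter (V : ℕ → Ω → ℕ) {b e : ℕ} (hbe : b ≤ e) :
    historyEq V b e 0 = {ω | V b ω = 0} ∩ historyEq V (b + 1) e 0 := by
  ext ω
  simp only [historyEq, Pi.zero_apply, Set.mem_inter_iff, Set.mem_ofPred_eq]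
  refine ⟨fun h => ⟨h b le_rfl hbe, fun l hl hle => h l (by omega) hle⟩, ?_⟩
  rintro ⟨hb, h⟩ l hl hle
  rcases hl.eq_or_lt with rfl | hl
  · exact hb
  · exact h l hl hle

omit [MeasurableSpace Ω] in
lemma allZero_succ (V : ℕ → Ω → ℕ) (m : ℕ) :
    allZero V (m + 1) = allZero V m ∩ {ω | V (m + 1) ω = 0} := by
  ext ω
  simp only [allZero, Set.mem_inter_iff, Set.mem_ofPred_eq]
  refine ⟨fun h => ⟨fun l hl hle => h l hl (by omega), h (m + 1) (by omega) le_rfl⟩, ?_⟩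
  rintro ⟨h, hm⟩ l hl hle
  rcases hle.eq_or_lt with rfl | hle
  · exact hm
  · exact h l hl (by omega)

section MonotoneBinary

variable {V : ℕ → Ω → ℕ}

omit [MeasurableSpace Ω] in
/-- A nondecreasing `{0,1}`-valued path is determined on `[b, K]` by its jump time `t`, so the
event that it vanishes on `[b, e]` is the disjoint union of the paths jumping in `(e, K + 1]`. -/
lemma historyEq_zero_eq_biUnion_jump (hmono : ∀ l ω, V l ω ≤ V (l + 1) ω)
    (hbin : ∀ l ω, V l ω = 0 ∨ V l ω = 1) {b e K : ℕ} (hb : b ≤ e + 1) (he : e ≤ K) :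
    historyEq V b e 0 =
      ⋃ t ∈ Icc (e + 1) (K + 1), historyEq V b K fun l => if t ≤ l then 1 else 0 := by
  classical
  ext ω
  simp only [historyEq, Pi.zero_apply, Set.mem_ofPred_eq, Set.mem_iUnion, Finset.mem_Icc,
    exists_prop]
  constructor
  · intro hzero
    have hex : ∃ t, b ≤ t ∧ (t ≤ K → V t ω = 1) := ⟨K + 1, by omega, by omega⟩
    have hjump : V (Nat.find hex) ω = 1 ∨ K < Nat.find hex := by
      have := (Nat.find_spec hex).2
      omega
    refine ⟨Nat.find hex, ⟨?_, Nat.find_min' hex ⟨by omega, by omega⟩⟩, fun l hbl hlK => ?_⟩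
    · by_contra! hlt
      have := hzero _ (Nat.find_spec hex).1 (by omega)
      omega
    · have := hbin l ω
      split_ifs with htl
      · have := monotone_nat_of_le_succ (hmono · ω) htl
        omega
      · have := Nat.find_min hex (not_le.mp htl)
        omega
  · rintro ⟨t, ⟨ht, -⟩, hpath⟩ l hbl hle
    simpa [show ¬t ≤ l by omega] using hpath l hbl (by omega)

lemma measure_historyEq_zero_eq (hVm : ∀ l, Measurable (V l))
    (hmono : ∀ l ω, V l ω ≤ V (l + 1) ω) (hbin : ∀ l ω, V l ω = 0 ∨ V l ω = 1)
    {b e K : ℕ} (hb : b ≤ e + 1) (he : e ≤ K) {ν₁ ν₂ : Measure Ω}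
    (h : ∀ f, ν₁ (historyEq V b K f) = ν₂ (historyEq V b K f)) :
    ν₁ (historyEq V b e 0) = ν₂ (historyEq V b e 0) := by
  have hdisj : (↑(Icc (e + 1) (K + 1)) : Set ℕ).PairwiseDisjoint
      fun t => historyEq V b K fun l => if t ≤ l then 1 else 0 := by
    intro s hs t ht hst
    simp only [coe_Icc, Set.mem_Icc] at hs ht
    refine Set.disjoint_left.2 fun ω hωs hωt => hst ?_
    have hs' := hωs (min s t) (by omega) (by omega)
    have ht' := hωt (min s t) (by omega) (by omega)
    simp only at hs' ht'
    split_ifs at hs' ht' <;> omega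
  rw [historyEq_zero_eq_biUnion_jump hmono hbin hb he,
    measure_biUnion_finset hdisj fun t _ => measurableSet_historyEq hVm _ _ _,
    measure_biUnion_finset hdisj fun t _ => measurableSet_historyEq hVm _ _ _]
  exact sum_congr rfl fun t _ => h _

end MonotoneBinary

def riskSet (Y D : ℕ → Ω → ℕ) (X : Ω → 𝓧) (A : Ω → ℕ) (x : 𝓧) (a m : ℕ) : Set Ω :=
  {ω | X ω = x} ∩ {ω | A ω = a} ∩ allZero Y m ∩ allZero D m

section RiskSet

variable {μ : Measure Ω} [IsFiniteMeasure μ] {Y D : ℕ → Ω → ℕ} {X : Ω → 𝓧} {A : Ω → ℕ}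
  {x : 𝓧} {a : ℕ}

omit [MeasurableSpace Ω] [MeasurableSpace 𝓧] [MeasurableSingletonClass 𝓧] in
lemma riskSet_zero : riskSet Y D X A x a 0 = {ω | X ω = x} ∩ {ω | A ω = a} := by
  ext ω
  simp only [riskSet, allZero, Set.mem_inter_iff, Set.mem_ofPred_eq]
  exact ⟨fun h => h.1.1, fun h => ⟨⟨h, fun l hl hle => by omega⟩, fun l hl hle => by omega⟩⟩

omit [MeasurableSpace Ω] [MeasurableSpace 𝓧] [MeasurableSingletonClass 𝓧] in
lemma riskSet_succ (m : ℕ) :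
    riskSet Y D X A x a (m + 1)
      = riskSet Y D X A x a m ∩ {ω | D (m + 1) ω = 0} ∩ {ω | Y (m + 1) ω = 0} := by
  simp only [riskSet, allZero_succ]
  ext ω
  simp only [Set.mem_inter_iff]
  tauto

omit [MeasurableSpace Ω] [MeasurableSpace 𝓧] [MeasurableSingletonClass 𝓧] in
lemma riskSet_antitone : Antitone (riskSet Y D X A x a) :=
  antitone_nat_of_succ_le fun m => by
    rw [riskSet_succ]
    exact Set.inter_subset_left.trans Set.inter_subset_left

omit [MeasurableSpace Ω] [MeasurableSpace 𝓧] [MeasurableSingletonClass 𝓧] in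
lemma atRiskD_succ (m : ℕ) : atRiskD Y D X A (m + 1) x a = riskSet Y D X A x a m := by
  simp only [atRiskD, riskSet, Nat.add_sub_cancel]
  ext ω
  simp only [Set.mem_inter_iff]
  tauto

omit [MeasurableSpace Ω] [MeasurableSpace 𝓧] [MeasurableSingletonClass 𝓧] in
lemma atRiskY_succ (m : ℕ) :
    atRiskY Y D X A (m + 1) x a = riskSet Y D X A x a m ∩ {ω | D (m + 1) ω = 0} := by
  simp only [atRiskY, riskSet, Nat.add_sub_cancel, allZero_succ]
  ext ω
  simp only [Set.mem_inter_iff]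
  tauto

omit [MeasurableSpace Ω] [MeasurableSpace 𝓧] [MeasurableSingletonClass 𝓧] in
lemma allZero_inter_allZero_succ_inter_eq (m : ℕ) :
    allZero Y m ∩ allZero D (m + 1) ∩ {ω | A ω = a} ∩ {ω | X ω = x}
      = riskSet Y D X A x a m ∩ {ω | D (m + 1) ω = 0} := by
  simp only [riskSet, allZero_succ]
  ext ω
  simp only [Set.mem_inter_iff]
  tauto

lemma measurableSet_riskSet (hX : Measurable X) (hA : Measurable A)
    (hY : ∀ l, Measurable (Y l)) (hD : ∀ l, Measurable (D l)) (m : ℕ) :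
    MeasurableSet (riskSet Y D X A x a m) :=
  (((measurableSet_setOf_eq hX x).inter (measurableSet_setOf_eq hA a)).inter
    (measurableSet_allZero hY m)).inter (measurableSet_allZero hD m)

lemma measurableSet_riskSet_inter (hX : Measurable X) (hA : Measurable A)
    (hY : ∀ l, Measurable (Y l)) (hD : ∀ l, Measurable (D l)) (m : ℕ) :
    MeasurableSet (riskSet Y D X A x a m ∩ {ω | D (m + 1) ω = 0}) :=
  (measurableSet_riskSet hX hA hY hD m).inter (measurableSet_setOf_eq (hD (m + 1)) 0)

lemma measure_riskSet_inter_eq (hX : Measurable X) (hA : Measurable A)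
    (hY : ∀ l, Measurable (Y l)) (hD : ∀ l, Measurable (D l))
    (hDbin : ∀ l ω, D l ω = 0 ∨ D l ω = 1) (m : ℕ) :
    μ (riskSet Y D X A x a m ∩ {ω | D (m + 1) ω = 0})
      = μ (riskSet Y D X A x a m) * (1 - hazD μ Y D X A (m + 1) x a) := by
  rw [setOf_eq_zero_eq_compl (hDbin (m + 1)), measure_inter_compl_eq_mul_one_sub_cond
    (measurableSet_riskSet hX hA hY hD m) (measurableSet_setOf_eq (hD (m + 1)) 1), hazD,
    atRiskD_succ]

lemma measure_riskSet_succ (hX : Measurable X) (hA : Measurable A)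
    (hY : ∀ l, Measurable (Y l)) (hD : ∀ l, Measurable (D l))
    (hYbin : ∀ l ω, Y l ω = 0 ∨ Y l ω = 1) (m : ℕ) :
    μ (riskSet Y D X A x a (m + 1))
      = μ (riskSet Y D X A x a m ∩ {ω | D (m + 1) ω = 0}) * (1 - hazY μ Y D X A (m + 1) x a) := by
  rw [riskSet_succ, setOf_eq_zero_eq_compl (hYbin (m + 1)), measure_inter_compl_eq_mul_one_sub_cond
    (measurableSet_riskSet_inter hX hA hY hD m) (measurableSet_setOf_eq (hY (m + 1)) 1), hazY,
    atRiskY_succ]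

omit [MeasurableSpace 𝓧] [MeasurableSingletonClass 𝓧] in
lemma cond_riskSet_inter_setOf_eq_zero (hY : ∀ l, Measurable (Y l))
    (hYbin : ∀ l ω, Y l ω = 0 ∨ Y l ω = 1) {m : ℕ}
    (hpos : μ (riskSet Y D X A x a m ∩ {ω | D (m + 1) ω = 0}) ≠ 0) :
    μ[{ω | Y (m + 1) ω = 0} | riskSet Y D X A x a m ∩ {ω | D (m + 1) ω = 0}]
      = 1 - hazY μ Y D X A (m + 1) x a := by
  rw [setOf_eq_zero_eq_compl (hYbin (m + 1)),
    cond_compl_eq_one_sub hpos (measurableSet_setOf_eq (hY (m + 1)) 1), hazY, atRiskY_succ]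

lemma measure_riskSet (hX : Measurable X) (hA : Measurable A)
    (hY : ∀ l, Measurable (Y l)) (hD : ∀ l, Measurable (D l))
    (hYbin : ∀ l ω, Y l ω = 0 ∨ Y l ω = 1) (hDbin : ∀ l ω, D l ω = 0 ∨ D l ω = 1) (m : ℕ) :
    μ (riskSet Y D X A x a m) = μ ({ω | X ω = x} ∩ {ω | A ω = a})
      * (∏ l ∈ Icc 1 m, (1 - hazD μ Y D X A l x a))
      * ∏ l ∈ Icc 1 m, (1 - hazY μ Y D X A l x a) := by
  induction m with
  | zero => simp [riskSet_zero]
  | succ m ih =>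
    rw [measure_riskSet_succ hX hA hY hD hYbin, measure_riskSet_inter_eq hX hA hY hD hDbin, ih,
      prod_Icc_succ_top (by omega), prod_Icc_succ_top (by omega)]
    ring

lemma measure_riskSet_inter_eq_prod (hX : Measurable X) (hA : Measurable A)
    (hY : ∀ l, Measurable (Y l)) (hD : ∀ l, Measurable (D l))
    (hYbin : ∀ l ω, Y l ω = 0 ∨ Y l ω = 1) (hDbin : ∀ l ω, D l ω = 0 ∨ D l ω = 1) (m : ℕ) :
    μ (riskSet Y D X A x a m ∩ {ω | D (m + 1) ω = 0}) = μ ({ω | X ω = x} ∩ {ω | A ω = a})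
      * (∏ l ∈ Icc 1 (m + 1), (1 - hazD μ Y D X A l x a))
      * ∏ l ∈ Icc 1 m, (1 - hazY μ Y D X A l x a) := by
  rw [measure_riskSet_inter_eq hX hA hY hD hDbin, measure_riskSet hX hA hY hD hYbin hDbin,
    prod_Icc_succ_top (by omega)]
  ring

end RiskSet

section GFormula

variable {μ : Measure Ω} [IsFiniteMeasure μ] {Y D V : ℕ → Ω → ℕ} {X : Ω → 𝓧} {A : Ω → ℕ}
  {x : 𝓧} {a e K : ℕ}

/-- The g-formula. Backwards in time, sequential exchangeability removes the conditioning on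
`D_{m+1} = 0`, after which consistency replaces the counterfactual `V_{m+1}` by the observed
`Y_{m+1}`, whose conditional survival probability is `1 - h_Y(m+1)`. -/
lemma cond_riskSet_historyEq_zero_eq_prod (hX : Measurable X) (hA : Measurable A)
    (hY : ∀ l, Measurable (Y l)) (hD : ∀ l, Measurable (D l))
    (hYbin : ∀ l ω, Y l ω = 0 ∨ Y l ω = 1) (hVm : ∀ l, Measurable (V l))
    (hVmono : ∀ l ω, V l ω ≤ V (l + 1) ω) (hVbin : ∀ l ω, V l ω = 0 ∨ V l ω = 1) (he : e ≤ K)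
    (hcons : ∀ m < e, ∀ ω, A ω = a → ω ∈ allZero D (m + 1) → Y (m + 1) ω = V (m + 1) ω)
    (hseq : ∀ m < e, μ (riskSet Y D X A x a m) ≠ 0 →
      μ (riskSet Y D X A x a m ∩ {ω | D (m + 1) ω = 0}) ≠ 0 → ∀ f,
        μ[historyEq V (m + 1) K f | riskSet Y D X A x a m ∩ {ω | D (m + 1) ω = 0}]
          = μ[historyEq V (m + 1) K f | riskSet Y D X A x a m])
    (hpos : μ (riskSet Y D X A x a e) ≠ 0) {m : ℕ} (hm : m ≤ e) :
    μ[historyEq V (m + 1) e 0 | riskSet Y D X A x a m]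
      = ∏ l ∈ Icc (m + 1) e, (1 - hazY μ Y D X A l x a) := by
  induction hm using Nat.decreasingInduction with
  | self =>
    have := cond_isProbabilityMeasure hpos
    have hempty : historyEq V (e + 1) e 0 = Set.univ :=
      Set.eq_univ_of_forall fun ω l hl hle => by omega
    rw [hempty, measure_univ, Icc_eq_empty (by omega), prod_empty]
  | of_succ m hm ih =>
    set T := riskSet Y D X A x a m ∩ {ω | D (m + 1) ω = 0}
    have hTm : MeasurableSet T := measurableSet_riskSet_inter hX hA hY hD m
    have hT : μ T ≠ 0 := by
      refine fun h => hpos (measure_mono_null ?_ h)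
      calc riskSet Y D X A x a e ⊆ riskSet Y D X A x a (m + 1) := riskSet_antitone hm
        _ ⊆ T := riskSet_succ m ▸ Set.inter_subset_left
    have hC : μ (riskSet Y D X A x a m) ≠ 0 := fun h => hT (measure_mono_null Set.inter_subset_left h)
    have hconsT : Set.EqOn (Y (m + 1)) (V (m + 1)) T := fun ω hω =>
      hcons m hm ω hω.1.1.1.2 (allZero_succ D m ▸ ⟨hω.1.2, hω.2⟩)
    calc μ[historyEq V (m + 1) e 0 | riskSet Y D X A x a m]
        = μ[historyEq V (m + 1) e 0 | T] :=
          (measure_historyEq_zero_eq hVm hVmono hVbin (by omega) he (hseq m hm hC hT)).symm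
      _ = μ[{ω | Y (m + 1) ω = 0} ∩ historyEq V (m + 1 + 1) e 0 | T] := by
          rw [← cond_inter_self hTm, historyEq_zero_eq_inter V hm, ← Set.inter_assoc,
            ← cond_inter_self hTm ({ω | Y (m + 1) ω = 0} ∩ _), ← Set.inter_assoc]
          congr 2
          exact (hconsT.inter_preimage_eq {0}).symm
      _ = μ[historyEq V (m + 1 + 1) e 0 | riskSet Y D X A x a (m + 1)]
            * (1 - hazY μ Y D X A (m + 1) x a) := by
          rw [cond_inter_eq_cond_inter_mul_cond (s := {ω | Y (m + 1) ω = 0}) hTm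
              (measurableSet_setOf_eq (hY (m + 1)) 0),
            ← riskSet_succ, cond_riskSet_inter_setOf_eq_zero hY hYbin hT]
      _ = ∏ l ∈ Icc (m + 1) e, (1 - hazY μ Y D X A l x a) := by
          rw [ih, Icc_add_one_left_eq_Ioc, prod_Ioc_mul_eq_prod_Icc hm]

lemma measure_inter_allZero_eq (hX : Measurable X) (hA : Measurable A)
    (hY : ∀ l, Measurable (Y l)) (hD : ∀ l, Measurable (D l))
    (hYbin : ∀ l ω, Y l ω = 0 ∨ Y l ω = 1) (hVm : ∀ l, Measurable (V l))
    (hVmono : ∀ l ω, V l ω ≤ V (l + 1) ω) (hVbin : ∀ l ω, V l ω = 0 ∨ V l ω = 1) (he : e ≤ K)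
    (hexch : μ {ω | X ω = x} ≠ 0 → μ ({ω | X ω = x} ∩ {ω | A ω = a}) ≠ 0 → ∀ f,
      μ[historyEq V 1 K f | {ω | X ω = x} ∩ {ω | A ω = a}] = μ[historyEq V 1 K f | {ω | X ω = x}])
    (hcons : ∀ m < e, ∀ ω, A ω = a → ω ∈ allZero D (m + 1) → Y (m + 1) ω = V (m + 1) ω)
    (hseq : ∀ m < e, μ (riskSet Y D X A x a m) ≠ 0 →
      μ (riskSet Y D X A x a m ∩ {ω | D (m + 1) ω = 0}) ≠ 0 → ∀ f,
        μ[historyEq V (m + 1) K f | riskSet Y D X A x a m ∩ {ω | D (m + 1) ω = 0}]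
          = μ[historyEq V (m + 1) K f | riskSet Y D X A x a m])
    (hpos : μ (riskSet Y D X A x a e) ≠ 0) :
    μ ({ω | X ω = x} ∩ allZero V e)
      = μ {ω | X ω = x} * ∏ l ∈ Icc 1 e, (1 - hazY μ Y D X A l x a) := by
  change μ ({ω | X ω = x} ∩ historyEq V 1 e 0) = _
  have hXA : μ ({ω | X ω = x} ∩ {ω | A ω = a}) ≠ 0 := by
    rw [← riskSet_zero (Y := Y) (D := D)]
    exact fun h => hpos (measure_mono_null (riskSet_antitone e.zero_le) h)
  have hX0 : μ {ω | X ω = x} ≠ 0 := fun h => hXA (measure_mono_null Set.inter_subset_left h)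
  have hgform := cond_riskSet_historyEq_zero_eq_prod hX hA hY hD hYbin hVm hVmono hVbin he hcons
    hseq hpos e.zero_le
  rw [zero_add, riskSet_zero] at hgform
  rw [← cond_mul_eq_inter (measurableSet_setOf_eq hX x), mul_comm,
    ← measure_historyEq_zero_eq hVm hVmono hVbin (by omega) he (hexch hX0 hXA), hgform]

end GFormula

lemma ENNReal.inv_mul_mul_div_inv_mul_mul {g b w q p y : ℝ≥0∞} (hg : g ≠ 0) (hg' : g ≠ ∞)
    (hb : b ≠ 0) (hb' : b ≠ ∞) (hw : w ≠ 0) (hw' : w ≠ ∞) (hq : q ≠ 0) (hq' : q ≠ ∞)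
    (hp : p ≠ 0) (hp' : p ≠ ∞) (hy : y ≠ 0) (hy' : y ≠ ∞) :
    g⁻¹ * (w * y) / (b⁻¹ * (q * p * y)) = b * g⁻¹ / (w⁻¹ * q * p) := by
  rw [← ENNReal.toReal_eq_toReal_iff'
    (ENNReal.div_ne_top (by finiteness) (by simp [*]))
    (ENNReal.div_ne_top (by finiteness) (by simp [*]))]
  simp only [ENNReal.toReal_div, ENNReal.toReal_mul, ENNReal.toReal_inv]
  have := ENNReal.toReal_ne_zero.2 ⟨hg, hg'⟩
  have := ENNReal.toReal_ne_zero.2 ⟨hb, hb'⟩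
  have := ENNReal.toReal_ne_zero.2 ⟨hw, hw'⟩
  have := ENNReal.toReal_ne_zero.2 ⟨hq, hq'⟩
  have := ENNReal.toReal_ne_zero.2 ⟨hp, hp'⟩
  have := ENNReal.toReal_ne_zero.2 ⟨hy, hy'⟩
  field_simp

theorem direct_effect_importance_weights_general
    (μ : Measure Ω) [IsProbabilityMeasure μ]
    (Y D : ℕ → Ω → ℕ) (X : Ω → 𝓧) (A : Ω → ℕ)
    -- measurability of the random variables
    (hXm : Measurable X) (hAm : Measurable A)
    (hYm : ∀ k, Measurable (Y k)) (hDm : ∀ k, Measurable (D k))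
    -- binary indicators, absorbing events, mutual exclusivity
    (hYbin : ∀ k ω, Y k ω = 0 ∨ Y k ω = 1) (hDbin : ∀ k ω, D k ω = 0 ∨ D k ω = 1)
    (K : ℕ)
    -- counterfactual indicators Y^{a,d̄=0}_k under the joint intervention
    -- do(A = a, D̄_K = 0) eliminating the competing event
    (Ycf0 : ℕ → ℕ → Ω → ℕ)
    (hYcf0m : ∀ a k, Measurable (Ycf0 a k))
    (hYcf0bin : ∀ a k ω, Ycf0 a k ω = 0 ∨ Ycf0 a k ω = 1)
    (hYcf0mono : ∀ a k ω, Ycf0 a k ω ≤ Ycf0 a (k + 1) ω)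
    -- (Y^{a,d̄=0}_1, …, Y^{a,d̄=0}_K) is conditionally independent of A given X
    -- (stated through the atoms of the discrete counterfactual family)
    (hexch0 : ∀ a a' x, (a = 0 ∨ a = 1) → (a' = 0 ∨ a' = 1) →
      μ {ω | X ω = x} ≠ 0 → μ ({ω | X ω = x} ∩ {ω | A ω = a'}) ≠ 0 →
      ∀ f : ℕ → ℕ,
        μ[|{ω | X ω = x} ∩ {ω | A ω = a'}]
            {ω | ∀ j, 1 ≤ j → j ≤ K → Ycf0 a j ω = f j}
          = μ[|{ω | X ω = x}] {ω | ∀ j, 1 ≤ j → j ≤ K → Ycf0 a j ω = f j})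
    -- Assumption 2 (i): sequential exchangeability — (Y^{a,d̄=0}_k, …, Y^{a,d̄=0}_K)
    -- is conditionally independent of D_k given X = x, A = a, Ȳ_{k−1} = D̄_{k−1} = 0
    (hseqexch : ∀ a x k, (a = 0 ∨ a = 1) → 1 ≤ k → k ≤ K →
      μ ({ω | X ω = x} ∩ {ω | A ω = a} ∩ allZero Y (k - 1) ∩ allZero D (k - 1)) ≠ 0 →
      μ ({ω | X ω = x} ∩ {ω | A ω = a} ∩ allZero Y (k - 1) ∩ allZero D (k - 1)
          ∩ {ω | D k ω = 0}) ≠ 0 →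
      ∀ f : ℕ → ℕ,
        μ[|{ω | X ω = x} ∩ {ω | A ω = a} ∩ allZero Y (k - 1) ∩ allZero D (k - 1)
            ∩ {ω | D k ω = 0}]
            {ω | ∀ l, k ≤ l → l ≤ K → Ycf0 a l ω = f l}
          = μ[|{ω | X ω = x} ∩ {ω | A ω = a} ∩ allZero Y (k - 1) ∩ allZero D (k - 1)]
              {ω | ∀ l, k ≤ l → l ≤ K → Ycf0 a l ω = f l})
    -- Assumption 2 (iii): consistency w.r.t. elimination of the competing event:
    -- on the event {A = a, D̄_k = 0} one has Ȳ_k = Ȳ^{a,d̄=0}_k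
    (hcons0 : ∀ a ω k, (a = 0 ∨ a = 1) → k ≤ K → A ω = a →
      (∀ l, 1 ≤ l → l ≤ k → D l ω = 0) →
      ∀ l, 1 ≤ l → l ≤ k → Y l ω = Ycf0 a l ω)
    (k : ℕ) (hk1 : 1 ≤ k) (hkK : k ≤ K) (a : ℕ) (ha : a = 0 ∨ a = 1)
    -- positivity of all conditioning events appearing in the statement
    (hposObs : μ (allZero Y (k - 1) ∩ allZero D k ∩ {ω | A ω = a}) ≠ 0)
    (hposInt : μ (allZero (Ycf0 a) (k - 1)) ≠ 0) :
    ∃ c : ℝ≥0∞, c ≠ 0 ∧ c ≠ ⊤ ∧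
      ∀ x : 𝓧,
        μ[|allZero Y (k - 1) ∩ allZero D k ∩ {ω | A ω = a}] {ω | X ω = x} ≠ 0 →
        μ[|allZero (Ycf0 a) (k - 1)] {ω | X ω = x}
            / μ[|allZero Y (k - 1) ∩ allZero D k ∩ {ω | A ω = a}] {ω | X ω = x}
          = c / (μ[|{ω | X ω = x}] {ω | A ω = a}
              * ∏ l ∈ Icc 1 k, (1 - hazD μ Y D X A l x a)) := by
  obtain ⟨e, rfl⟩ : ∃ e, k = e + 1 := ⟨k - 1, by omega⟩
  simp only [Nat.add_sub_cancel] at hposObs hposInt ⊢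
  set B := allZero Y e ∩ allZero D (e + 1) ∩ {ω | A ω = a}
  set G := allZero (Ycf0 a) e
  have hB : MeasurableSet B :=
    ((measurableSet_allZero hYm e).inter (measurableSet_allZero hDm _)).inter
      (measurableSet_setOf_eq hAm a)
  refine ⟨μ B * (μ G)⁻¹, mul_ne_zero hposObs (ENNReal.inv_ne_zero.2 (measure_ne_top μ G)),
    ENNReal.mul_ne_top (measure_ne_top μ B) (ENNReal.inv_ne_top.2 hposInt), fun x hx => ?_⟩
  have hobs_pos : μ (riskSet Y D X A x a e ∩ {ω | D (e + 1) ω = 0}) ≠ 0 := by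
    rw [cond_apply hB, allZero_inter_allZero_succ_inter_eq] at hx
    exact right_ne_zero_of_mul hx
  have hint := measure_inter_allZero_eq hXm hAm hYm hDm hYbin (hYcf0m a) (hYcf0mono a)
    (hYcf0bin a) (by omega) (hexch0 a a x ha ha)
    (fun m hm ω hA hD => hcons0 a ω (m + 1) ha (by omega) hA hD (m + 1) (by omega) le_rfl)
    (fun m hm => hseqexch a x (m + 1) ha (by omega) (by omega))
    fun h => hobs_pos (measure_mono_null Set.inter_subset_left h)
  have hobs := measure_riskSet_inter_eq_prod (μ := μ) (x := x) (a := a) hXm hAm hYm hDm hYbin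
    hDbin e
  rw [hobs, mul_ne_zero_iff, mul_ne_zero_iff] at hobs_pos
  obtain ⟨⟨hXA, hhazD⟩, hhazY⟩ := hobs_pos
  rw [cond_apply (measurableSet_allZero (hYcf0m a) e), cond_apply hB,
    cond_apply (measurableSet_setOf_eq hXm x), Set.inter_comm G, hint,
    allZero_inter_allZero_succ_inter_eq, hobs]
  exact ENNReal.inv_mul_mul_div_inv_mul_mul hposInt (measure_ne_top μ G) hposObs
    (measure_ne_top μ B) (fun h => hXA (measure_mono_null Set.inter_subset_left h))
    (measure_ne_top μ _) hXA (measure_ne_top μ _)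
    hhazD (ENNReal.prod_ne_top fun _ _ => ENNReal.sub_ne_top ENNReal.one_ne_top)
    hhazY (ENNReal.prod_ne_top fun _ _ => ENNReal.sub_ne_top ENNReal.one_ne_top)

theorem direct_effect_importance_weights
    [Countable 𝓧]
    (μ : Measure Ω) [IsProbabilityMeasure μ]
    (Y D : ℕ → Ω → ℕ) (X : Ω → 𝓧) (A : Ω → ℕ)
    -- measurability of the random variables
    (hXm : Measurable X) (hAm : Measurable A)
    (hYm : ∀ k, Measurable (Y k)) (hDm : ∀ k, Measurable (D k))
    -- binary indicators, absorbing events, mutual exclusivity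
    (hYbin : ∀ k ω, Y k ω = 0 ∨ Y k ω = 1) (hDbin : ∀ k ω, D k ω = 0 ∨ D k ω = 1)
    (hYmono : ∀ k ω, Y k ω ≤ Y (k + 1) ω) (hDmono : ∀ k ω, D k ω ≤ D (k + 1) ω)
    (hexcl : ∀ k ω, Y k ω * D k ω = 0)
    (hAbin : ∀ ω, A ω = 0 ∨ A ω = 1)
    (K : ℕ) (hK : 1 ≤ K)
    -- counterfactual indicators Y^a_k, D^a_k under the intervention do(A = a)
    (Ycf Dcf : ℕ → ℕ → Ω → ℕ)
    (hYcfm : ∀ a k, Measurable (Ycf a k)) (hDcfm : ∀ a k, Measurable (Dcf a k))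
    (hYcfbin : ∀ a k ω, Ycf a k ω = 0 ∨ Ycf a k ω = 1)
    (hDcfbin : ∀ a k ω, Dcf a k ω = 0 ∨ Dcf a k ω = 1)
    (hYcfmono : ∀ a k ω, Ycf a k ω ≤ Ycf a (k + 1) ω)
    (hDcfmono : ∀ a k ω, Dcf a k ω ≤ Dcf a (k + 1) ω)
    (hcfexcl : ∀ a k ω, Ycf a k ω * Dcf a k ω = 0)
    -- Assumption 1 (i): exchangeability — the family (Y^a_1, D^a_1, …, Y^a_K, D^a_K)
    -- is conditionally independent of A given X (stated through the atoms of the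
    -- discrete counterfactual family)
    (hexch : ∀ a a' x, (a = 0 ∨ a = 1) → (a' = 0 ∨ a' = 1) →
      μ {ω | X ω = x} ≠ 0 → μ ({ω | X ω = x} ∩ {ω | A ω = a'}) ≠ 0 →
      ∀ f g : ℕ → ℕ,
        μ[|{ω | X ω = x} ∩ {ω | A ω = a'}]
            {ω | ∀ j, 1 ≤ j → j ≤ K → (Ycf a j ω = f j ∧ Dcf a j ω = g j)}
          = μ[|{ω | X ω = x}]
              {ω | ∀ j, 1 ≤ j → j ≤ K → (Ycf a j ω = f j ∧ Dcf a j ω = g j)})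
    -- Assumption 1 (ii): positivity
    (hposA : ∀ x, μ {ω | X ω = x} ≠ 0 → ∀ a', (a' = 0 ∨ a' = 1) →
      μ ({ω | X ω = x} ∩ {ω | A ω = a'}) ≠ 0)
    -- Assumption 1 (iii): consistency
    (hconsY : ∀ k ω, Y k ω = A ω * Ycf 1 k ω + (1 - A ω) * Ycf 0 k ω)
    (hconsD : ∀ k ω, D k ω = A ω * Dcf 1 k ω + (1 - A ω) * Dcf 0 k ω)
    -- counterfactual indicators Y^{a,d̄=0}_k under the joint intervention
    -- do(A = a, D̄_K = 0) eliminating the competing event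
    (Ycf0 : ℕ → ℕ → Ω → ℕ)
    (hYcf0m : ∀ a k, Measurable (Ycf0 a k))
    (hYcf0bin : ∀ a k ω, Ycf0 a k ω = 0 ∨ Ycf0 a k ω = 1)
    (hYcf0mono : ∀ a k ω, Ycf0 a k ω ≤ Ycf0 a (k + 1) ω)
    -- (Y^{a,d̄=0}_1, …, Y^{a,d̄=0}_K) is conditionally independent of A given X
    -- (stated through the atoms of the discrete counterfactual family)
    (hexch0 : ∀ a a' x, (a = 0 ∨ a = 1) → (a' = 0 ∨ a' = 1) →
      μ {ω | X ω = x} ≠ 0 → μ ({ω | X ω = x} ∩ {ω | A ω = a'}) ≠ 0 →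
      ∀ f : ℕ → ℕ,
        μ[|{ω | X ω = x} ∩ {ω | A ω = a'}]
            {ω | ∀ j, 1 ≤ j → j ≤ K → Ycf0 a j ω = f j}
          = μ[|{ω | X ω = x}] {ω | ∀ j, 1 ≤ j → j ≤ K → Ycf0 a j ω = f j})
    -- Assumption 2 (i): sequential exchangeability — (Y^{a,d̄=0}_k, …, Y^{a,d̄=0}_K)
    -- is conditionally independent of D_k given X = x, A = a, Ȳ_{k−1} = D̄_{k−1} = 0
    (hseqexch : ∀ a x k, (a = 0 ∨ a = 1) → 1 ≤ k → k ≤ K →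
      μ ({ω | X ω = x} ∩ {ω | A ω = a} ∩ allZero Y (k - 1) ∩ allZero D (k - 1)) ≠ 0 →
      μ ({ω | X ω = x} ∩ {ω | A ω = a} ∩ allZero Y (k - 1) ∩ allZero D (k - 1)
          ∩ {ω | D k ω = 0}) ≠ 0 →
      ∀ f : ℕ → ℕ,
        μ[|{ω | X ω = x} ∩ {ω | A ω = a} ∩ allZero Y (k - 1) ∩ allZero D (k - 1)
            ∩ {ω | D k ω = 0}]
            {ω | ∀ l, k ≤ l → l ≤ K → Ycf0 a l ω = f l}
          = μ[|{ω | X ω = x} ∩ {ω | A ω = a} ∩ allZero Y (k - 1) ∩ allZero D (k - 1)]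
              {ω | ∀ l, k ≤ l → l ≤ K → Ycf0 a l ω = f l})
    -- Assumption 2 (ii): positivity w.r.t. the competing event
    (hposDcomp : ∀ a x k, (a = 0 ∨ a = 1) → 1 ≤ k → k ≤ K →
      μ ({ω | X ω = x} ∩ {ω | A ω = a} ∩ allZero Y (k - 1) ∩ allZero D (k - 1)) ≠ 0 →
      μ ({ω | X ω = x} ∩ {ω | A ω = a} ∩ allZero Y (k - 1) ∩ allZero D (k - 1)
          ∩ {ω | D k ω = 0}) ≠ 0)
    -- Assumption 2 (iii): consistency w.r.t. elimination of the competing event: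
    -- on the event {A = a, D̄_k = 0} one has Ȳ_k = Ȳ^{a,d̄=0}_k
    (hcons0 : ∀ a ω k, (a = 0 ∨ a = 1) → k ≤ K → A ω = a →
      (∀ l, 1 ≤ l → l ≤ k → D l ω = 0) →
      ∀ l, 1 ≤ l → l ≤ k → Y l ω = Ycf0 a l ω)
    (k : ℕ) (hk1 : 1 ≤ k) (hkK : k ≤ K) (a : ℕ) (ha : a = 0 ∨ a = 1)
    -- positivity of all conditioning events appearing in the statement
    (hposY : ∀ l x, 1 ≤ l → l ≤ K → μ {ω | X ω = x} ≠ 0 →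
      μ (atRiskY Y D X A l x a) ≠ 0)
    (hposD : ∀ l x, 1 ≤ l → l ≤ K → μ {ω | X ω = x} ≠ 0 →
      μ (atRiskD Y D X A l x a) ≠ 0)
    (hposObs : μ (allZero Y (k - 1) ∩ allZero D k ∩ {ω | A ω = a}) ≠ 0)
    (hposInt : μ (allZero (Ycf0 a) (k - 1)) ≠ 0)
    -- the competing-event hazard is strictly below one up to time k
    (hDlt1 : ∀ l x, 1 ≤ l → l ≤ k → μ {ω | X ω = x} ≠ 0 →
      hazD μ Y D X A l x a < 1) :
    ∃ c : ℝ≥0∞, c ≠ 0 ∧ c ≠ ⊤ ∧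
      ∀ x : 𝓧,
        μ[|allZero Y (k - 1) ∩ allZero D k ∩ {ω | A ω = a}] {ω | X ω = x} ≠ 0 →
        μ[|allZero (Ycf0 a) (k - 1)] {ω | X ω = x}
            / μ[|allZero Y (k - 1) ∩ allZero D k ∩ {ω | A ω = a}] {ω | X ω = x}
          = c / (μ[|{ω | X ω = x}] {ω | A ω = a}
              * ∏ l ∈ Icc 1 k, (1 - hazD μ Y D X A l x a)) :=
  direct_effect_importance_weights_general μ Y D X A hXm hAm hYm hDm hYbin hDbin K Ycf0 hYcf0m
    hYcf0bin hYcf0mono hexch0 hseqexch hcons0 k hk1 hkK a ha hposObs hposInt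

end Stmt11
end
end

section
/- Importance weights for separable effects: under the separable-effects assumptions, fix k ∈ {1,…,K} and a_Y, a_D ∈ {0,1}, and let p^{obs}(x) = P(X = x | Ȳ_{k−1} = 0, D̄_k = 0, A = a_Y) and p^{int}(x) = P(X = x | D̄^{a_Y,a_D}_k = 0, Ȳ^{a_Y,a_D}_{k−1} = 0). Assume h_D(l,x,a) < 1 for all l ≤ k, all x and a ∈ {0,1}. Then there exists a constant c > 0, not depending on x, such that for every x with p^{obs}(x) > 0, p^{int}(x) / p^{obs}(x) = c / [P(A = a_Y | X = x) · Π_{l=1}^{k} (1 − h_D(l,x,a_Y)) / (1 − h_D(l,x,a_D))]; in particular the density ratio is constant in x beyond the propensity factor whenever the effect of treatment on the competing-event hazard does not depend on covariates. -/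
/-!
STATEMENT 12: Importance weights for separable effects. Under the separable-effects
assumptions, fix `k ∈ {1,…,K}` and `a_Y, a_D ∈ {0,1}`, and let
`p^{obs}(x) = P(X = x | Ȳ_{k−1} = 0, D̄_k = 0, A = a_Y)` and
`p^{int}(x) = P(X = x | D̄^{a_Y,a_D}_k = 0, Ȳ^{a_Y,a_D}_{k−1} = 0)`.
Assume `h_D(l,x,a) < 1` for all `l ≤ k`, all `x` and `a ∈ {0,1}`. Then there exists
a constant `c > 0` (finite, not depending on `x`) such that for every `x` with
`p^{obs}(x) > 0`,
`p^{int}(x) / p^{obs}(x)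
  = c / [P(A = a_Y | X = x) · Π_{l=1}^{k} (1 − h_D(l,x,a_Y)) / (1 − h_D(l,x,a_D))]`.
-/

open MeasureTheory ProbabilityTheory Finset
open scoped ENNReal

noncomputable section

namespace Stmt12

variable {Ω 𝓧 : Type*} [MeasurableSpace Ω] [MeasurableSpace 𝓧] [MeasurableSingletonClass 𝓧]

/-- The event that the history `V̄_k = (V_1, …, V_k)` is identically zero; for `k = 0`
this is all of `Ω` (the convention `V̄_0 = 0`). -/
def allZero (V : ℕ → Ω → ℕ) (k : ℕ) : Set Ω :=
  {ω | ∀ l, 1 ≤ l → l ≤ k → V l ω = 0}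

/-- Conditioning event of the main-event hazard `h_Y(k,x,a)`:
`{D̄_k = 0, Ȳ_{k−1} = 0, X = x, A = a}` (the competing event is resolved before the
main event within each interval). -/
def atRiskY (Y D : ℕ → Ω → ℕ) (X : Ω → 𝓧) (A : Ω → ℕ) (k : ℕ) (x : 𝓧) (a : ℕ) : Set Ω :=
  allZero D k ∩ allZero Y (k - 1) ∩ {ω | X ω = x} ∩ {ω | A ω = a}

/-- Conditioning event of the competing-event hazard `h_D(k,x,a)`:
`{D̄_{k−1} = 0, Ȳ_{k−1} = 0, X = x, A = a}`. -/
def atRiskD (Y D : ℕ → Ω → ℕ) (X : Ω → 𝓧) (A : Ω → ℕ) (k : ℕ) (x : 𝓧) (a : ℕ) : Set Ω :=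
  allZero D (k - 1) ∩ allZero Y (k - 1) ∩ {ω | X ω = x} ∩ {ω | A ω = a}

/-- Conditional hazard of the main event,
`h_Y(k,x,a) = P(Y_k = 1 | D̄_k = 0, Ȳ_{k−1} = 0, X = x, A = a)`. -/
def hazY (μ : Measure Ω) (Y D : ℕ → Ω → ℕ) (X : Ω → 𝓧) (A : Ω → ℕ)
    (k : ℕ) (x : 𝓧) (a : ℕ) : ℝ≥0∞ :=
  μ[|atRiskY Y D X A k x a] {ω | Y k ω = 1}

/-- Conditional hazard of the competing event,
`h_D(k,x,a) = P(D_k = 1 | D̄_{k−1} = 0, Ȳ_{k−1} = 0, X = x, A = a)`. -/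
def hazD (μ : Measure Ω) (Y D : ℕ → Ω → ℕ) (X : Ω → 𝓧) (A : Ω → ℕ)
    (k : ℕ) (x : 𝓧) (a : ℕ) : ℝ≥0∞ :=
  μ[|atRiskD Y D X A k x a] {ω | D k ω = 1}

/-!
Both conditional densities of `X` are ratios of at-risk probabilities. A discrete-time chain rule
writes `P(D̄_k = 0, Ȳ_{k-1} = 0, B)` as `P(B)` times the survival factors `1 - h` of both events
within `B`. By dismissibility, the counterfactual hazards under `(a_Y, a_D)` are those under
`(a_D, a_D)` (competing event) and `(a_Y, a_Y)` (main event); exchangeability lets one condition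
additionally on `A = a`, and consistency then turns them into the observational hazards
`h_D(·, x, a_D)` and `h_Y(·, x, a_Y)`. The two joint probabilities with `X = x` therefore differ
exactly by the factor `P(A = a_Y | X = x) · ∏ (1 - h_D(l,x,a_Y)) / (1 - h_D(l,x,a_D))`, and `c` is
the ratio of the two normalizing probabilities.
-/

set_option linter.unusedSectionVars false

lemma allZero_zero (V : ℕ → Ω → ℕ) : allZero V 0 = Set.univ :=
  Set.eq_univ_of_forall fun _ l h1 h2 => absurd (h1.trans h2) (by omega)

lemma allZero_succ (V : ℕ → Ω → ℕ) (n : ℕ) :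
    allZero V (n + 1) = allZero V n ∩ {ω | V (n + 1) ω = 0} := by
  ext ω
  simp only [allZero, Set.mem_inter_iff, Set.mem_ofPred_eq]
  refine ⟨fun h => ⟨fun l h1 h2 => h l h1 (by omega), h (n + 1) (by omega) le_rfl⟩,
    fun ⟨h, hn⟩ l h1 h2 => ?_⟩
  rcases (Nat.le_succ_iff.mp h2) with hl | rfl
  exacts [h l h1 hl, hn]

lemma measurableSet_allZero {V : ℕ → Ω → ℕ} (hV : ∀ l, Measurable (V l)) (n : ℕ) :
    MeasurableSet (allZero V n) := by
  induction n with
  | zero => simp [allZero_zero]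
  | succ n ih => rw [allZero_succ]; exact ih.inter (hV _ (measurableSet_singleton 0))

lemma setOf_eq_zero_eq_compl {V : Ω → ℕ} (hV : ∀ ω, V ω = 0 ∨ V ω = 1) :
    {ω | V ω = 0} = {ω | V ω = 1}ᶜ := by
  ext ω
  rcases hV ω with h | h <;> simp [h]

lemma measure_inter_compl_eq_mul_one_sub_cond (μ : Measure Ω) [IsFiniteMeasure μ] {E S : Set Ω}
    (hE : MeasurableSet E) (hS : MeasurableSet S) :
    μ (E ∩ Sᶜ) = μ E * (1 - μ[S | E]) := by
  rcases eq_or_ne (μ E) 0 with h0 | h0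
  · simp [h0, measure_inter_null_of_null_left]
  · have := cond_isProbabilityMeasure (μ := μ) h0
    rw [← prob_compl_eq_one_sub hS, mul_comm, cond_mul_eq_inter hE]

lemma cond_congr_of_inter_eq (μ : Measure Ω) {E S S' : Set Ω} (hE : MeasurableSet E)
    (h : E ∩ S = E ∩ S') : μ[S | E] = μ[S' | E] := by
  rw [cond_apply hE, cond_apply hE, h]

def condHazD (μ : Measure Ω) (Y D : ℕ → Ω → ℕ) (B : Set Ω) (l : ℕ) : ℝ≥0∞ :=
  μ[{ω | D l ω = 1} | allZero D (l - 1) ∩ allZero Y (l - 1) ∩ B]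

def condHazY (μ : Measure Ω) (Y D : ℕ → Ω → ℕ) (B : Set Ω) (l : ℕ) : ℝ≥0∞ :=
  μ[{ω | Y l ω = 1} | allZero D l ∩ allZero Y (l - 1) ∩ B]

lemma hazD_eq_condHazD (μ : Measure Ω) (Y D : ℕ → Ω → ℕ) (X : Ω → 𝓧) (A : Ω → ℕ)
    (l : ℕ) (x : 𝓧) (a : ℕ) :
    hazD μ Y D X A l x a = condHazD μ Y D ({ω | X ω = x} ∩ {ω | A ω = a}) l := by
  simp only [hazD, atRiskD, condHazD, Set.inter_assoc]

lemma hazY_eq_condHazY (μ : Measure Ω) (Y D : ℕ → Ω → ℕ) (X : Ω → 𝓧) (A : Ω → ℕ)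
    (l : ℕ) (x : 𝓧) (a : ℕ) :
    hazY μ Y D X A l x a = condHazY μ Y D ({ω | X ω = x} ∩ {ω | A ω = a}) l := by
  simp only [hazY, atRiskY, condHazY, Set.inter_assoc]

section ChainRule

variable (μ : Measure Ω) [IsFiniteMeasure μ] {Y D : ℕ → Ω → ℕ} {B : Set Ω}

lemma measure_allZero_succ_left (hYm : ∀ l, Measurable (Y l)) (hDm : ∀ l, Measurable (D l))
    (hDb : ∀ l ω, D l ω = 0 ∨ D l ω = 1) (hB : MeasurableSet B) (n : ℕ) :
    μ (allZero D (n + 1) ∩ allZero Y n ∩ B)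
      = μ (allZero D n ∩ allZero Y n ∩ B) * (1 - condHazD μ Y D B (n + 1)) := by
  have hE := ((measurableSet_allZero hDm n).inter (measurableSet_allZero hYm n)).inter hB
  have hset : allZero D (n + 1) ∩ allZero Y n ∩ B
      = allZero D n ∩ allZero Y n ∩ B ∩ {ω | D (n + 1) ω = 1}ᶜ := by
    rw [← setOf_eq_zero_eq_compl (hDb _), allZero_succ]
    ext ω
    simp only [Set.mem_inter_iff]
    tauto
  rw [hset, measure_inter_compl_eq_mul_one_sub_cond μ (S := {ω | D (n + 1) ω = 1}) hE
    (hDm _ (measurableSet_singleton 1))]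
  rfl

lemma measure_allZero_succ_right (hYm : ∀ l, Measurable (Y l)) (hDm : ∀ l, Measurable (D l))
    (hYb : ∀ l ω, Y l ω = 0 ∨ Y l ω = 1) (hB : MeasurableSet B) (n : ℕ) :
    μ (allZero D (n + 1) ∩ allZero Y (n + 1) ∩ B)
      = μ (allZero D (n + 1) ∩ allZero Y n ∩ B) * (1 - condHazY μ Y D B (n + 1)) := by
  have hE := ((measurableSet_allZero hDm (n + 1)).inter (measurableSet_allZero hYm n)).inter hB
  have hset : allZero D (n + 1) ∩ allZero Y (n + 1) ∩ B
      = allZero D (n + 1) ∩ allZero Y n ∩ B ∩ {ω | Y (n + 1) ω = 1}ᶜ := by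
    rw [← setOf_eq_zero_eq_compl (hYb _), allZero_succ Y]
    ext ω
    simp only [Set.mem_inter_iff]
    tauto
  rw [hset, measure_inter_compl_eq_mul_one_sub_cond μ (S := {ω | Y (n + 1) ω = 1}) hE
    (hYm _ (measurableSet_singleton 1))]
  rfl

lemma measure_allZero_allZero_eq_mul_prod (hYm : ∀ l, Measurable (Y l))
    (hDm : ∀ l, Measurable (D l)) (hYb : ∀ l ω, Y l ω = 0 ∨ Y l ω = 1)
    (hDb : ∀ l ω, D l ω = 0 ∨ D l ω = 1) (hB : MeasurableSet B) (n : ℕ) :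
    μ (allZero D n ∩ allZero Y n ∩ B)
      = μ B * ∏ l ∈ Icc 1 n, (1 - condHazD μ Y D B l) * (1 - condHazY μ Y D B l) := by
  induction n with
  | zero => simp [allZero_zero]
  | succ n ih =>
    rw [measure_allZero_succ_right μ hYm hDm hYb hB, measure_allZero_succ_left μ hYm hDm hDb hB,
      ih, prod_Icc_succ_top (by omega)]
    ring

lemma measure_allZero_inter_eq_mul_prod (hYm : ∀ l, Measurable (Y l))
    (hDm : ∀ l, Measurable (D l)) (hYb : ∀ l ω, Y l ω = 0 ∨ Y l ω = 1)
    (hDb : ∀ l ω, D l ω = 0 ∨ D l ω = 1) (hB : MeasurableSet B) (k : ℕ) :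
    μ (allZero D k ∩ allZero Y (k - 1) ∩ B)
      = μ B * (∏ l ∈ Icc 1 k, (1 - condHazD μ Y D B l))
          * ∏ l ∈ Icc 1 (k - 1), (1 - condHazY μ Y D B l) := by
  cases k with
  | zero => simp [allZero_zero]
  | succ n =>
    rw [Nat.add_sub_cancel, measure_allZero_succ_left μ hYm hDm hDb hB,
      measure_allZero_allZero_eq_mul_prod μ hYm hDm hYb hDb hB, prod_Icc_succ_top (by omega),
      prod_mul_distrib]
    ring

end ChainRule

/-- The path `j ↦ (Y_j, D_j)` on the window `1 ≤ j ≤ K`. Its values form a countable type, so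
its law is determined by the atoms in which exchangeability is stated. -/
def traj (Y D : ℕ → Ω → ℕ) (K : ℕ) (ω : Ω) : Icc 1 K → ℕ × ℕ :=
  fun j => (Y j ω, D j ω)

section Trajectory

variable {Y D : ℕ → Ω → ℕ} {K : ℕ}

lemma measurable_traj (hYm : ∀ l, Measurable (Y l)) (hDm : ∀ l, Measurable (D l)) :
    Measurable (traj Y D K) :=
  measurable_pi_lambda _ fun j => (hYm j).prodMk (hDm j)

lemma exists_traj_preimage_singleton (t : Icc 1 K → ℕ × ℕ) :
    ∃ f g : ℕ → ℕ, traj Y D K ⁻¹' {t}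
      = {ω | ∀ j, 1 ≤ j → j ≤ K → (Y j ω = f j ∧ D j ω = g j)} := by
  refine ⟨fun j => if h : j ∈ Icc 1 K then (t ⟨j, h⟩).1 else 0,
    fun j => if h : j ∈ Icc 1 K then (t ⟨j, h⟩).2 else 0, ?_⟩
  ext ω
  simp only [Set.mem_preimage, Set.mem_singleton_iff, funext_iff, traj, Subtype.forall, mem_Icc,
    Prod.ext_iff, Set.mem_ofPred_eq]
  refine forall_congr' fun j => ⟨fun h h1 h2 => ?_, fun h h12 => ?_⟩
  · simpa [h1, h2] using h ⟨h1, h2⟩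
  · simpa [h12] using h h12.1 h12.2

lemma measure_traj_preimage_eq {ν₁ ν₂ : Measure Ω} (hYm : ∀ l, Measurable (Y l))
    (hDm : ∀ l, Measurable (D l))
    (h : ∀ f g : ℕ → ℕ,
      ν₁ {ω | ∀ j, 1 ≤ j → j ≤ K → (Y j ω = f j ∧ D j ω = g j)}
        = ν₂ {ω | ∀ j, 1 ≤ j → j ≤ K → (Y j ω = f j ∧ D j ω = g j)})
    (U : Set (Icc 1 K → ℕ × ℕ)) :
    ν₁ (traj Y D K ⁻¹' U) = ν₂ (traj Y D K ⁻¹' U) := by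
  have hfib : ∀ t ∈ U, MeasurableSet (traj Y D K ⁻¹' {t}) :=
    fun t _ => measurable_traj hYm hDm (measurableSet_singleton t)
  rw [← tsum_measure_preimage_singleton U.to_countable hfib,
    ← tsum_measure_preimage_singleton U.to_countable hfib]
  refine tsum_congr fun t => ?_
  obtain ⟨f, g, hfg⟩ := exists_traj_preimage_singleton (Y := Y) (D := D) t.1
  rw [hfg, h f g]

lemma allZero_eq_traj_preimage_fst {n : ℕ} (hn : n ≤ K) :
    allZero Y n = traj Y D K ⁻¹' {t | ∀ j : Icc 1 K, (j : ℕ) ≤ n → (t j).1 = 0} := by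
  ext ω
  simp only [allZero, traj, Set.mem_preimage, Set.mem_ofPred_eq, Subtype.forall, mem_Icc]
  exact ⟨fun h j hj hjn => h j hj.1 hjn, fun h j h1 hjn => h j ⟨h1, hjn.trans hn⟩ hjn⟩

lemma allZero_eq_traj_preimage_snd {n : ℕ} (hn : n ≤ K) :
    allZero D n = traj Y D K ⁻¹' {t | ∀ j : Icc 1 K, (j : ℕ) ≤ n → (t j).2 = 0} := by
  ext ω
  simp only [allZero, traj, Set.mem_preimage, Set.mem_ofPred_eq, Subtype.forall, mem_Icc]
  exact ⟨fun h j hj hjn => h j hj.1 hjn, fun h j h1 hjn => h j ⟨h1, hjn.trans hn⟩ hjn⟩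

end Trajectory

lemma cond_preimage_eq_of_forall_preimage_eq {β : Type*} {ν₁ ν₂ : Measure Ω} {T : Ω → β}
    (h : ∀ U, ν₁ (T ⁻¹' U) = ν₂ (T ⁻¹' U)) {U : Set β} (hU : MeasurableSet (T ⁻¹' U))
    (V : Set β) : ν₁[T ⁻¹' V | T ⁻¹' U] = ν₂[T ⁻¹' V | T ⁻¹' U] := by
  rw [cond_apply hU, cond_apply hU, ← Set.preimage_inter, h, h]

section Identification

variable (μ : Measure Ω) [IsFiniteMeasure μ] {Y D : ℕ → Ω → ℕ} {K l : ℕ}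

lemma condHazD_eq_of_traj (hYm : ∀ l, Measurable (Y l)) (hDm : ∀ l, Measurable (D l))
    {C₁ C₂ : Set Ω} (hC₁ : MeasurableSet C₁) (hC₂ : MeasurableSet C₂)
    (h : ∀ U, μ[traj Y D K ⁻¹' U | C₁] = μ[traj Y D K ⁻¹' U | C₂]) (hl : l ∈ Icc 1 K) :
    condHazD μ Y D C₁ l = condHazD μ Y D C₂ l := by
  have hlK : l - 1 ≤ K := by grind
  have hE : allZero D (l - 1) ∩ allZero Y (l - 1)
      = traj Y D K ⁻¹' ({t | ∀ j : Icc 1 K, (j : ℕ) ≤ l - 1 → (t j).2 = 0}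
          ∩ {t | ∀ j : Icc 1 K, (j : ℕ) ≤ l - 1 → (t j).1 = 0}) := by
    rw [Set.preimage_inter, ← allZero_eq_traj_preimage_fst hlK,
      ← allZero_eq_traj_preimage_snd hlK]
  have hEm := (measurableSet_allZero hDm (l - 1)).inter (measurableSet_allZero hYm (l - 1))
  have hcond : ∀ C, MeasurableSet C → condHazD μ Y D C l
      = μ[|C][traj Y D K ⁻¹' {t | (t ⟨l, hl⟩).2 = 1} | allZero D (l - 1) ∩ allZero Y (l - 1)] :=
    fun C hC => by rw [cond_cond_eq_cond_inter hC hEm, Set.inter_comm]; rfl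
  rw [hcond C₁ hC₁, hcond C₂ hC₂, hE]
  exact cond_preimage_eq_of_forall_preimage_eq h (hE ▸ hEm) _

lemma condHazY_eq_of_traj (hYm : ∀ l, Measurable (Y l)) (hDm : ∀ l, Measurable (D l))
    {C₁ C₂ : Set Ω} (hC₁ : MeasurableSet C₁) (hC₂ : MeasurableSet C₂)
    (h : ∀ U, μ[traj Y D K ⁻¹' U | C₁] = μ[traj Y D K ⁻¹' U | C₂]) (hl : l ∈ Icc 1 K) :
    condHazY μ Y D C₁ l = condHazY μ Y D C₂ l := by
  have hlK : l ≤ K := (mem_Icc.mp hl).2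
  have hE : allZero D l ∩ allZero Y (l - 1)
      = traj Y D K ⁻¹' ({t | ∀ j : Icc 1 K, (j : ℕ) ≤ l → (t j).2 = 0}
          ∩ {t | ∀ j : Icc 1 K, (j : ℕ) ≤ l - 1 → (t j).1 = 0}) := by
    rw [Set.preimage_inter, ← allZero_eq_traj_preimage_fst (hlK.trans' (Nat.sub_le l 1)),
      ← allZero_eq_traj_preimage_snd hlK]
  have hEm := (measurableSet_allZero hDm l).inter (measurableSet_allZero hYm (l - 1))
  have hcond : ∀ C, MeasurableSet C → condHazY μ Y D C l
      = μ[|C][traj Y D K ⁻¹' {t | (t ⟨l, hl⟩).1 = 1} | allZero D l ∩ allZero Y (l - 1)] :=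
    fun C hC => by rw [cond_cond_eq_cond_inter hC hEm, Set.inter_comm]; rfl
  rw [hcond C₁ hC₁, hcond C₂ hC₂, hE]
  exact cond_preimage_eq_of_forall_preimage_eq h (hE ▸ hEm) _

lemma condHazD_congr {Y D Y' D' : ℕ → Ω → ℕ} (hYm : ∀ l, Measurable (Y l))
    (hDm : ∀ l, Measurable (D l)) {B : Set Ω} (hB : MeasurableSet B)
    (h : ∀ ω ∈ B, ∀ j, Y j ω = Y' j ω ∧ D j ω = D' j ω) (l : ℕ) :
    condHazD μ Y D B l = condHazD μ Y' D' B l := by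
  have hE : allZero D (l - 1) ∩ allZero Y (l - 1) ∩ B
      = allZero D' (l - 1) ∩ allZero Y' (l - 1) ∩ B := by
    ext ω
    by_cases hω : ω ∈ B
    · simp only [allZero, Set.mem_inter_iff, Set.mem_ofPred_eq, fun j => (h ω hω j).1,
        fun j => (h ω hω j).2]
    · simp [hω]
  have hEm :=
    ((measurableSet_allZero hDm (l - 1)).inter (measurableSet_allZero hYm (l - 1))).inter hB
  rw [condHazD, condHazD, ← hE]
  refine cond_congr_of_inter_eq μ hEm (Set.ext fun ω => and_congr_right fun hωE => ?_)
  simp only [Set.mem_ofPred_eq, (h ω hωE.2 l).2]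

lemma condHazY_congr {Y D Y' D' : ℕ → Ω → ℕ} (hYm : ∀ l, Measurable (Y l))
    (hDm : ∀ l, Measurable (D l)) {B : Set Ω} (hB : MeasurableSet B)
    (h : ∀ ω ∈ B, ∀ j, Y j ω = Y' j ω ∧ D j ω = D' j ω) (l : ℕ) :
    condHazY μ Y D B l = condHazY μ Y' D' B l := by
  have hE : allZero D l ∩ allZero Y (l - 1) ∩ B = allZero D' l ∩ allZero Y' (l - 1) ∩ B := by
    ext ω
    by_cases hω : ω ∈ B
    · simp only [allZero, Set.mem_inter_iff, Set.mem_ofPred_eq, fun j => (h ω hω j).1,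
        fun j => (h ω hω j).2]
    · simp [hω]
  have hEm := ((measurableSet_allZero hDm l).inter (measurableSet_allZero hYm (l - 1))).inter hB
  rw [condHazY, condHazY, ← hE]
  refine cond_congr_of_inter_eq μ hEm (Set.ext fun ω => and_congr_right fun hωE => ?_)
  simp only [Set.mem_ofPred_eq, (h ω hωE.2 l).1]

lemma condHazD_eq_of_exchangeable {Y D Y' D' : ℕ → Ω → ℕ} (hYm : ∀ l, Measurable (Y l))
    (hDm : ∀ l, Measurable (D l)) (hY'm : ∀ l, Measurable (Y' l)) (hD'm : ∀ l, Measurable (D' l))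
    {C G : Set Ω} (hC : MeasurableSet C) (hG : MeasurableSet G)
    (hexch : ∀ U, μ[traj Y' D' K ⁻¹' U | C ∩ G] = μ[traj Y' D' K ⁻¹' U | C])
    (hcons : ∀ ω ∈ G, ∀ j, Y j ω = Y' j ω ∧ D j ω = D' j ω) (hl : l ∈ Icc 1 K) :
    condHazD μ Y' D' C l = condHazD μ Y D (C ∩ G) l :=
  (condHazD_eq_of_traj μ hY'm hD'm (hC.inter hG) hC hexch hl).symm.trans
    (condHazD_congr μ hYm hDm (hC.inter hG) (fun ω hω => hcons ω hω.2) l).symm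

lemma condHazY_eq_of_exchangeable {Y D Y' D' : ℕ → Ω → ℕ} (hYm : ∀ l, Measurable (Y l))
    (hDm : ∀ l, Measurable (D l)) (hY'm : ∀ l, Measurable (Y' l)) (hD'm : ∀ l, Measurable (D' l))
    {C G : Set Ω} (hC : MeasurableSet C) (hG : MeasurableSet G)
    (hexch : ∀ U, μ[traj Y' D' K ⁻¹' U | C ∩ G] = μ[traj Y' D' K ⁻¹' U | C])
    (hcons : ∀ ω ∈ G, ∀ j, Y j ω = Y' j ω ∧ D j ω = D' j ω) (hl : l ∈ Icc 1 K) :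
    condHazY μ Y' D' C l = condHazY μ Y D (C ∩ G) l :=
  (condHazY_eq_of_traj μ hY'm hD'm (hC.inter hG) hC hexch hl).symm.trans
    (condHazY_congr μ hYm hDm (hC.inter hG) (fun ω hω => hcons ω hω.2) l).symm

end Identification

lemma binary_apply_eq_apply_diag {α : Type*} {F : ℕ → ℕ → α}
    (h : ∀ d, (d = 0 ∨ d = 1) → F 1 d = F 0 d) {b d : ℕ} (hb : b = 0 ∨ b = 1)
    (hd : d = 0 ∨ d = 1) : F b d = F d d := by
  rcases hb with rfl | rfl <;> rcases hd with rfl | rfl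
  exacts [rfl, (h 1 (.inr rfl)).symm, h 0 (.inl rfl), rfl]

lemma ENNReal.inv_mul_mul_div_inv_mul_mul {I O u b s : ℝ≥0∞} (hu0 : u ≠ 0) (hu : u ≠ ∞)
    (hs0 : s ≠ 0) (hs : s ≠ ∞) : I⁻¹ * (u * b) / (O⁻¹ * (u * s)) = O / I / (s / b) := by
  rw [mul_left_comm, mul_left_comm O⁻¹, ENNReal.mul_div_mul_left _ _ hu0 hu]
  simp only [div_eq_mul_inv, ENNReal.mul_inv (Or.inr hs) (Or.inr hs0),
    ENNReal.mul_inv (Or.inl hs0) (Or.inl hs), inv_inv]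
  ring

lemma prod_one_sub_ne_top {ι : Type*} (s : Finset ι) (f : ι → ℝ≥0∞) : ∏ l ∈ s, (1 - f l) ≠ ∞ :=
  ENNReal.prod_ne_top fun _ _ => ENNReal.sub_ne_top ENNReal.one_ne_top

lemma measure_observed_atRisk_eq_mul_prod (μ : Measure Ω) [IsFiniteMeasure μ]
    {Y D : ℕ → Ω → ℕ} {X : Ω → 𝓧} {A : Ω → ℕ} (hXm : Measurable X) (hAm : Measurable A)
    (hYm : ∀ l, Measurable (Y l)) (hDm : ∀ l, Measurable (D l))
    (hYb : ∀ l ω, Y l ω = 0 ∨ Y l ω = 1) (hDb : ∀ l ω, D l ω = 0 ∨ D l ω = 1)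
    (k : ℕ) (x : 𝓧) (a : ℕ) :
    μ (allZero Y (k - 1) ∩ allZero D k ∩ {ω | A ω = a} ∩ {ω | X ω = x})
      = (μ {ω | X ω = x} * ∏ l ∈ Icc 1 (k - 1), (1 - hazY μ Y D X A l x a))
        * (μ[{ω | A ω = a} | {ω | X ω = x}] * ∏ l ∈ Icc 1 k, (1 - hazD μ Y D X A l x a)) := by
  have hXx : MeasurableSet {ω | X ω = x} := hXm (measurableSet_singleton x)
  have hset : allZero Y (k - 1) ∩ allZero D k ∩ {ω | A ω = a} ∩ {ω | X ω = x}
      = allZero D k ∩ allZero Y (k - 1) ∩ ({ω | X ω = x} ∩ {ω | A ω = a}) := by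
    ext ω
    simp only [Set.mem_inter_iff]
    tauto
  have hAa : MeasurableSet {ω | A ω = a} := hAm (measurableSet_singleton a)
  rw [hset, measure_allZero_inter_eq_mul_prod μ hYm hDm hYb hDb (hXx.inter hAa),
    ← cond_mul_eq_inter hXx]
  simp only [← hazD_eq_condHazD, ← hazY_eq_condHazY]
  ring

section SeparableEffects

def ExchangeableAt (μ : Measure Ω) (X : Ω → 𝓧) (A : Ω → ℕ) (Ysep Dsep : ℕ → ℕ → ℕ → Ω → ℕ)
    (K : ℕ) (x : 𝓧) : Prop :=
  ∀ a, (a = 0 ∨ a = 1) → ∀ f g : ℕ → ℕ,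
    μ[{ω | ∀ j, 1 ≤ j → j ≤ K → (Ysep a a j ω = f j ∧ Dsep a a j ω = g j)}
        | {ω | X ω = x} ∩ {ω | A ω = a}]
      = μ[{ω | ∀ j, 1 ≤ j → j ≤ K → (Ysep a a j ω = f j ∧ Dsep a a j ω = g j)} | {ω | X ω = x}]

def Consistent (Y D : ℕ → Ω → ℕ) (A : Ω → ℕ) (Ysep Dsep : ℕ → ℕ → ℕ → Ω → ℕ) : Prop :=
  ∀ l ω, Y l ω = Ysep (A ω) (A ω) l ω ∧ D l ω = Dsep (A ω) (A ω) l ω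

def DismissibleD (μ : Measure Ω) (X : Ω → 𝓧) (Ysep Dsep : ℕ → ℕ → ℕ → Ω → ℕ) (K : ℕ) (x : 𝓧) :
    Prop :=
  ∀ d l, (d = 0 ∨ d = 1) → 1 ≤ l → l ≤ K →
    condHazD μ (Ysep 1 d) (Dsep 1 d) {ω | X ω = x} l
      = condHazD μ (Ysep 0 d) (Dsep 0 d) {ω | X ω = x} l

def DismissibleY (μ : Measure Ω) (X : Ω → 𝓧) (Ysep Dsep : ℕ → ℕ → ℕ → Ω → ℕ) (K : ℕ) (x : 𝓧) :
    Prop :=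
  ∀ b l, (b = 0 ∨ b = 1) → 1 ≤ l → l ≤ K →
    condHazY μ (Ysep b 1) (Dsep b 1) {ω | X ω = x} l
      = condHazY μ (Ysep b 0) (Dsep b 0) {ω | X ω = x} l

variable (μ : Measure Ω) [IsFiniteMeasure μ] {Y D : ℕ → Ω → ℕ} {X : Ω → 𝓧} {A : Ω → ℕ}
  {Ysep Dsep : ℕ → ℕ → ℕ → Ω → ℕ} {K l : ℕ} {x : 𝓧}

lemma condHazD_sep_eq_hazD (hXm : Measurable X) (hAm : Measurable A)
    (hYm : ∀ l, Measurable (Y l)) (hDm : ∀ l, Measurable (D l))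
    (hYsm : ∀ b d l, Measurable (Ysep b d l)) (hDsm : ∀ b d l, Measurable (Dsep b d l))
    (hexch : ExchangeableAt μ X A Ysep Dsep K x) (hcons : Consistent Y D A Ysep Dsep)
    (hdis : DismissibleD μ X Ysep Dsep K x) (hl : l ∈ Icc 1 K)
    {b d : ℕ} (hb : b = 0 ∨ b = 1) (hd : d = 0 ∨ d = 1) :
    condHazD μ (Ysep b d) (Dsep b d) {ω | X ω = x} l = hazD μ Y D X A l x d := by
  rw [mem_Icc] at hl
  rw [binary_apply_eq_apply_diag (F := fun b d => condHazD μ (Ysep b d) (Dsep b d) _ l)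
    (fun d hd => hdis d l hd hl.1 hl.2) hb hd, hazD_eq_condHazD]
  exact condHazD_eq_of_exchangeable μ hYm hDm (hYsm d d) (hDsm d d)
    (hXm (measurableSet_singleton x)) (hAm (measurableSet_singleton d))
    (measure_traj_preimage_eq (hYsm d d) (hDsm d d) (hexch d hd))
    (fun ω hω j => hω ▸ hcons j ω) (mem_Icc.mpr hl)

lemma condHazY_sep_eq_hazY (hXm : Measurable X) (hAm : Measurable A)
    (hYm : ∀ l, Measurable (Y l)) (hDm : ∀ l, Measurable (D l))
    (hYsm : ∀ b d l, Measurable (Ysep b d l)) (hDsm : ∀ b d l, Measurable (Dsep b d l))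
    (hexch : ExchangeableAt μ X A Ysep Dsep K x) (hcons : Consistent Y D A Ysep Dsep)
    (hdis : DismissibleY μ X Ysep Dsep K x) (hl : l ∈ Icc 1 K)
    {b d : ℕ} (hb : b = 0 ∨ b = 1) (hd : d = 0 ∨ d = 1) :
    condHazY μ (Ysep b d) (Dsep b d) {ω | X ω = x} l = hazY μ Y D X A l x b := by
  rw [mem_Icc] at hl
  rw [binary_apply_eq_apply_diag (F := fun d b => condHazY μ (Ysep b d) (Dsep b d) _ l)
    (fun b hb => hdis b l hb hl.1 hl.2) hd hb, hazY_eq_condHazY]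
  exact condHazY_eq_of_exchangeable μ hYm hDm (hYsm b b) (hDsm b b)
    (hXm (measurableSet_singleton x)) (hAm (measurableSet_singleton b))
    (measure_traj_preimage_eq (hYsm b b) (hDsm b b) (hexch b hb))
    (fun ω hω j => hω ▸ hcons j ω) (mem_Icc.mpr hl)

lemma measure_interventional_atRisk_eq_mul_prod (hXm : Measurable X) (hAm : Measurable A)
    (hYm : ∀ l, Measurable (Y l)) (hDm : ∀ l, Measurable (D l))
    (hYsm : ∀ b d l, Measurable (Ysep b d l)) (hDsm : ∀ b d l, Measurable (Dsep b d l))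
    (hexch : ExchangeableAt μ X A Ysep Dsep K x) (hcons : Consistent Y D A Ysep Dsep)
    (hYsb : ∀ b d l ω, Ysep b d l ω = 0 ∨ Ysep b d l ω = 1)
    (hDsb : ∀ b d l ω, Dsep b d l ω = 0 ∨ Dsep b d l ω = 1)
    (hdisY : DismissibleY μ X Ysep Dsep K x) (hdisD : DismissibleD μ X Ysep Dsep K x)
    {k : ℕ} (hkK : k ≤ K) {b d : ℕ} (hb : b = 0 ∨ b = 1) (hd : d = 0 ∨ d = 1) :
    μ (allZero (Dsep b d) k ∩ allZero (Ysep b d) (k - 1) ∩ {ω | X ω = x})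
      = (μ {ω | X ω = x} * ∏ l ∈ Icc 1 (k - 1), (1 - hazY μ Y D X A l x b))
        * ∏ l ∈ Icc 1 k, (1 - hazD μ Y D X A l x d) := by
  have hXx : MeasurableSet {ω | X ω = x} := hXm (measurableSet_singleton x)
  rw [measure_allZero_inter_eq_mul_prod μ (hYsm b d) (hDsm b d) (hYsb b d) (hDsb b d) hXx,
    prod_congr rfl fun l hl => congrArg (1 - ·) <| condHazD_sep_eq_hazD μ hXm hAm hYm hDm
      hYsm hDsm hexch hcons hdisD (Icc_subset_Icc_right hkK hl) hb hd,
    prod_congr rfl fun l hl => congrArg (1 - ·) <| condHazY_sep_eq_hazY μ hXm hAm hYm hDm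
      hYsm hDsm hexch hcons hdisY (Icc_subset_Icc_right (k.sub_le 1 |>.trans hkK) hl) hb hd]
  ring

end SeparableEffects

theorem separable_effect_importance_weights_general
    (μ : Measure Ω) [IsProbabilityMeasure μ]
    (Y D : ℕ → Ω → ℕ) (X : Ω → 𝓧) (A : Ω → ℕ)
    -- measurability of the random variables
    (hXm : Measurable X) (hAm : Measurable A)
    (hYm : ∀ k, Measurable (Y k)) (hDm : ∀ k, Measurable (D k))
    -- binary indicators, absorbing events, mutual exclusivity
    (hYbin : ∀ k ω, Y k ω = 0 ∨ Y k ω = 1) (hDbin : ∀ k ω, D k ω = 0 ∨ D k ω = 1)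
    (K : ℕ)
    -- counterfactual indicators Y^{a_Y,a_D}_k, D^{a_Y,a_D}_k under the intervention
    -- do(A_Y = a_Y, A_D = a_D) on the two treatment components
    (Ysep Dsep : ℕ → ℕ → ℕ → Ω → ℕ)
    (hYsm : ∀ aY aD k, Measurable (Ysep aY aD k))
    (hDsm : ∀ aY aD k, Measurable (Dsep aY aD k))
    (hYsbin : ∀ aY aD k ω, Ysep aY aD k ω = 0 ∨ Ysep aY aD k ω = 1)
    (hDsbin : ∀ aY aD k ω, Dsep aY aD k ω = 0 ∨ Dsep aY aD k ω = 1)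
    -- (i) exchangeability: the family (Y^{a_Y,a_D}_k, D^{a_Y,a_D}_k)_{k ≤ K} is
    -- conditionally independent of A given X (stated through the atoms of the
    -- discrete counterfactual family)
    (hexchS : ∀ aY aD a' x, (aY = 0 ∨ aY = 1) → (aD = 0 ∨ aD = 1) → (a' = 0 ∨ a' = 1) →
      μ {ω | X ω = x} ≠ 0 → μ ({ω | X ω = x} ∩ {ω | A ω = a'}) ≠ 0 →
      ∀ f g : ℕ → ℕ,
        μ[|{ω | X ω = x} ∩ {ω | A ω = a'}]
            {ω | ∀ j, 1 ≤ j → j ≤ K → (Ysep aY aD j ω = f j ∧ Dsep aY aD j ω = g j)}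
          = μ[|{ω | X ω = x}]
              {ω | ∀ j, 1 ≤ j → j ≤ K → (Ysep aY aD j ω = f j ∧ Dsep aY aD j ω = g j)})
    -- (ii) positivity
    (hposA : ∀ x, μ {ω | X ω = x} ≠ 0 → ∀ a', (a' = 0 ∨ a' = 1) →
      μ ({ω | X ω = x} ∩ {ω | A ω = a'}) ≠ 0)
    -- (iii) consistency: Y_k = Y^{A,A}_k and D_k = D^{A,A}_k
    (hconsS : ∀ k ω, Y k ω = Ysep (A ω) (A ω) k ω ∧ D k ω = Dsep (A ω) (A ω) k ω)
    -- (iv) dismissible components conditions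
    (hdisY : ∀ aY k x, (aY = 0 ∨ aY = 1) → 1 ≤ k → k ≤ K →
      μ[|allZero (Dsep aY 1) k ∩ allZero (Ysep aY 1) (k - 1) ∩ {ω | X ω = x}]
          {ω | Ysep aY 1 k ω = 1}
        = μ[|allZero (Dsep aY 0) k ∩ allZero (Ysep aY 0) (k - 1) ∩ {ω | X ω = x}]
            {ω | Ysep aY 0 k ω = 1})
    (hdisD : ∀ aD k x, (aD = 0 ∨ aD = 1) → 1 ≤ k → k ≤ K →
      μ[|allZero (Dsep 1 aD) (k - 1) ∩ allZero (Ysep 1 aD) (k - 1) ∩ {ω | X ω = x}]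
          {ω | Dsep 1 aD k ω = 1}
        = μ[|allZero (Dsep 0 aD) (k - 1) ∩ allZero (Ysep 0 aD) (k - 1) ∩ {ω | X ω = x}]
            {ω | Dsep 0 aD k ω = 1})
    (k : ℕ) (hkK : k ≤ K)
    (aY aD : ℕ) (haY : aY = 0 ∨ aY = 1) (haD : aD = 0 ∨ aD = 1)
    -- positivity of the observational and interventional at-risk events
    (hposObs : μ (allZero Y (k - 1) ∩ allZero D k ∩ {ω | A ω = aY}) ≠ 0)
    (hposInt : μ (allZero (Dsep aY aD) k ∩ allZero (Ysep aY aD) (k - 1)) ≠ 0) :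
    ∃ c : ℝ≥0∞, c ≠ 0 ∧ c ≠ ⊤ ∧
      ∀ x : 𝓧,
        μ[|allZero Y (k - 1) ∩ allZero D k ∩ {ω | A ω = aY}] {ω | X ω = x} ≠ 0 →
        μ[|allZero (Dsep aY aD) k ∩ allZero (Ysep aY aD) (k - 1)] {ω | X ω = x}
            / μ[|allZero Y (k - 1) ∩ allZero D k ∩ {ω | A ω = aY}] {ω | X ω = x}
          = c / (μ[|{ω | X ω = x}] {ω | A ω = aY}
              * ∏ l ∈ Icc 1 k,
                  (1 - hazD μ Y D X A l x aY) / (1 - hazD μ Y D X A l x aD)) := by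
  have hAa : MeasurableSet {ω | A ω = aY} := hAm (measurableSet_singleton aY)
  have hEobs := ((measurableSet_allZero hYm (k - 1)).inter (measurableSet_allZero hDm k)).inter hAa
  have hEint := (measurableSet_allZero (hDsm aY aD) k).inter
    (measurableSet_allZero (hYsm aY aD) (k - 1))
  refine ⟨_ / _, ENNReal.div_ne_zero.mpr ⟨hposObs, measure_ne_top μ _⟩,
    ENNReal.div_ne_top (measure_ne_top μ _) hposInt, fun x hx => ?_⟩
  rw [cond_apply hEobs] at hx ⊢
  have hmx : μ {ω | X ω = x} ≠ 0 :=
    fun h => hx (by rw [measure_inter_null_of_null_right _ h, mul_zero])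
  have hexch : ExchangeableAt μ X A Ysep Dsep K x :=
    fun a ha => hexchS a a a x ha ha ha hmx (hposA x hmx a ha)
  rw [measure_observed_atRisk_eq_mul_prod μ hXm hAm hYm hDm hYbin hDbin] at hx ⊢
  obtain ⟨hu0, hs0⟩ := mul_ne_zero_iff.mp (right_ne_zero_of_mul hx)
  rw [cond_apply hEint, measure_interventional_atRisk_eq_mul_prod μ hXm hAm hYm hDm hYsm hDsm
    hexch hconsS hYsbin hDsbin (fun b l => hdisY b l x) (fun d l => hdisD d l x) hkK haY haD,
    ENNReal.prod_div_distrib_of_ne_top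
    fun _ _ => ENNReal.sub_ne_top ENNReal.one_ne_top, ← mul_div_assoc]
  exact ENNReal.inv_mul_mul_div_inv_mul_mul hu0
    (ENNReal.mul_ne_top (measure_ne_top μ _) (prod_one_sub_ne_top _ _)) hs0
    (ENNReal.mul_ne_top (measure_ne_top _ _) (prod_one_sub_ne_top _ _))

theorem separable_effect_importance_weights
    [Countable 𝓧]
    (μ : Measure Ω) [IsProbabilityMeasure μ]
    (Y D : ℕ → Ω → ℕ) (X : Ω → 𝓧) (A : Ω → ℕ)
    -- measurability of the random variables
    (hXm : Measurable X) (hAm : Measurable A)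
    (hYm : ∀ k, Measurable (Y k)) (hDm : ∀ k, Measurable (D k))
    -- binary indicators, absorbing events, mutual exclusivity
    (hYbin : ∀ k ω, Y k ω = 0 ∨ Y k ω = 1) (hDbin : ∀ k ω, D k ω = 0 ∨ D k ω = 1)
    (hYmono : ∀ k ω, Y k ω ≤ Y (k + 1) ω) (hDmono : ∀ k ω, D k ω ≤ D (k + 1) ω)
    (hexcl : ∀ k ω, Y k ω * D k ω = 0)
    (hAbin : ∀ ω, A ω = 0 ∨ A ω = 1)
    (K : ℕ) (hK : 1 ≤ K)
    -- counterfactual indicators Y^{a_Y,a_D}_k, D^{a_Y,a_D}_k under the intervention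
    -- do(A_Y = a_Y, A_D = a_D) on the two treatment components
    (Ysep Dsep : ℕ → ℕ → ℕ → Ω → ℕ)
    (hYsm : ∀ aY aD k, Measurable (Ysep aY aD k))
    (hDsm : ∀ aY aD k, Measurable (Dsep aY aD k))
    (hYsbin : ∀ aY aD k ω, Ysep aY aD k ω = 0 ∨ Ysep aY aD k ω = 1)
    (hDsbin : ∀ aY aD k ω, Dsep aY aD k ω = 0 ∨ Dsep aY aD k ω = 1)
    (hYsmono : ∀ aY aD k ω, Ysep aY aD k ω ≤ Ysep aY aD (k + 1) ω)
    (hDsmono : ∀ aY aD k ω, Dsep aY aD k ω ≤ Dsep aY aD (k + 1) ω)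
    (hsexcl : ∀ aY aD k ω, Ysep aY aD k ω * Dsep aY aD k ω = 0)
    -- (i) exchangeability: the family (Y^{a_Y,a_D}_k, D^{a_Y,a_D}_k)_{k ≤ K} is
    -- conditionally independent of A given X (stated through the atoms of the
    -- discrete counterfactual family)
    (hexchS : ∀ aY aD a' x, (aY = 0 ∨ aY = 1) → (aD = 0 ∨ aD = 1) → (a' = 0 ∨ a' = 1) →
      μ {ω | X ω = x} ≠ 0 → μ ({ω | X ω = x} ∩ {ω | A ω = a'}) ≠ 0 →
      ∀ f g : ℕ → ℕ,
        μ[|{ω | X ω = x} ∩ {ω | A ω = a'}]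
            {ω | ∀ j, 1 ≤ j → j ≤ K → (Ysep aY aD j ω = f j ∧ Dsep aY aD j ω = g j)}
          = μ[|{ω | X ω = x}]
              {ω | ∀ j, 1 ≤ j → j ≤ K → (Ysep aY aD j ω = f j ∧ Dsep aY aD j ω = g j)})
    -- (ii) positivity
    (hposA : ∀ x, μ {ω | X ω = x} ≠ 0 → ∀ a', (a' = 0 ∨ a' = 1) →
      μ ({ω | X ω = x} ∩ {ω | A ω = a'}) ≠ 0)
    -- (iii) consistency: Y_k = Y^{A,A}_k and D_k = D^{A,A}_k
    (hconsS : ∀ k ω, Y k ω = Ysep (A ω) (A ω) k ω ∧ D k ω = Dsep (A ω) (A ω) k ω)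
    -- (iv) dismissible components conditions
    (hdisY : ∀ aY k x, (aY = 0 ∨ aY = 1) → 1 ≤ k → k ≤ K →
      μ[|allZero (Dsep aY 1) k ∩ allZero (Ysep aY 1) (k - 1) ∩ {ω | X ω = x}]
          {ω | Ysep aY 1 k ω = 1}
        = μ[|allZero (Dsep aY 0) k ∩ allZero (Ysep aY 0) (k - 1) ∩ {ω | X ω = x}]
            {ω | Ysep aY 0 k ω = 1})
    (hdisD : ∀ aD k x, (aD = 0 ∨ aD = 1) → 1 ≤ k → k ≤ K →
      μ[|allZero (Dsep 1 aD) (k - 1) ∩ allZero (Ysep 1 aD) (k - 1) ∩ {ω | X ω = x}]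
          {ω | Dsep 1 aD k ω = 1}
        = μ[|allZero (Dsep 0 aD) (k - 1) ∩ allZero (Ysep 0 aD) (k - 1) ∩ {ω | X ω = x}]
            {ω | Dsep 0 aD k ω = 1})
    -- positivity of all counterfactual conditioning events appearing above
    (hposSep : ∀ aY aD k x, (aY = 0 ∨ aY = 1) → (aD = 0 ∨ aD = 1) → 1 ≤ k → k ≤ K →
      μ {ω | X ω = x} ≠ 0 →
      μ (allZero (Dsep aY aD) k ∩ allZero (Ysep aY aD) (k - 1) ∩ {ω | X ω = x}) ≠ 0 ∧
        μ (allZero (Dsep aY aD) (k - 1) ∩ allZero (Ysep aY aD) (k - 1)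
            ∩ {ω | X ω = x}) ≠ 0)
    (k : ℕ) (hk1 : 1 ≤ k) (hkK : k ≤ K)
    (aY aD : ℕ) (haY : aY = 0 ∨ aY = 1) (haD : aD = 0 ∨ aD = 1)
    -- positivity of the observational conditioning events of the hazards
    (hposY : ∀ l a x, 1 ≤ l → l ≤ K → (a = 0 ∨ a = 1) → μ {ω | X ω = x} ≠ 0 →
      μ (atRiskY Y D X A l x a) ≠ 0)
    (hposD : ∀ l a x, 1 ≤ l → l ≤ K → (a = 0 ∨ a = 1) → μ {ω | X ω = x} ≠ 0 →
      μ (atRiskD Y D X A l x a) ≠ 0)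
    -- positivity of the observational and interventional at-risk events
    (hposObs : μ (allZero Y (k - 1) ∩ allZero D k ∩ {ω | A ω = aY}) ≠ 0)
    (hposInt : μ (allZero (Dsep aY aD) k ∩ allZero (Ysep aY aD) (k - 1)) ≠ 0)
    -- the competing-event hazard is strictly below one up to time k
    (hDlt1 : ∀ l a x, 1 ≤ l → l ≤ k → (a = 0 ∨ a = 1) → μ {ω | X ω = x} ≠ 0 →
      hazD μ Y D X A l x a < 1) :
    ∃ c : ℝ≥0∞, c ≠ 0 ∧ c ≠ ⊤ ∧
      ∀ x : 𝓧,
        μ[|allZero Y (k - 1) ∩ allZero D k ∩ {ω | A ω = aY}] {ω | X ω = x} ≠ 0 →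
        μ[|allZero (Dsep aY aD) k ∩ allZero (Ysep aY aD) (k - 1)] {ω | X ω = x}
            / μ[|allZero Y (k - 1) ∩ allZero D k ∩ {ω | A ω = aY}] {ω | X ω = x}
          = c / (μ[|{ω | X ω = x}] {ω | A ω = aY}
              * ∏ l ∈ Icc 1 k,
                  (1 - hazD μ Y D X A l x aY) / (1 - hazD μ Y D X A l x aD)) :=
  separable_effect_importance_weights_general μ Y D X A hXm hAm hYm hDm hYbin hDbin K Ysep Dsep hYsm
    hDsm hYsbin hDsbin hexchS hposA hconsS hdisY hdisD k hkK aY aD haY haD hposObs hposInt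

end Stmt12
end
end
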